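/- arXiv:2110.05859 — 8 statements merged into one kernel-verified Lean document; each statement's English description precedes it below -/
import Mathlib

section
/- For every sequence of positive numbers {a_n : n ≥ 1} with a_n → 0 and a_n·n → ∞, the sequence of random variables {a_n·n·min{X_1,...,X_n} : n ≥ 1} satisfies the large deviation principle with speed 1/a_n and rate function I_MD defined by I_MD(x) = F′(0+)·x for x ∈ [0,∞) and I_MD(x) = ∞ for x < 0. -/
open Filter MeasureTheory ProbabilityTheory Topology
open scoped ENNReal

lemma emul_mono {c : ℝ} (hc : 0 < c) {x y : EReal} (h : x ≤ y) :
    (c : EReal) * x ≤ (c : EReal) * y := by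
  induction x using EReal.rec with
  | bot => simp [EReal.coe_mul_bot_of_pos hc]
  | coe x' =>
    induction y using EReal.rec with
    | bot => simp at h
    | coe y' =>
      rw [← EReal.coe_mul, ← EReal.coe_mul, EReal.coe_le_coe_iff]
      exact mul_le_mul_of_nonneg_left (EReal.coe_le_coe_iff.mp h) hc.le
    | top => simp [EReal.coe_mul_top_of_pos hc]
  | top => rw [top_le_iff.mp h]

lemma log_one_sub_div_tendsto' :
    Tendsto (fun y : ℝ => Real.log (1 - y) / y) (nhdsWithin 0 {0}ᶜ) (nhds (-1)) := by
  have h1 : HasDerivAt (fun y : ℝ => Real.log (1 - y)) (-1) 0 := by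
    have hinner : HasDerivAt (fun y : ℝ => 1 - y) (-1) 0 := (hasDerivAt_id 0).const_sub 1
    have houter := Real.hasDerivAt_log (x := 1 - 0) (by norm_num)
    have := houter.comp 0 hinner
    rw [show ((1:ℝ) - 0)⁻¹ * -1 = -1 by norm_num] at this
    exact this
  have := hasDerivAt_iff_tendsto_slope.mp h1
  refine this.congr' ?_
  filter_upwards [self_mem_nhdsWithin] with y hy
  simp [slope_def_field, div_eq_inv_mul]

/-- Moderate deviations for minima: for positive scalings `a_n → 0` with `a_n * n → ∞`,
the sequence `a_n * n * min{X_1,...,X_n}` satisfies the LDP with speed `1/a_n` and rate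
function `I_MD(x) = F'(0+) * x` for `x ≥ 0`, `I_MD(x) = ∞` otherwise. -/
theorem stmt_2
    {Ω : Type*} [MeasureSpace Ω] [IsProbabilityMeasure (ℙ : Measure Ω)]
    (X : ℕ → Ω → ℝ) (hX : ∀ n, Measurable (X n))
    (h_indep : iIndepFun X ℙ)
    (F : ℝ → ℝ) (hF_cdf : ∀ n x, (ℙ {ω | X n ω ≤ x}).toReal = F x)
    (hF_mono : Monotone F) (hF0 : F 0 = 0)
    (hF_strict : StrictMonoOn F {x : ℝ | 0 < x ∧ ∃ y, x < y ∧ F y < 1})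
    (d : ℝ) (hd : 0 < d)
    (hF_deriv : Tendsto (fun x => F x / x) (nhdsWithin 0 (Set.Ioi 0)) (nhds d))
    (a : ℕ → ℝ) (ha_pos : ∀ n, 0 < a n) (ha_zero : Tendsto a atTop (nhds 0))
    (ha_top : Tendsto (fun n : ℕ => a n * n) atTop atTop) :
    (∀ C : Set ℝ, IsClosed C →
      limsup (fun n : ℕ => ((a n : ℝ) : EReal) *
          ENNReal.log (ℙ {ω | a n * n * sInf ((fun i => X i ω) '' Set.Icc 1 n) ∈ C})) atTop
        ≤ -(⨅ x ∈ C, if 0 ≤ x then ((d * x : ℝ) : EReal) else (⊤ : EReal))) ∧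
    (∀ O : Set ℝ, IsOpen O →
      -(⨅ x ∈ O, if 0 ≤ x then ((d * x : ℝ) : EReal) else (⊤ : EReal))
        ≤ liminf (fun n : ℕ => ((a n : ℝ) : EReal) *
          ENNReal.log (ℙ {ω | a n * n * sInf ((fun i => X i ω) '' Set.Icc 1 n) ∈ O})) atTop) := by
  -- basic facts about F
  have hF_nonneg : ∀ x, 0 ≤ F x := fun x => (hF_cdf 0 x) ▸ ENNReal.toReal_nonneg
  have hP_le : ∀ i x, ℙ {ω | X i ω ≤ x} = ENNReal.ofReal (F x) := fun i x => by
    rw [← hF_cdf i x, ENNReal.ofReal_toReal (measure_ne_top _ _)]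
  have hP_gt : ∀ (i : ℕ) (x : ℝ), ℙ {ω | x < X i ω} = ENNReal.ofReal (1 - F x) := by
    intro i x
    have hmeas : MeasurableSet {ω | X i ω ≤ x} := measurableSet_le (hX i) measurable_const
    have hc : {ω | x < X i ω} = {ω | X i ω ≤ x}ᶜ := by ext ω; simp [not_le]
    rw [hc, measure_compl hmeas (measure_ne_top _ _), measure_univ, hP_le,
      ← ENNReal.ofReal_one, ← ENNReal.ofReal_sub _ (hF_nonneg x)]
  have habn : ∀ n : ℕ, 1 ≤ n → 0 < a n * n := fun n hn =>
    mul_pos (ha_pos n) (by exact_mod_cast Nat.cast_pos.mpr hn)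
  -- the tail event as an intersection
  have hEvent : ∀ n : ℕ, 1 ≤ n → ∀ x : ℝ,
      {ω | x < a n * n * sInf ((fun i => X i ω) '' Set.Icc 1 n)}
        = ⋂ i ∈ Finset.Icc 1 n, X i ⁻¹' Set.Ioi (x / (a n * n)) := by
    intro n hn x
    ext ω
    have hfin : ((fun i => X i ω) '' Set.Icc 1 n).Finite := (Set.finite_Icc 1 n).image _
    have hne : ((fun i => X i ω) '' Set.Icc 1 n).Nonempty :=
      Set.Nonempty.image _ ⟨1, by simp [hn]⟩
    simp only [Set.mem_setOf_eq, Set.mem_iInter, Set.mem_preimage, Set.mem_Ioi, Finset.mem_Icc]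
    rw [← div_lt_iff₀' (habn n hn)]
    constructor
    · intro h i hi
      exact lt_of_lt_of_le h (csInf_le hfin.bddBelow ⟨i, Set.mem_Icc.mpr hi, rfl⟩)
    · intro h
      obtain ⟨i, hi, hEq⟩ := hne.csInf_mem hfin
      rw [← hEq]
      exact h i (Set.mem_Icc.mp hi)
  have hMeasEvent : ∀ n : ℕ, 1 ≤ n → ∀ x : ℝ,
      MeasurableSet {ω | x < a n * n * sInf ((fun i => X i ω) '' Set.Icc 1 n)} := by
    intro n hn x
    rw [hEvent n hn x]
    exact MeasurableSet.biInter (Set.to_countable _) fun i _ => (hX i) measurableSet_Ioi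
  -- tail probability formula
  have hProb : ∀ n : ℕ, 1 ≤ n → ∀ x : ℝ,
      ℙ {ω | x < a n * n * sInf ((fun i => X i ω) '' Set.Icc 1 n)}
        = ENNReal.ofReal (1 - F (x / (a n * n))) ^ n := by
    intro n hn x
    rw [hEvent n hn x,
      h_indep.meas_biInter (fun i _ => ⟨Set.Ioi (x / (a n * n)), measurableSet_Ioi, rfl⟩)]
    have : ∀ i ∈ Finset.Icc 1 n, ℙ (X i ⁻¹' Set.Ioi (x / (a n * n)))
        = ENNReal.ofReal (1 - F (x / (a n * n))) := fun i _ => hP_gt i _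
    rw [Finset.prod_congr rfl this, Finset.prod_const, Nat.card_Icc]
    simp
  have hNull : ∀ n : ℕ, 1 ≤ n →
      ℙ {ω | 0 < a n * n * sInf ((fun i => X i ω) '' Set.Icc 1 n)}ᶜ = 0 := by
    intro n hn
    rw [measure_compl (hMeasEvent n hn 0) (measure_ne_top _ _), measure_univ, hProb n hn 0]
    simp [hF0]
  -- analytic facts
  have hu : ∀ x : ℝ, 0 < x →
      Tendsto (fun n : ℕ => x / (a n * n)) atTop (nhdsWithin 0 (Set.Ioi 0)) := by
    intro x hx
    rw [tendsto_nhdsWithin_iff]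
    constructor
    · exact Tendsto.div_atTop tendsto_const_nhds ha_top
    · filter_upwards [eventually_ge_atTop 1] with n hn
      exact div_pos hx (habn n hn)
  have hFten : ∀ x : ℝ, 0 ≤ x →
      Tendsto (fun n : ℕ => F (x / (a n * n))) atTop (nhds 0) := by
    intro x hx
    rcases hx.eq_or_lt with h | h
    · simpa [← h, hF0] using tendsto_const_nhds
    · have hux := hu x h
      have hq : Tendsto (fun n : ℕ => F (x / (a n * n)) / (x / (a n * n))) atTop (nhds d) :=
        hF_deriv.comp hux
      have hu0 : Tendsto (fun n : ℕ => x / (a n * n)) atTop (nhds 0) :=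
        hux.mono_right nhdsWithin_le_nhds
      have := hq.mul hu0
      rw [mul_zero] at this
      refine this.congr' ?_
      filter_upwards [eventually_ge_atTop 1] with n hn
      exact div_mul_cancel₀ _ (div_pos h (habn n hn)).ne'
  have hFlt : ∀ x : ℝ, 0 ≤ x → ∀ᶠ n : ℕ in atTop, F (x / (a n * n)) < 1 :=
    fun x hx => (hFten x hx).eventually_lt_const one_pos
  -- main analytic limit
  have hKey : ∀ x : ℝ, 0 ≤ x →
      Tendsto (fun n : ℕ => a n * (n * Real.log (1 - F (x / (a n * n))))) atTop
        (nhds (-(d * x))) := by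
    intro x hx
    rcases hx.eq_or_lt with h | h
    · simpa [← h, hF0] using tendsto_const_nhds
    · have hux := hu x h
      have hq : Tendsto (fun n : ℕ => F (x / (a n * n)) / (x / (a n * n))) atTop (nhds d) :=
        hF_deriv.comp hux
      have hFpos : ∀ᶠ n : ℕ in atTop, 0 < F (x / (a n * n)) := by
        have h1 : ∀ᶠ n : ℕ in atTop, 0 < F (x / (a n * n)) / (x / (a n * n)) :=
          hq.eventually (eventually_gt_nhds hd)
        filter_upwards [h1, eventually_ge_atTop 1] with n h1 hn
        have hupos := div_pos h (habn n hn)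
        have := mul_pos h1 hupos
        rwa [div_mul_cancel₀ _ hupos.ne'] at this
      have hFin : Tendsto (fun n : ℕ => F (x / (a n * n))) atTop (nhdsWithin 0 {0}ᶜ) := by
        rw [tendsto_nhdsWithin_iff]
        exact ⟨hFten x hx, hFpos.mono fun n h => by simpa using h.ne'⟩
      have hlogdiv : Tendsto
          (fun n : ℕ => Real.log (1 - F (x / (a n * n))) / F (x / (a n * n))) atTop
          (nhds (-1)) := log_one_sub_div_tendsto'.comp hFin
      have hmain : Tendsto (fun n : ℕ => x * ((F (x / (a n * n)) / (x / (a n * n))) *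
          (Real.log (1 - F (x / (a n * n))) / F (x / (a n * n))))) atTop
          (nhds (x * (d * -1))) := tendsto_const_nhds.mul (hq.mul hlogdiv)
      have heq : -(d * x) = x * (d * -1) := by ring
      rw [← heq] at hmain
      refine Tendsto.congr' ?_ hmain
      filter_upwards [hFpos, eventually_ge_atTop 1] with n hFp hn
      have h1 : x / (a n * n) ≠ 0 := (div_pos h (habn n hn)).ne'
      field_simp
  -- EReal version of the key limit
  have hKeyE : ∀ x : ℝ, 0 ≤ x →
      Tendsto (fun n : ℕ => ((a n : ℝ) : EReal) *
        ENNReal.log (ℙ {ω | x < a n * n * sInf ((fun i => X i ω) '' Set.Icc 1 n)})) atTop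
        (nhds ((-(d * x) : ℝ) : EReal)) := by
    intro x hx
    have hE := EReal.tendsto_coe.mpr (hKey x hx)
    refine Tendsto.congr' ?_ hE
    filter_upwards [eventually_ge_atTop 1, hFlt x hx] with n hn hlt
    rw [hProb n hn x, ENNReal.log_pow, ENNReal.log_ofReal_of_pos (by linarith)]
    norm_cast
  refine ⟨?_, ?_⟩
  -- upper bound
  · intro C hC
    by_cases hCne : (C ∩ Set.Ici 0).Nonempty
    · -- nonempty case
      have hbdd : BddBelow (C ∩ Set.Ici 0) := ⟨0, fun y hy => hy.2⟩
      set x₀ := sInf (C ∩ Set.Ici 0) with hx₀def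
      have hmem : x₀ ∈ C ∩ Set.Ici 0 := (hC.inter isClosed_Ici).csInf_mem hCne hbdd
      have hx₀ : 0 ≤ x₀ := hmem.2
      have hRHS : (↑(-(d * x₀)) : EReal)
          ≤ -(⨅ x ∈ C, if 0 ≤ x then ((d * x : ℝ) : EReal) else (⊤ : EReal)) := by
        rw [EReal.coe_neg]
        apply EReal.neg_le_neg_iff.mpr
        refine (iInf₂_le x₀ hmem.1).trans ?_
        rw [if_pos hx₀]
      refine le_trans ?_ hRHS
      -- eventual comparison with tail events
      have hev : ∀ y : ℝ, 0 ≤ y → y < x₀ →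
          limsup (fun n : ℕ => ((a n : ℝ) : EReal) *
            ENNReal.log (ℙ {ω | a n * n * sInf ((fun i => X i ω) '' Set.Icc 1 n) ∈ C})) atTop
          ≤ ((-(d * y) : ℝ) : EReal) := by
        intro y hy hlt
        have hle : ∀ᶠ n : ℕ in atTop,
            ((a n : ℝ) : EReal) *
              ENNReal.log (ℙ {ω | a n * n * sInf ((fun i => X i ω) '' Set.Icc 1 n) ∈ C})
            ≤ ((a n : ℝ) : EReal) *
              ENNReal.log (ℙ {ω | y < a n * n * sInf ((fun i => X i ω) '' Set.Icc 1 n)}) := by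
          filter_upwards [eventually_ge_atTop 1] with n hn
          apply emul_mono (ha_pos n)
          apply ENNReal.log_monotone
          have hsub : {ω | a n * n * sInf ((fun i => X i ω) '' Set.Icc 1 n) ∈ C}
              ⊆ {ω | y < a n * n * sInf ((fun i => X i ω) '' Set.Icc 1 n)}
                ∪ {ω | 0 < a n * n * sInf ((fun i => X i ω) '' Set.Icc 1 n)}ᶜ := by
            intro ω hω
            by_cases h0 : 0 < a n * n * sInf ((fun i => X i ω) '' Set.Icc 1 n)
            · left
              exact lt_of_lt_of_le hlt (csInf_le hbdd ⟨hω, le_of_lt h0⟩)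
            · right; simpa using h0
          calc ℙ {ω | a n * n * sInf ((fun i => X i ω) '' Set.Icc 1 n) ∈ C}
              ≤ ℙ ({ω | y < a n * n * sInf ((fun i => X i ω) '' Set.Icc 1 n)}
                  ∪ {ω | 0 < a n * n * sInf ((fun i => X i ω) '' Set.Icc 1 n)}ᶜ) :=
                measure_mono hsub
            _ ≤ ℙ {ω | y < a n * n * sInf ((fun i => X i ω) '' Set.Icc 1 n)}
                + ℙ {ω | 0 < a n * n * sInf ((fun i => X i ω) '' Set.Icc 1 n)}ᶜ :=
                measure_union_le _ _
            _ = ℙ {ω | y < a n * n * sInf ((fun i => X i ω) '' Set.Icc 1 n)} := by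
                rw [hNull n hn, add_zero]
        calc limsup (fun n : ℕ => ((a n : ℝ) : EReal) *
              ENNReal.log (ℙ {ω | a n * n * sInf ((fun i => X i ω) '' Set.Icc 1 n) ∈ C})) atTop
            ≤ limsup (fun n : ℕ => ((a n : ℝ) : EReal) *
              ENNReal.log (ℙ {ω | y < a n * n * sInf ((fun i => X i ω) '' Set.Icc 1 n)})) atTop :=
              limsup_le_limsup hle
          _ = ((-(d * y) : ℝ) : EReal) := (hKeyE y hy).limsup_eq
      rcases hx₀.eq_or_lt with h0 | h0
      · -- x₀ = 0 : bound by 0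
        have hle0 : ∀ᶠ n : ℕ in atTop,
            ((a n : ℝ) : EReal) *
              ENNReal.log (ℙ {ω | a n * n * sInf ((fun i => X i ω) '' Set.Icc 1 n) ∈ C})
            ≤ (0 : EReal) := by
          filter_upwards with n
          have hlog : ENNReal.log (ℙ {ω | a n * n * sInf ((fun i => X i ω) '' Set.Icc 1 n) ∈ C})
              ≤ (0 : EReal) := by
            rw [← ENNReal.log_one]
            exact ENNReal.log_monotone prob_le_one
          have := emul_mono (ha_pos n) hlog
          rwa [mul_zero] at this
        have : limsup (fun n : ℕ => ((a n : ℝ) : EReal) *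
            ENNReal.log (ℙ {ω | a n * n * sInf ((fun i => X i ω) '' Set.Icc 1 n) ∈ C})) atTop
            ≤ (0 : EReal) := by
          refine le_trans (limsup_le_limsup hle0) ?_
          rw [limsup_const]
        refine this.trans_eq ?_
        rw [← h0]
        norm_num
      · -- x₀ > 0 : take a limit along y ↑ x₀
        have htend : Tendsto (fun ε : ℝ => ((-(d * (x₀ - ε)) : ℝ) : EReal))
            (nhdsWithin 0 (Set.Ioi 0)) (nhds ((-(d * x₀) : ℝ) : EReal)) := by
          apply EReal.tendsto_coe.mpr
          have hcont : Continuous (fun ε : ℝ => -(d * (x₀ - ε))) :=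
            (continuous_const.mul (continuous_const.sub continuous_id)).neg
          have := (hcont.tendsto 0).mono_left (nhdsWithin_le_nhds (s := Set.Ioi 0))
          simpa using this
        refine ge_of_tendsto htend ?_
        filter_upwards [Ioo_mem_nhdsGT_of_mem ⟨le_refl 0, h0⟩] with ε hε
        exact hev (x₀ - ε) (by linarith [hε.2]) (by linarith [hε.1])
    · -- C ∩ [0,∞) = ∅
      have hC0 : ∀ x ∈ C, ¬ (0 ≤ x) := fun x hx h0 => hCne ⟨x, hx, h0⟩
      have hInf : (⨅ x ∈ C, if 0 ≤ x then ((d * x : ℝ) : EReal) else (⊤ : EReal)) = ⊤ :=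
        le_antisymm le_top (le_iInf₂ fun x hx => by rw [if_neg (hC0 x hx)])
      rw [hInf]
      have hev : ∀ᶠ n : ℕ in atTop,
          ((a n : ℝ) : EReal) *
            ENNReal.log (ℙ {ω | a n * n * sInf ((fun i => X i ω) '' Set.Icc 1 n) ∈ C})
          = (⊥ : EReal) := by
        filter_upwards [eventually_ge_atTop 1] with n hn
        have hzero : ℙ {ω | a n * n * sInf ((fun i => X i ω) '' Set.Icc 1 n) ∈ C} = 0 := by
          refine measure_mono_null ?_ (hNull n hn)
          intro ω hω
          simp only [Set.mem_compl_iff, Set.mem_setOf_eq, not_lt]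
          by_contra hcon
          push_neg at hcon
          exact hC0 _ hω hcon.le
        rw [hzero, ENNReal.log_zero]
        exact EReal.coe_mul_bot_of_pos (ha_pos n)
      rw [limsup_congr hev, limsup_const]
      simp
  -- lower bound
  · intro O hO
    rw [EReal.neg_le]
    refine le_iInf₂ fun x hxO => ?_
    by_cases hx0 : 0 ≤ x
    · rw [if_pos hx0, EReal.neg_le, ← EReal.coe_neg]
      -- core: -(d x) ≤ liminf
      obtain ⟨ε, hε, hball⟩ := Metric.isOpen_iff.mp hO x hxO
      have hball' : Set.Ioo (x - ε) (x + ε) ⊆ O := by rw [← Real.ball_eq_Ioo]; exact hball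
      set y := x + ε / 2 with hydef
      have hy0 : 0 ≤ y := by positivity
      -- eventual bound q^n ≤ p^n / 2
      have hD : Tendsto (fun n : ℕ =>
          a n * (n * Real.log (1 - F (y / (a n * n))))
          - a n * (n * Real.log (1 - F (x / (a n * n))))) atTop
          (nhds (-(d * ε / 2))) := by
        have := (hKey y hy0).sub (hKey x hx0)
        have heq : -(d * y) - -(d * x) = -(d * ε / 2) := by rw [hydef]; ring
        rwa [heq] at this
      have hev1 : ∀ᶠ n : ℕ in atTop,
          a n * (n * Real.log (1 - F (y / (a n * n))))
          - a n * (n * Real.log (1 - F (x / (a n * n)))) < -(d * ε / 4) :=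
        hD.eventually_lt_const (by nlinarith)
      have hainv : Tendsto (fun n : ℕ => (d * ε / 4) * (a n)⁻¹) atTop atTop := by
        apply Tendsto.const_mul_atTop (by positivity)
        apply tendsto_inv_nhdsGT_zero.comp
        rw [tendsto_nhdsWithin_iff]
        exact ⟨ha_zero, Eventually.of_forall fun n => ha_pos n⟩
      have hev2 : ∀ᶠ n : ℕ in atTop, Real.log 2 ≤ (d * ε / 4) * (a n)⁻¹ :=
        hainv.eventually_ge_atTop _
      have hhalf : ∀ᶠ n : ℕ in atTop,
          (1 - F (y / (a n * n))) ^ n ≤ (1 - F (x / (a n * n))) ^ n / 2 := by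
        filter_upwards [hev1, hev2, hFlt x hx0, hFlt y hy0, eventually_ge_atTop 1]
          with n h1 h2 hpx hpy hn
        set p := 1 - F (x / (a n * n)) with hp
        set q := 1 - F (y / (a n * n)) with hq
        have hppos : 0 < p := by simp [hp]; linarith
        have hqpos : 0 < q := by simp [hq]; linarith
        have hstep : (n : ℝ) * Real.log q ≤ (n : ℝ) * Real.log p - Real.log 2 := by
          have ha := ha_pos n
          have h3 : a n * ((n : ℝ) * Real.log q - (n : ℝ) * Real.log p) < -(d * ε / 4) := by
            nlinarith [h1]
          have h2' : Real.log 2 * a n ≤ d * ε / 4 := by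
            have := mul_le_mul_of_nonneg_right h2 ha.le
            rwa [mul_assoc, inv_mul_cancel₀ ha.ne', mul_one] at this
          have h6 : a n * (((n : ℝ) * Real.log q - (n : ℝ) * Real.log p) + Real.log 2) < 0 := by
            nlinarith
          have h7 : ((n : ℝ) * Real.log q - (n : ℝ) * Real.log p) + Real.log 2 < 0 := by
            by_contra hcon
            push_neg at hcon
            nlinarith
          linarith
        calc q ^ n = Real.exp ((n : ℝ) * Real.log q) := by
              rw [← Real.log_pow, Real.exp_log (pow_pos hqpos n)]
          _ ≤ Real.exp ((n : ℝ) * Real.log p - Real.log 2) := Real.exp_le_exp.mpr hstep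
          _ = p ^ n / 2 := by
              rw [Real.exp_sub, ← Real.log_pow, Real.exp_log (pow_pos hppos n),
                Real.exp_log two_pos]
      -- eventual lower bound for the O-probability
      have hevmain : ∀ᶠ n : ℕ in atTop,
          ((a n * (n * Real.log (1 - F (x / (a n * n)))) - a n * Real.log 2 : ℝ) : EReal)
          ≤ ((a n : ℝ) : EReal) *
            ENNReal.log (ℙ {ω | a n * n * sInf ((fun i => X i ω) '' Set.Icc 1 n) ∈ O}) := by
        filter_upwards [hhalf, hFlt x hx0, hFlt y hy0, eventually_ge_atTop 1]
          with n hhalf hpx hpy hn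
        set p := 1 - F (x / (a n * n)) with hp
        set q := 1 - F (y / (a n * n)) with hq
        have hppos : 0 < p := by simp [hp]; linarith
        have hqpos : 0 < q := by simp [hq]; linarith
        have hqn : (0:ℝ) ≤ q ^ n := (pow_pos hqpos n).le
        -- A \ B ⊆ O event
        have hsub : {ω | x < a n * n * sInf ((fun i => X i ω) '' Set.Icc 1 n)}
            \ {ω | y < a n * n * sInf ((fun i => X i ω) '' Set.Icc 1 n)}
            ⊆ {ω | a n * n * sInf ((fun i => X i ω) '' Set.Icc 1 n) ∈ O} := by
          rintro ω ⟨h1, h2⟩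
          simp only [Set.mem_setOf_eq, not_lt] at h1 h2 ⊢
          have h2' : a n * ↑n * sInf ((fun i => X i ω) '' Set.Icc 1 n) ≤ x + ε / 2 :=
            hydef ▸ h2
          exact hball' ⟨by linarith, by linarith⟩
        have hAB : ℙ {ω | x < a n * n * sInf ((fun i => X i ω) '' Set.Icc 1 n)}
            ≤ ℙ {ω | a n * n * sInf ((fun i => X i ω) '' Set.Icc 1 n) ∈ O}
              + ℙ {ω | y < a n * n * sInf ((fun i => X i ω) '' Set.Icc 1 n)} := by
          calc ℙ {ω | x < a n * n * sInf ((fun i => X i ω) '' Set.Icc 1 n)}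
              ≤ ℙ (({ω | x < a n * n * sInf ((fun i => X i ω) '' Set.Icc 1 n)}
                  \ {ω | y < a n * n * sInf ((fun i => X i ω) '' Set.Icc 1 n)})
                  ∪ {ω | y < a n * n * sInf ((fun i => X i ω) '' Set.Icc 1 n)}) :=
                measure_mono (by intro ω h; by_cases hy : ω ∈ {ω | y < a n * n * sInf ((fun i => X i ω) '' Set.Icc 1 n)} <;> [exact Or.inr hy; exact Or.inl ⟨h, hy⟩])
            _ ≤ ℙ ({ω | x < a n * n * sInf ((fun i => X i ω) '' Set.Icc 1 n)}
                  \ {ω | y < a n * n * sInf ((fun i => X i ω) '' Set.Icc 1 n)})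
                + ℙ {ω | y < a n * n * sInf ((fun i => X i ω) '' Set.Icc 1 n)} :=
                measure_union_le _ _
            _ ≤ ℙ {ω | a n * n * sInf ((fun i => X i ω) '' Set.Icc 1 n) ∈ O}
                + ℙ {ω | y < a n * n * sInf ((fun i => X i ω) '' Set.Icc 1 n)} := by
                gcongr
        have hlow : ENNReal.ofReal (p ^ n / 2)
            ≤ ℙ {ω | a n * n * sInf ((fun i => X i ω) '' Set.Icc 1 n) ∈ O} := by
          have h1 : ℙ {ω | x < a n * n * sInf ((fun i => X i ω) '' Set.Icc 1 n)}
              = ENNReal.ofReal (p ^ n) := by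
            rw [hProb n hn x, ← ENNReal.ofReal_pow (by linarith)]
          have h2 : ℙ {ω | y < a n * n * sInf ((fun i => X i ω) '' Set.Icc 1 n)}
              = ENNReal.ofReal (q ^ n) := by
            rw [hProb n hn y, ← ENNReal.ofReal_pow (by linarith)]
          rw [h1, h2] at hAB
          have h3 : ENNReal.ofReal (p ^ n) - ENNReal.ofReal (q ^ n)
              ≤ ℙ {ω | a n * n * sInf ((fun i => X i ω) '' Set.Icc 1 n) ∈ O} :=
            tsub_le_iff_right.mpr hAB
          refine le_trans ?_ h3
          rw [← ENNReal.ofReal_sub _ hqn]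
          exact ENNReal.ofReal_le_ofReal (by linarith)
        -- take logs
        have hlog := ENNReal.log_monotone hlow
        rw [ENNReal.log_ofReal_of_pos (by positivity)] at hlog
        have := emul_mono (ha_pos n) hlog
        refine le_trans (le_of_eq ?_) this
        rw [← EReal.coe_mul]
        norm_cast
        rw [Real.log_div (by positivity) two_ne_zero, Real.log_pow]
        push_cast
        ring
      -- pass to the liminf
      have hlim : Tendsto (fun n : ℕ =>
          ((a n * (n * Real.log (1 - F (x / (a n * n)))) - a n * Real.log 2 : ℝ) : EReal))
          atTop (nhds ((-(d * x) : ℝ) : EReal)) := by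
        apply EReal.tendsto_coe.mpr
        have h2 : Tendsto (fun n : ℕ => a n * Real.log 2) atTop (nhds 0) := by
          simpa using ha_zero.mul_const (Real.log 2)
        have := (hKey x hx0).sub h2
        simpa using this
      calc ((-(d * x) : ℝ) : EReal)
          = liminf (fun n : ℕ =>
              ((a n * (n * Real.log (1 - F (x / (a n * n)))) - a n * Real.log 2 : ℝ) : EReal))
            atTop := (hlim.liminf_eq).symm
        _ ≤ liminf (fun n : ℕ => ((a n : ℝ) : EReal) *
              ENNReal.log (ℙ {ω | a n * n * sInf ((fun i => X i ω) '' Set.Icc 1 n) ∈ O})) atTop :=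
            liminf_le_liminf hevmain
    · rw [if_neg hx0]
      exact le_top
end

section
/- For every sequence of positive numbers {a_n : n ≥ 1} with a_n → 0 and a_n·n → ∞, and for every x > 0, it holds that limsup_{n→∞} a_n · log P(a_n·n·min{X_1,...,X_n} ≥ x) ≤ −F′(0+)·x. -/
open Filter MeasureTheory ProbabilityTheory Topology
open scoped ENNReal

/-- Upper bound on the half-line `[x, ∞)` for moderate deviations of minima: for every
`x > 0`, `limsup a_n * log P(a_n * n * min{X_1,...,X_n} ≥ x) ≤ - F'(0+) * x`. -/
theorem stmt_3
    {Ω : Type*} [MeasureSpace Ω] [IsProbabilityMeasure (ℙ : Measure Ω)]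
    (X : ℕ → Ω → ℝ) (hX : ∀ n, Measurable (X n))
    (h_indep : iIndepFun X ℙ)
    (F : ℝ → ℝ) (hF_cdf : ∀ n x, (ℙ {ω | X n ω ≤ x}).toReal = F x)
    (hF_mono : Monotone F) (hF0 : F 0 = 0)
    (hF_strict : StrictMonoOn F {x : ℝ | 0 < x ∧ ∃ y, x < y ∧ F y < 1})
    (d : ℝ) (hd : 0 < d)
    (hF_deriv : Tendsto (fun x => F x / x) (nhdsWithin 0 (Set.Ioi 0)) (nhds d))
    (a : ℕ → ℝ) (ha_pos : ∀ n, 0 < a n) (ha_zero : Tendsto a atTop (nhds 0))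
    (ha_top : Tendsto (fun n : ℕ => a n * n) atTop atTop) :
    ∀ x : ℝ, 0 < x →
      limsup (fun n : ℕ => ((a n : ℝ) : EReal) *
          ENNReal.log (ℙ {ω | x ≤ a n * n * sInf ((fun i => X i ω) '' Set.Icc 1 n)})) atTop
        ≤ ((-(d * x) : ℝ) : EReal) := by
  intro x hx
  have hFnn : ∀ y : ℝ, 0 ≤ F y := fun y => (hF_cdf 0 y) ▸ ENNReal.toReal_nonneg
  -- tendsto of t n := x / (a n * n) to 0 from the right
  have ht0 : Tendsto (fun n : ℕ => x / (a n * n)) atTop (𝓝[>] (0 : ℝ)) := by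
    rw [tendsto_nhdsWithin_iff]
    constructor
    · exact Tendsto.div_atTop tendsto_const_nhds ha_top
    · filter_upwards [ha_top.eventually_gt_atTop 0] with n hn
      exact Set.mem_Ioi.2 (div_pos hx hn)
  -- Key step: bound for every ε ∈ (0,1)
  have key : ∀ ε : ℝ, 0 < ε → ε < 1 →
      limsup (fun n : ℕ => ((a n : ℝ) : EReal) *
          ENNReal.log (ℙ {ω | x ≤ a n * n * sInf ((fun i => X i ω) '' Set.Icc 1 n)})) atTop
        ≤ ((-((1 - ε) * (d * x)) : ℝ) : EReal) := by
    intro ε hε hε1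
    set t : ℕ → ℝ := fun n => x / (a n * n) with ht_def
    set s : ℕ → ℝ := fun n => (1 - ε) * t n with hs_def
    have h1ε : (0 : ℝ) < 1 - ε := by linarith
    have hs0 : Tendsto s atTop (𝓝[>] (0 : ℝ)) := by
      rw [tendsto_nhdsWithin_iff]
      refine ⟨?_, ?_⟩
      · have := (ht0.mono_right nhdsWithin_le_nhds).const_mul (1 - ε)
        simpa using this
      · filter_upwards [ht0.eventually (self_mem_nhdsWithin)] with n hn
        exact Set.mem_Ioi.2 (mul_pos h1ε hn)
    have hds : Tendsto (fun n => F (s n) / s n) atTop (𝓝 d) := hF_deriv.comp hs0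
    -- limit of the real bound sequence
    have hb : Tendsto (fun n => a n * n * F (s n)) atTop (𝓝 ((1 - ε) * (d * x))) := by
      have h1 : Tendsto (fun n => (1 - ε) * x * (F (s n) / s n)) atTop
          (𝓝 ((1 - ε) * x * d)) := hds.const_mul _
      have heq : ∀ᶠ n : ℕ in atTop, (1 - ε) * x * (F (s n) / s n) = a n * n * F (s n) := by
        filter_upwards [ha_top.eventually_gt_atTop 0] with n hn
        have hsn : s n ≠ 0 := by
          have : 0 < s n := mul_pos h1ε (div_pos hx hn)
          exact this.ne'
        have hxne : x ≠ 0 := hx.ne'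
        simp only [hs_def, ht_def] at hsn ⊢
        field_simp
      have := h1.congr' heq
      convert this using 2
      ring
    -- termwise bound, eventually
    have hbd : ∀ᶠ n : ℕ in atTop,
        ((a n : ℝ) : EReal) *
            ENNReal.log (ℙ {ω | x ≤ a n * n * sInf ((fun i => X i ω) '' Set.Icc 1 n)})
          ≤ ((-(a n * n * F (s n)) : ℝ) : EReal) := by
      filter_upwards [eventually_ge_atTop 1, ha_top.eventually_gt_atTop 0] with n hn1 han
      have htn : 0 < t n := div_pos hx han
      have hsn : 0 < s n := mul_pos h1ε htn
      have hst : s n < t n := by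
        have : (1 - ε) * t n < 1 * t n := by
          exact mul_lt_mul_of_pos_right (by linarith) htn
        simpa [hs_def] using this
      -- rewrite the event
      have hE : {ω | x ≤ a n * n * sInf ((fun i => X i ω) '' Set.Icc 1 n)}
          = ⋂ i ∈ Finset.Icc 1 n, X i ⁻¹' Set.Ici (t n) := by
        ext ω
        have hne : ((fun i => X i ω) '' Set.Icc 1 n).Nonempty :=
          ⟨X 1 ω, ⟨1, ⟨le_refl 1, hn1⟩, rfl⟩⟩
        have hfin : ((fun i => X i ω) '' Set.Icc 1 n).Finite :=
          (Set.finite_Icc 1 n).image _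
        simp only [Set.mem_setOf_eq, Set.mem_iInter, Set.mem_preimage, Set.mem_Ici,
          Finset.mem_Icc]
        rw [show (x ≤ a n * n * sInf ((fun i => X i ω) '' Set.Icc 1 n))
            ↔ t n ≤ sInf ((fun i => X i ω) '' Set.Icc 1 n) by
          rw [ht_def, div_le_iff₀ han, mul_comm]]
        rw [le_csInf_iff hfin.bddBelow hne]
        constructor
        · intro h i hi
          exact h _ ⟨i, ⟨hi.1, hi.2⟩, rfl⟩
        · rintro h _ ⟨i, hi, rfl⟩
          exact h i ⟨hi.1, hi.2⟩
      -- independence: product formula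
      have hprod : ℙ (⋂ i ∈ Finset.Icc 1 n, X i ⁻¹' Set.Ici (t n))
          = ∏ i ∈ Finset.Icc 1 n, ℙ (X i ⁻¹' Set.Ici (t n)) :=
        h_indep.measure_inter_preimage_eq_mul (Finset.Icc 1 n)
          (fun i _ => measurableSet_Ici)
      -- each factor bound
      set c : ℝ≥0∞ := ENNReal.ofReal (1 - F (s n)) with hc_def
      have hfac : ∀ i, ℙ (X i ⁻¹' Set.Ici (t n)) ≤ c := by
        intro i
        have hsub : X i ⁻¹' Set.Ici (t n) ⊆ {ω | X i ω ≤ s n}ᶜ := by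
          intro ω hω
          simp only [Set.mem_compl_iff, Set.mem_setOf_eq, not_le]
          exact lt_of_lt_of_le hst hω
        have hms : MeasurableSet {ω | X i ω ≤ s n} :=
          measurableSet_le (hX i) measurable_const
        have hPA : ℙ {ω | X i ω ≤ s n} = ENNReal.ofReal (F (s n)) := by
          rw [← hF_cdf i (s n), ENNReal.ofReal_toReal (measure_ne_top _ _)]
        calc ℙ (X i ⁻¹' Set.Ici (t n)) ≤ ℙ ({ω | X i ω ≤ s n}ᶜ) := measure_mono hsub
          _ = 1 - ℙ {ω | X i ω ≤ s n} := prob_compl_eq_one_sub hms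
          _ = ENNReal.ofReal 1 - ENNReal.ofReal (F (s n)) := by
              rw [hPA, ENNReal.ofReal_one]
          _ = c := by rw [hc_def, ENNReal.ofReal_sub _ (hFnn (s n))]
      have hcard : (Finset.Icc 1 n).card = n := by
        rw [Nat.card_Icc]; omega
      have hPbound : ℙ (⋂ i ∈ Finset.Icc 1 n, X i ⁻¹' Set.Ici (t n)) ≤ c ^ n := by
        rw [hprod]
        calc ∏ i ∈ Finset.Icc 1 n, ℙ (X i ⁻¹' Set.Ici (t n))
            ≤ c ^ (Finset.Icc 1 n).card :=
              Finset.prod_le_pow_card _ _ _ (fun i _ => hfac i)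
          _ = c ^ n := by rw [hcard]
      have hlog : ENNReal.log (ℙ {ω | x ≤ a n * n * sInf ((fun i => X i ω) '' Set.Icc 1 n)})
          ≤ (n : EReal) * ENNReal.log c := by
        rw [hE]
        calc ENNReal.log (ℙ (⋂ i ∈ Finset.Icc 1 n, X i ⁻¹' Set.Ici (t n)))
            ≤ ENNReal.log (c ^ n) := ENNReal.log_monotone hPbound
          _ = (n : EReal) * ENNReal.log c := ENNReal.log_pow
      have han : (0 : ℝ) ≤ a n := (ha_pos n).le
      have hmul : ((a n : ℝ) : EReal) *
          ENNReal.log (ℙ {ω | x ≤ a n * n * sInf ((fun i => X i ω) '' Set.Icc 1 n)})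
          ≤ ((a n : ℝ) : EReal) * ((n : EReal) * ENNReal.log c) :=
        mul_le_mul_of_nonneg_left hlog (by exact_mod_cast han)
      refine le_trans hmul ?_
      -- now case on whether c = 0
      by_cases hc0 : c = 0
      · have hnpos : (0 : EReal) < (n : EReal) := by
          have : (0 : ℕ) < n := hn1
          exact_mod_cast this
        rw [hc0, ENNReal.log_zero, EReal.mul_bot_of_pos hnpos,
          EReal.coe_mul_bot_of_pos (ha_pos n)]
        exact bot_le
      · have hFlt : F (s n) < 1 := by
          by_contra h
          push_neg at h
          exact hc0 (by rw [hc_def]; simp [ENNReal.ofReal_eq_zero]; linarith)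
        have hpos : (0 : ℝ) < 1 - F (s n) := by linarith
        have hlogc : ENNReal.log c = ((Real.log (1 - F (s n)) : ℝ) : EReal) := by
          rw [hc_def, ENNReal.log_ofReal_of_pos hpos]
        rw [hlogc]
        have hcast : ((a n : ℝ) : EReal) * ((n : EReal) * ((Real.log (1 - F (s n)) : ℝ) : EReal))
            = ((a n * n * Real.log (1 - F (s n)) : ℝ) : EReal) := by
          rw [← EReal.coe_coe_eq_natCast, ← EReal.coe_mul, ← EReal.coe_mul]
          ring_nf
        rw [hcast, EReal.coe_le_coe_iff]
        have hloglt : Real.log (1 - F (s n)) ≤ -F (s n) := by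
          have := Real.log_le_sub_one_of_pos hpos
          linarith
        have hannn : (0 : ℝ) ≤ a n * n := by positivity
        nlinarith [mul_le_mul_of_nonneg_left hloglt hannn]
    -- conclude via limsup comparison
    calc limsup (fun n : ℕ => ((a n : ℝ) : EReal) *
            ENNReal.log (ℙ {ω | x ≤ a n * n * sInf ((fun i => X i ω) '' Set.Icc 1 n)})) atTop
        ≤ limsup (fun n : ℕ => ((-(a n * n * F (s n)) : ℝ) : EReal)) atTop :=
          limsup_le_limsup hbd
      _ = ((-((1 - ε) * (d * x)) : ℝ) : EReal) := by
          apply Tendsto.limsup_eq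
          exact EReal.tendsto_coe.2 hb.neg
  -- take ε → 0⁺
  have htend : Tendsto (fun ε : ℝ => ((-((1 - ε) * (d * x)) : ℝ) : EReal)) (𝓝[>] (0 : ℝ))
      (𝓝 ((-(d * x) : ℝ) : EReal)) := by
    apply EReal.tendsto_coe.2
    have hcont : Continuous (fun ε : ℝ => -((1 - ε) * (d * x))) := by continuity
    have := (hcont.tendsto 0).mono_left (nhdsWithin_le_nhds (s := Set.Ioi (0:ℝ)))
    simpa using this
  refine ge_of_tendsto htend ?_
  filter_upwards [Ioo_mem_nhdsGT_of_mem (Set.mem_Ico.2 ⟨le_refl (0 : ℝ), one_pos⟩)] with ε hε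
  exact key ε hε.1 hε.2
end

section
/- For every sequence of positive numbers {a_n : n ≥ 1} with a_n → 0 and a_n·n → ∞, for every x ≥ 0 and for every open set O ⊆ ℝ with x ∈ O, it holds that liminf_{n→∞} a_n · log P(a_n·n·min{X_1,...,X_n} ∈ O) ≥ −F′(0+)·x. -/
open Filter MeasureTheory ProbabilityTheory Topology
open scoped ENNReal

lemma aux_exp_le_one_sub {s : ℝ} (h0 : 0 ≤ s) (h1 : s ≤ 1/2) :
    Real.exp (-(s + 2*s^2)) ≤ 1 - s := by
  have hy : (0:ℝ) ≤ s + 2*s^2 := by positivity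
  have h2 : 1 + (s + 2*s^2) ≤ Real.exp (s + 2*s^2) := by
    have := Real.add_one_le_exp (s + 2*s^2); linarith
  have hpos : (0:ℝ) < 1 + (s + 2*s^2) := by positivity
  have h3 : Real.exp (-(s + 2*s^2)) ≤ (1 + (s + 2*s^2))⁻¹ := by
    rw [Real.exp_neg]
    exact inv_anti₀ hpos h2
  have h4 : (1 + (s + 2*s^2))⁻¹ ≤ 1 - s := by
    rw [inv_le_iff_one_le_mul₀ hpos]
    nlinarith [mul_nonneg (mul_nonneg h0 h0) (by linarith : (0:ℝ) ≤ 1-2*s)]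
  linarith

lemma aux_prob_prod {Ω : Type*} [MeasureSpace Ω] [IsProbabilityMeasure (ℙ : Measure Ω)]
    (X : ℕ → Ω → ℝ) (hX : ∀ n, Measurable (X n))
    (h_indep : iIndepFun X ℙ)
    (F : ℝ → ℝ) (hF_cdf : ∀ n x, (ℙ {ω | X n ω ≤ x}).toReal = F x)
    (t : ℝ) (n : ℕ) :
    ℙ (⋂ i ∈ Finset.Icc 1 n, {ω | t < X i ω}) = ENNReal.ofReal ((1 - F t)^n) := by
  have hFnn : 0 ≤ F t := (hF_cdf 0 t) ▸ ENNReal.toReal_nonneg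
  have hmeas : ∀ i : ℕ, MeasurableSet[(inferInstance : MeasurableSpace ℝ).comap (X i)]
      {ω | t < X i ω} := fun i => ⟨Set.Ioi t, measurableSet_Ioi, rfl⟩
  rw [h_indep.meas_biInter (fun i _ => hmeas i)]
  have hfac : ∀ i : ℕ, ℙ {ω | t < X i ω} = ENNReal.ofReal (1 - F t) := by
    intro i
    have h1 : {ω | t < X i ω} = {ω | X i ω ≤ t}ᶜ := by
      ext ω; simp [not_le]
    have h2 : ℙ {ω | X i ω ≤ t} = ENNReal.ofReal (F t) := by
      rw [← hF_cdf i t, ENNReal.ofReal_toReal (measure_ne_top ℙ _)]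
    rw [h1, prob_compl_eq_one_sub (measurableSet_le (hX i) measurable_const), h2,
      ENNReal.ofReal_sub 1 hFnn, ENNReal.ofReal_one]
  simp only [hfac]
  rw [Finset.prod_const, Nat.card_Icc]
  have hFle1 : F t ≤ 1 := by
    rw [← hF_cdf 0 t]
    exact ENNReal.toReal_le_of_le_ofReal zero_le_one (by simpa using prob_le_one)
  rw [ENNReal.ofReal_pow (by linarith)]
  norm_num

set_option maxHeartbeats 2000000 in
/-- Local lower bound for moderate deviations of minima: for every `x ≥ 0` and every open
set `O ∋ x`, `liminf a_n * log P(a_n * n * min{X_1,...,X_n} ∈ O) ≥ - F'(0+) * x`. -/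
theorem stmt_4
    {Ω : Type*} [MeasureSpace Ω] [IsProbabilityMeasure (ℙ : Measure Ω)]
    (X : ℕ → Ω → ℝ) (hX : ∀ n, Measurable (X n))
    (h_indep : iIndepFun X ℙ)
    (F : ℝ → ℝ) (hF_cdf : ∀ n x, (ℙ {ω | X n ω ≤ x}).toReal = F x)
    (hF_mono : Monotone F) (hF0 : F 0 = 0)
    (hF_strict : StrictMonoOn F {x : ℝ | 0 < x ∧ ∃ y, x < y ∧ F y < 1})
    (d : ℝ) (hd : 0 < d)
    (hF_deriv : Tendsto (fun x => F x / x) (nhdsWithin 0 (Set.Ioi 0)) (nhds d))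
    (a : ℕ → ℝ) (ha_pos : ∀ n, 0 < a n) (ha_zero : Tendsto a atTop (nhds 0))
    (ha_top : Tendsto (fun n : ℕ => a n * n) atTop atTop) :
    ∀ x : ℝ, 0 ≤ x → ∀ O : Set ℝ, IsOpen O → x ∈ O →
      ((-(d * x) : ℝ) : EReal)
        ≤ liminf (fun n : ℕ => ((a n : ℝ) : EReal) *
          ENNReal.log (ℙ {ω | a n * n * sInf ((fun i => X i ω) '' Set.Icc 1 n) ∈ O})) atTop := by
  intro x hx O hO hxO
  by_contra hcon
  push_neg at hcon
  obtain ⟨c, hcL, hcU⟩ := EReal.exists_between_coe_real hcon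
  have hclt : c < -(d*x) := by exact_mod_cast hcU
  -- basic facts about F
  have hFnn : ∀ t, 0 ≤ F t := fun t => (hF_cdf 0 t) ▸ ENNReal.toReal_nonneg
  have hFle1 : ∀ t, F t ≤ 1 := by
    intro t; rw [← hF_cdf 0 t]
    exact ENNReal.toReal_le_of_le_ofReal zero_le_one (by simpa using prob_le_one)
  -- constants
  set η : ℝ := (-(d*x) - c)/3 with hηdef
  have hη : 0 < η := by simp only [hηdef]; linarith
  have hceq : c = -(d*x) - 3*η := by simp only [hηdef]; ring
  rw [Metric.isOpen_iff] at hO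
  obtain ⟨ε0, hε0, hball⟩ := hO x hxO
  set ε : ℝ := min ε0 1 with hεdef
  have hε : 0 < ε := lt_min hε0 one_pos
  have hε1 : ε ≤ 1 := min_le_right _ _
  have hsub : Set.Ioo (x-ε) (x+ε) ⊆ O := by
    intro y hy
    apply hball
    rw [Real.ball_eq_Ioo]
    constructor
    · have := min_le_left ε0 1; exact lt_of_le_of_lt (by linarith [min_le_left ε0 (1:ℝ)]) hy.1
    · exact lt_of_lt_of_le hy.2 (by linarith [min_le_left ε0 (1:ℝ)])
  set η' : ℝ := min η (d*ε/8) with hη'def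
  have hη' : 0 < η' := lt_min hη (by positivity)
  have hη'η : η' ≤ η := min_le_left _ _
  have hη'ε : η' ≤ d*ε/8 := min_le_right _ _
  set δ : ℝ := min (d/2) (min (η'/(2*(x+1))) (d*ε/(8*(x+1)))) with hδdef
  have hx1 : (0:ℝ) < x + 1 := by linarith
  have hδ : 0 < δ := lt_min (by positivity) (lt_min (by positivity) (by positivity))
  have hδd : δ ≤ d/2 := min_le_left _ _
  have hδ1 : δ*(x+1) ≤ η'/2 := by
    calc δ*(x+1) ≤ (η'/(2*(x+1)))*(x+1) := by
          apply mul_le_mul_of_nonneg_right _ (le_of_lt hx1)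
          exact (min_le_right (d/2) _).trans (min_le_left _ _)
      _ = η'/2 := by field_simp
  have hδ2 : δ*(x+1) ≤ d*ε/8 := by
    calc δ*(x+1) ≤ (d*ε/(8*(x+1)))*(x+1) := by
          apply mul_le_mul_of_nonneg_right _ (le_of_lt hx1)
          exact (min_le_right (d/2) _).trans (min_le_right _ _)
      _ = d*ε/8 := by field_simp
  -- ρ from the derivative hypothesis
  rw [Metric.tendsto_nhdsWithin_nhds] at hF_deriv
  obtain ⟨ρ, hρ, hFρ⟩ := hF_deriv δ hδ
  have Fub : ∀ t, 0 ≤ t → t < ρ → F t ≤ (d+δ)*t := by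
    intro t ht htρ
    rcases eq_or_lt_of_le ht with h|h
    · rw [← h]; simp [hF0]
    · have := hFρ (Set.mem_Ioi.mpr h) (by rw [Real.dist_eq, sub_zero, abs_of_pos h]; exact htρ)
      rw [Real.dist_eq, abs_lt] at this
      have h2 : F t / t < d + δ := by linarith [this.2]
      calc F t = (F t / t) * t := by field_simp
        _ ≤ (d+δ)*t := mul_le_mul_of_nonneg_right (le_of_lt h2) (le_of_lt h)
  have Flb : ∀ t, 0 < t → t < ρ → (d-δ)*t ≤ F t := by
    intro t h htρ
    have := hFρ (Set.mem_Ioi.mpr h) (by rw [Real.dist_eq, sub_zero, abs_of_pos h]; exact htρ)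
    rw [Real.dist_eq, abs_lt] at this
    have h2 : d - δ < F t / t := by linarith [this.1]
    calc (d-δ)*t ≤ (F t / t)*t := mul_le_mul_of_nonneg_right (le_of_lt h2) (le_of_lt h)
      _ = F t := by field_simp
  -- more constants
  set σ : ℝ := min (1/2) (η'/(4*d*x+2*η')) with hσdef
  have hdx : 0 ≤ d*x := by positivity
  have hσ : 0 < σ := lt_min (by norm_num) (by positivity)
  have hσhalf : σ ≤ 1/2 := min_le_left _ _
  have hσ2 : σ*(4*d*x+2*η') ≤ η' := by
    calc σ*(4*d*x+2*η') ≤ (η'/(4*d*x+2*η'))*(4*d*x+2*η') :=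
          mul_le_mul_of_nonneg_right (min_le_right _ _) (by linarith)
      _ = η' := by field_simp
  set C : ℝ := (d+δ) * max (x-ε) 0 with hCdef
  have hC0 : 0 ≤ C := mul_nonneg (by linarith) (le_max_right _ _)
  have hCx : C ≤ d*x + η'/2 := by
    have h1 : max (x-ε) 0 ≤ x := max_le (by linarith) hx
    have h2 : C ≤ (d+δ)*x := mul_le_mul_of_nonneg_left h1 (by linarith)
    have h3 : δ*x ≤ η'/2 :=
      le_trans (mul_le_mul_of_nonneg_left (by linarith : x ≤ x+1) hδ.le) hδ1
    have h4 : (d+δ)*x = d*x + δ*x := by ring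
    linarith
  -- the eventual bound
  have key : ∀ᶠ n in atTop, (c : EReal) ≤ ((a n : ℝ) : EReal) *
      ENNReal.log (ℙ {ω | a n * n * sInf ((fun i => X i ω) '' Set.Icc 1 n) ∈ O}) := by
    have h1 := eventually_ge_atTop 1
    have h2 := ha_top.eventually_gt_atTop ((x+ε)/ρ)
    have h3 := ha_top.eventually_gt_atTop (C/σ)
    have h4 : ∀ᶠ n in atTop, a n < η' := ha_zero.eventually_lt_const hη'
    filter_upwards [h1, h2, h3, h4] with n hn1 hn2 hn3 hn4
    have han : 0 < a n := ha_pos n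
    have hN1 : (1:ℝ) ≤ (n:ℝ) := by exact_mod_cast hn1
    have haN : 0 < a n * (n:ℝ) := by positivity
    set u : ℝ := (a n * (n:ℝ))⁻¹ with hudef
    have hu : 0 < u := by positivity
    have hn0 : ((n:ℝ)) ≠ 0 := by positivity
    have huc : a n * (n:ℝ) * u = 1 := by
      rw [hudef]; exact mul_inv_cancel₀ haN.ne'
    have hnu : (n:ℝ) * u = (a n)⁻¹ := by
      rw [hudef, mul_inv, mul_comm ((a n)⁻¹), ← mul_assoc, mul_inv_cancel₀ hn0, one_mul]
    set t : ℝ := max (x-ε) 0 * u with htdef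
    set r' : ℝ := (x+ε/2)*u with hr'def
    set l : ℝ := (x-ε)*u with hldef
    have hxε : 0 < x + ε := by linarith
    have hxε2 : 0 < x + ε/2 := by linarith
    have hxερ : (x+ε)*u < ρ := by
      rw [div_lt_iff₀ hρ] at hn2
      calc (x+ε)*u < ((a n * (n:ℝ)) * ρ)*u := mul_lt_mul_of_pos_right hn2 hu
        _ = ρ * (a n * (n:ℝ) * u) := by ring
        _ = ρ := by rw [huc, mul_one]
    have ht0 : 0 ≤ t := mul_nonneg (le_max_right _ _) (le_of_lt hu)
    have htρ : t < ρ := lt_of_le_of_lt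
      (mul_le_mul_of_nonneg_right (max_le (by linarith) (by linarith)) (le_of_lt hu)) hxερ
    have hr'0 : 0 < r' := by positivity
    have hr'ρ : r' < ρ := lt_of_le_of_lt
      (mul_le_mul_of_nonneg_right (by linarith) (le_of_lt hu)) hxερ
    set s : ℝ := (d+δ)*t with hsdef
    have hs_eq : s = C * u := by rw [hsdef, htdef, hCdef]; ring
    have hsσ : s ≤ σ := by
      rw [div_lt_iff₀ hσ] at hn3
      rw [hs_eq]
      calc C * u ≤ ((a n * (n:ℝ)) * σ) * u :=
            mul_le_mul_of_nonneg_right (le_of_lt hn3) (le_of_lt hu)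
        _ = σ * (a n * (n:ℝ) * u) := by ring
        _ = σ := by rw [huc, mul_one]
    have hs0 : 0 ≤ s := mul_nonneg (by linarith) ht0
    have hshalf : s ≤ 1/2 := hsσ.trans hσhalf
    -- events
    set A : Set Ω := ⋂ i ∈ Finset.Icc 1 n, {ω | l < X i ω} with hAdef
    set B : Set Ω := ⋂ i ∈ Finset.Icc 1 n, {ω | r' < X i ω} with hBdef
    set E : Set Ω := {ω | a n * n * sInf ((fun i => X i ω) '' Set.Icc 1 n) ∈ O} with hEdef
    have hB_meas : MeasurableSet B :=
      MeasurableSet.biInter (Set.to_countable _)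
        (fun i _ => measurableSet_lt measurable_const (hX i))
    have hAB_sub : A \ B ⊆ E := by
      rintro ω ⟨hA, hB⟩
      simp only [hBdef, Set.mem_iInter, not_forall, Set.mem_setOf_eq] at hB
      obtain ⟨i, hi, hXi⟩ := hB
      push_neg at hXi
      simp only [hAdef, Set.mem_iInter, Set.mem_setOf_eq] at hA
      set S : Set ℝ := (fun i => X i ω) '' Set.Icc 1 n with hSdef
      have hSfin : S.Finite := (Set.finite_Icc 1 n).image _
      have hSne : S.Nonempty := ⟨X 1 ω, ⟨1, Set.mem_Icc.mpr ⟨le_refl 1, hn1⟩, rfl⟩⟩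
      have hm_mem : sInf S ∈ S := hSne.csInf_mem hSfin
      obtain ⟨j, hj, hjm⟩ := hm_mem
      have hlm : l < sInf S := by
        rw [← hjm]
        exact hA j (Finset.mem_Icc.mpr (Set.mem_Icc.mp hj))
      have hm_le : sInf S ≤ r' := by
        refine le_trans (csInf_le hSfin.bddBelow ?_) hXi
        exact ⟨i, Set.mem_Icc.mpr (Finset.mem_Icc.mp hi), rfl⟩
      apply hsub
      constructor
      · calc x - ε = (x-ε) * u * (a n * (n:ℝ)) := by
              rw [mul_assoc, mul_comm u, huc]; ring
          _ < sInf S * (a n * (n:ℝ)) := by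
              apply mul_lt_mul_of_pos_right _ haN; exact hlm
          _ = a n * (n:ℝ) * sInf S := by ring
      · calc a n * (n:ℝ) * sInf S ≤ a n * (n:ℝ) * r' := by
              apply mul_le_mul_of_nonneg_left hm_le (le_of_lt haN)
          _ = (x+ε/2) * (a n * (n:ℝ) * u) := by ring
          _ = x + ε/2 := by rw [huc]; ring
          _ < x + ε := by linarith
    -- probabilities
    have hPA : ℙ A = ENNReal.ofReal ((1 - F l)^n) :=
      aux_prob_prod X hX h_indep F hF_cdf l n
    have hPB : ℙ B = ENNReal.ofReal ((1 - F r')^n) :=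
      aux_prob_prod X hX h_indep F hF_cdf r' n
    -- real bounds
    have hFl_le_Ft : F l ≤ F t :=
      hF_mono (mul_le_mul_of_nonneg_right (le_max_left _ _) (le_of_lt hu))
    have hFt_ub : F t ≤ s := by rw [hsdef]; exact Fub t ht0 htρ
    have hFt1 : F t ≤ 1/2 := hFt_ub.trans hshalf
    have hA_lb : Real.exp (-((d*x+η')/a n)) ≤ (1 - F l)^n := by
      have e1 : Real.exp (-(s + 2*s^2)) ≤ 1 - s := aux_exp_le_one_sub hs0 hshalf
      have e2 : (1:ℝ) - s ≤ 1 - F t := by linarith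
      have e3 : (1:ℝ) - F t ≤ 1 - F l := by linarith
      have hbase : Real.exp (-(s + 2*s^2)) ≤ 1 - F l := by linarith
      have hexp_nn : (0:ℝ) ≤ Real.exp (-(s + 2*s^2)) := (Real.exp_pos _).le
      have hpow : Real.exp (-(s + 2*s^2))^n ≤ (1 - F l)^n :=
        pow_le_pow_left₀ hexp_nn hbase n
      have hpe : Real.exp (-(s + 2*s^2))^n = Real.exp ((n:ℝ) * (-(s + 2*s^2))) := by
        rw [← Real.exp_nat_mul]
      have hns : (n:ℝ) * s = C / a n := by
        rw [hs_eq]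
        calc (n:ℝ) * (C * u) = C * ((n:ℝ) * u) := by ring
          _ = C * (a n)⁻¹ := by rw [hnu]
          _ = C / a n := (div_eq_mul_inv _ _).symm
      have hkey : C * (1 + 2*s) ≤ d*x + η' := by
        have f3 : C*(1+2*s) ≤ (d*x+η'/2)*(1+2*s) :=
          mul_le_mul_of_nonneg_right hCx (by linarith)
        have f1 : s*(2*d*x+η') ≤ σ*(2*d*x+η') :=
          mul_le_mul_of_nonneg_right hsσ (by linarith)
        have f2 : σ*(4*d*x+2*η') = 2*(σ*(2*d*x+η')) := by ring
        have f4 : (d*x+η'/2)*(1+2*s) = d*x+η'/2 + s*(2*d*x+η') := by ring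
        linarith [hσ2]
      have hnss : (n:ℝ) * (s + 2*s^2) = (C/a n) * (1 + 2*s) := by
        have : (n:ℝ) * (s + 2*s^2) = ((n:ℝ)*s) * (1 + 2*s) := by ring
        rw [this, hns]
      have h5 : (n:ℝ)*(s+2*s^2) ≤ (d*x+η')/a n := by
        rw [hnss, div_mul_eq_mul_div]
        exact (div_le_div_iff_of_pos_right han).mpr hkey
      have hexpo : -((d*x+η')/a n) ≤ (n:ℝ) * (-(s + 2*s^2)) := by
        have h6 : (n:ℝ) * (-(s+2*s^2)) = -((n:ℝ)*(s+2*s^2)) := by ring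
        rw [h6]; linarith
      calc Real.exp (-((d*x+η')/a n)) ≤ Real.exp ((n:ℝ) * (-(s + 2*s^2))) :=
            Real.exp_le_exp.mpr hexpo
        _ = Real.exp (-(s + 2*s^2))^n := by rw [← Real.exp_nat_mul]
        _ ≤ (1 - F l)^n := hpow
    have hB_ub : (1 - F r')^n ≤ Real.exp (-((d*x+2*η')/a n)) := by
      have hFr' : (d-δ)*r' ≤ F r' := Flb r' hr'0 hr'ρ
      have h1 : (1:ℝ) - F r' ≤ Real.exp (-(F r')) := by
        have := Real.add_one_le_exp (-(F r')); linarith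
      have hpow : (1-F r')^n ≤ Real.exp (-(F r'))^n :=
        pow_le_pow_left₀ (by linarith [hFle1 r']) h1 n
      have hcoef : d*x + 2*η' ≤ (d-δ)*(x+ε/2) := by
        have g1 : δ*(x+ε/2) ≤ δ*(x+1) := mul_le_mul_of_nonneg_left (by linarith) hδ.le
        have g2 : (d-δ)*(x+ε/2) = d*x + d*ε/2 - δ*(x+ε/2) := by ring
        linarith [hδ2, hη'ε]
      have hnr : (n:ℝ) * r' = (x+ε/2) / a n := by
        rw [hr'def]
        calc (n:ℝ) * ((x+ε/2) * u) = (x+ε/2) * ((n:ℝ) * u) := by ring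
          _ = (x+ε/2) * (a n)⁻¹ := by rw [hnu]
          _ = (x+ε/2) / a n := (div_eq_mul_inv _ _).symm
      have h2 : (d*x+2*η')/a n ≤ (n:ℝ) * F r' := by
        calc (d*x+2*η')/a n ≤ ((d-δ)*(x+ε/2))/a n := (div_le_div_iff_of_pos_right han).mpr hcoef
          _ = (d-δ) * ((x+ε/2)/a n) := by ring
          _ = (d-δ) * ((n:ℝ) * r') := by rw [hnr]
          _ = (n:ℝ) * ((d-δ)*r') := by ring
          _ ≤ (n:ℝ) * F r' := by
              apply mul_le_mul_of_nonneg_left hFr' (by positivity)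
      calc (1-F r')^n ≤ Real.exp (-(F r'))^n := hpow
        _ = Real.exp ((n:ℝ) * (-(F r'))) := by rw [← Real.exp_nat_mul]
        _ ≤ Real.exp (-((d*x+2*η')/a n)) := by
            apply Real.exp_le_exp.mpr
            have : (n:ℝ) * (-(F r')) = -((n:ℝ) * F r') := by ring
            rw [this]; linarith
    -- combine into a real lower bound for the difference
    have hhalf : Real.exp (-(η'/a n)) ≤ 1/2 := by
      have h1 : (1:ℝ) < η'/a n := (one_lt_div han).mpr hn4
      have h2 : Real.exp (-(η'/a n)) ≤ Real.exp (-1) := Real.exp_le_exp.mpr (by linarith)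
      have h3 : (2:ℝ) ≤ Real.exp 1 := by have := Real.add_one_le_exp (1:ℝ); linarith
      have h4 : Real.exp (-1) ≤ 1/2 := by
        rw [Real.exp_neg]
        rw [inv_le_iff_one_le_mul₀ (Real.exp_pos 1)]
        linarith
      linarith
    have hsplit_exp : Real.exp (-((d*x+2*η')/a n))
        = Real.exp (-((d*x+η')/a n)) * Real.exp (-(η'/a n)) := by
      rw [← Real.exp_add]
      congr 1
      field_simp
      ring
    have hcexp : Real.exp (c/a n) ≤ Real.exp (-((d*x+2*η')/a n)) := by
      apply Real.exp_le_exp.mpr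
      have : c / a n = (-(d*x) - 3*η)/a n := by rw [← hceq]
      rw [this]
      have h7 : -((d*x+2*η')/a n) = (-(d*x+2*η'))/a n := by ring
      rw [h7]
      exact (div_le_div_iff_of_pos_right han).mpr (by linarith)
    have hdiff : Real.exp (c/a n) ≤ (1 - F l)^n - (1 - F r')^n := by
      set E1 := Real.exp (-((d*x+η')/a n)) with hE1
      set q := Real.exp (-(η'/a n)) with hq
      have hE1pos : 0 < E1 := Real.exp_pos _
      have hqpos : 0 < q := Real.exp_pos _
      have h1 : Real.exp (c/a n) ≤ E1 * q := by rw [← hsplit_exp]; exact hcexp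
      have hq2 : E1 * q ≤ E1 * (1/2) := mul_le_mul_of_nonneg_left hhalf hE1pos.le
      have h2 : E1 * q ≤ E1 - E1 * q := by linarith
      have h3 : (1 - F r')^n ≤ E1 * q := by rw [← hsplit_exp]; exact hB_ub
      linarith [hA_lb]
    -- measure-theoretic conclusion
    have hfin : ∀ (s : Set Ω), ℙ s ≠ ⊤ := fun s => measure_ne_top ℙ s
    have hFl1 : F l ≤ 1 := hFle1 l
    have hFr1 : F r' ≤ 1 := hFle1 r'
    have hFlnn : 0 ≤ F l := hFnn l
    have hPA_real : (ℙ A).toReal = (1 - F l)^n := by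
      rw [hPA, ENNReal.toReal_ofReal (pow_nonneg (by linarith) n)]
    have hPB_real : (ℙ B).toReal = (1 - F r')^n := by
      rw [hPB, ENNReal.toReal_ofReal (pow_nonneg (by linarith) n)]
    have hsplitm : ℙ (A ∩ B) + ℙ (A \ B) = ℙ A := measure_inter_add_diff A hB_meas
    have h1 : (ℙ (A \ B)).toReal = (ℙ A).toReal - (ℙ (A ∩ B)).toReal := by
      have := congrArg ENNReal.toReal hsplitm
      rw [ENNReal.toReal_add (hfin _) (hfin _)] at this
      linarith
    have h2 : (ℙ (A ∩ B)).toReal ≤ (ℙ B).toReal :=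
      ENNReal.toReal_mono (hfin _) (measure_mono Set.inter_subset_right)
    have h3 : Real.exp (c/a n) ≤ (ℙ (A \ B)).toReal := by
      rw [h1, hPA_real]
      have := hPB_real ▸ h2
      linarith
    have hPdiff : ENNReal.ofReal (Real.exp (c / a n)) ≤ ℙ E := by
      calc ENNReal.ofReal (Real.exp (c / a n)) ≤ ENNReal.ofReal ((ℙ (A \ B)).toReal) :=
            ENNReal.ofReal_le_ofReal h3
        _ = ℙ (A \ B) := ENNReal.ofReal_toReal (hfin _)
        _ ≤ ℙ E := measure_mono hAB_sub
    -- pass to EReal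
    have hlog : ((c / a n : ℝ) : EReal) ≤ ENNReal.log (ℙ E) := by
      calc ((c/a n : ℝ):EReal) = ENNReal.log (ENNReal.ofReal (Real.exp (c/a n))) := by
            rw [ENNReal.log_ofReal_of_pos (Real.exp_pos _), Real.log_exp]
        _ ≤ _ := ENNReal.log_monotone hPdiff
    calc (c:EReal) = ((a n * (c / a n) : ℝ) : EReal) := by
          congr 1
          field_simp
      _ = (a n : EReal) * ((c/a n : ℝ):EReal) := EReal.coe_mul _ _
      _ ≤ (a n : EReal) * ENNReal.log (ℙ E) :=
          mul_le_mul_of_nonneg_left hlog (by exact_mod_cast han.le)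
  -- conclude
  have hle : (c : EReal) ≤ liminf (fun n : ℕ => ((a n : ℝ) : EReal) *
      ENNReal.log (ℙ {ω | a n * n * sInf ((fun i => X i ω) '' Set.Icc 1 n) ∈ O})) atTop := by
    calc (c : EReal) = liminf (fun _ : ℕ => (c : EReal)) atTop := (liminf_const _).symm
      _ ≤ _ := liminf_le_liminf key
  exact absurd (lt_of_le_of_lt hle hcL) (lt_irrefl _)
end

section
/- Under the stated assumptions on F, f, w, μ and L, one has limsup_{x→∞} [ −L(x)·log(1−F(x)) / x^μ ] ≤ 1/μ. -/
open Filter MeasureTheory Topology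
open scoped ENNReal

lemma chain_aux (h : ℝ → ℝ) (N ε : ℝ) (hε : 0 ≤ ε)
    (H : ∀ u, N ≤ u → ∀ v ∈ Set.Icc (0:ℝ) 1, |h (u + v) - h u| ≤ ε) :
    ∀ u, N ≤ u → ∀ v, 0 ≤ v → |h (u + v) - h u| ≤ ε * (v + 1) := by
  have key : ∀ n : ℕ, ∀ v : ℝ, 0 ≤ v → v ≤ (n:ℝ) + 1 → ∀ u, N ≤ u →
      |h (u + v) - h u| ≤ ε * ((n:ℝ) + 1) := by
    intro n
    induction n with
    | zero =>
        intro v hv0 hv1 u hu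
        simpa using H u hu v ⟨hv0, by simpa using hv1⟩
    | succ n ih =>
        intro v hv0 hv1 u hu
        by_cases hc : v ≤ n + 1
        · calc |h (u + v) - h u| ≤ ε * (n + 1) := ih v hv0 hc u hu
            _ ≤ ε * ((n:ℝ) + 1 + 1) := by nlinarith
            _ = ε * (((n:ℕ)+1:ℕ) + 1) := by push_cast; ring
        · push_neg at hc
          have hn0 : (0:ℝ) ≤ (n:ℝ) := n.cast_nonneg
          have h1 : (0:ℝ) ≤ v - 1 := by linarith
          have e1 : |h (u + (v - 1) + 1) - h (u + (v - 1))| ≤ ε :=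
            H (u + (v - 1)) (by linarith) 1 ⟨zero_le_one, le_refl 1⟩
          have e2 : |h (u + (v - 1)) - h u| ≤ ε * (n + 1) :=
            ih (v - 1) h1 (by push_cast at hv1 ⊢; linarith) u hu
          have huv : u + (v - 1) + 1 = u + v := by ring
          rw [huv] at e1
          calc |h (u + v) - h u|
              = |(h (u + v) - h (u + (v - 1))) + (h (u + (v - 1)) - h u)| := by ring_nf
            _ ≤ |h (u + v) - h (u + (v - 1))| + |h (u + (v - 1)) - h u| := abs_add_le _ _
            _ ≤ ε + ε * (n + 1) := add_le_add e1 e2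
            _ = ε * ((n:ℝ) + 1 + 1) := by ring
            _ = ε * (((n:ℕ)+1:ℕ) + 1) := by push_cast; ring
  intro u hu v hv
  have hfl : v ≤ (⌊v⌋₊ : ℝ) + 1 := (Nat.lt_floor_add_one v).le
  have := key ⌊v⌋₊ v hv hfl u hu
  have hle : (⌊v⌋₊ : ℝ) ≤ v := Nat.floor_le hv
  calc |h (u + v) - h u| ≤ ε * (⌊v⌋₊ + 1) := by exact_mod_cast this
    _ ≤ ε * (v + 1) := by nlinarith

lemma uct_aux (h : ℝ → ℝ) (U₀ : ℝ)
    (hcont : ∀ u, U₀ ≤ u → ContinuousAt h u)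
    (hpt : ∀ v : ℝ, 0 ≤ v → Tendsto (fun u => h (u + v) - h u) atTop (nhds 0)) :
    ∀ ε : ℝ, 0 < ε → ∃ N : ℝ, U₀ ≤ N ∧
      ∀ u, N ≤ u → ∀ v ∈ Set.Icc (0:ℝ) 1, |h (u + v) - h u| ≤ ε := by
  intro ε hε
  set δ := ε / 2 with hδdef
  have hδ : 0 < δ := by positivity
  set E : ℕ → Set ℝ := fun n =>
    {v | v ∈ Set.Icc (0:ℝ) 2 ∧ ∀ u, U₀ + n ≤ u → |h (u + v) - h u| ≤ δ} with hE
  -- each E n is closed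
  have hEclosed : ∀ n, IsClosed (E n) := by
    intro n
    have : E n = ⋂ (u : ℝ) (_ : U₀ + n ≤ u),
        (Set.Icc (0:ℝ) 2 ∩ (fun v => |h (u + v) - h u|) ⁻¹' Set.Iic δ) := by
      ext v
      simp only [hE, Set.mem_setOf_eq, Set.mem_iInter, Set.mem_inter_iff, Set.mem_preimage,
        Set.mem_Iic]
      constructor
      · rintro ⟨hv, hall⟩ u hu
        exact ⟨hv, hall u hu⟩
      · intro hall
        refine ⟨(hall (U₀ + n) le_rfl).1, fun u hu => (hall u hu).2⟩
    rw [this]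
    refine isClosed_iInter fun u => isClosed_iInter fun hu => ?_
    refine ContinuousOn.preimage_isClosed_of_isClosed ?_ isClosed_Icc isClosed_Iic
    intro v hv
    have hcu : ContinuousAt h (u + v) := by
      refine hcont (u + v) ?_
      have : (0:ℝ) ≤ (n:ℝ) := n.cast_nonneg
      have := hv.1
      linarith
    have : ContinuousAt (fun v : ℝ => |h (u + v) - h u|) v := by
      exact ((hcu.comp (continuousAt_const.add continuousAt_id)).sub continuousAt_const).abs
    exact this.continuousWithinAt
  have hEmeas : ∀ n, MeasurableSet (E n) := fun n => (hEclosed n).measurableSet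
  have hEmono : Monotone E := by
    intro m n hmn v hv
    refine ⟨hv.1, fun u hu => hv.2 u ?_⟩
    have : (m:ℝ) ≤ (n:ℝ) := by exact_mod_cast hmn
    linarith
  have hEcover : Set.Icc (0:ℝ) 2 ⊆ ⋃ n, E n := by
    intro v hv
    have := (hpt v hv.1).eventually (eventually_le_nhds (show (0:ℝ) < δ from hδ) |>.and
      (eventually_ge_nhds (show -δ < (0:ℝ) by linarith)))
    rw [eventually_atTop] at this
    obtain ⟨M, hM⟩ := this
    obtain ⟨n, hn⟩ := exists_nat_ge (M - U₀)
    refine Set.mem_iUnion.2 ⟨n, hv, fun u hu => ?_⟩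
    have := hM u (by linarith)
    rw [abs_le]
    exact ⟨by linarith [this.2], this.1⟩
  have hEuniv : (⋃ n, E n) = Set.Icc (0:ℝ) 2 := by
    refine Set.Subset.antisymm ?_ hEcover
    refine Set.iUnion_subset fun n v hv => hv.1
  -- some E n has big measure
  have hvol : Tendsto (fun n => volume (E n)) atTop (𝓝 (volume (Set.Icc (0:ℝ) 2))) := by
    have := tendsto_measure_iUnion_atTop (μ := volume) hEmono
    rwa [hEuniv] at this
  have hIcc2 : volume (Set.Icc (0:ℝ) 2) = 2 := by
    rw [Real.volume_Icc]; norm_num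
  have hbig : ∀ᶠ n in atTop, (3/2 : ℝ≥0∞) < volume (E n) := by
    refine hvol.eventually (eventually_gt_nhds ?_)
    rw [hIcc2]
    rw [ENNReal.div_lt_iff (by norm_num) (by norm_num)]
    norm_num
  obtain ⟨n, hn⟩ := hbig.exists
  refine ⟨U₀ + n + 2, ?_, ?_⟩
  · have : (0:ℝ) ≤ (n:ℝ) := n.cast_nonneg
    linarith
  intro u hu v hv
  set B : Set ℝ := (fun s => s + v) ⁻¹' (E n) with hB
  have hBvol : volume B = volume (E n) := measure_preimage_add_right volume v (E n)
  have hAsub : E n ⊆ Set.Icc (-1:ℝ) 2 := fun s hs => ⟨by linarith [hs.1.1], hs.1.2⟩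
  have hBsub : B ⊆ Set.Icc (-1:ℝ) 2 := by
    intro s hs
    have hsv : s + v ∈ E n := hs
    exact ⟨by linarith [hsv.1.1, hv.2], by linarith [hsv.1.2, hv.1]⟩
  have hABne : (E n ∩ B).Nonempty := by
    by_contra hcon
    rw [Set.not_nonempty_iff_eq_empty] at hcon
    have hdisj : Disjoint (E n) B := Set.disjoint_iff_inter_eq_empty.2 hcon
    have hBmeas : MeasurableSet B :=
      ((hEclosed n).preimage (continuous_add_right v)).measurableSet
    have hunion : volume (E n ∪ B) = volume (E n) + volume B := measure_union hdisj hBmeas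
    have h3 : volume (E n ∪ B) ≤ volume (Set.Icc (-1:ℝ) 2) :=
      measure_mono (Set.union_subset hAsub hBsub)
    have hIcc3 : volume (Set.Icc (-1:ℝ) 2) = 3 := by rw [Real.volume_Icc]; norm_num
    rw [hIcc3] at h3
    have hlt : (3:ℝ≥0∞) < volume (E n ∪ B) := by
      rw [hunion, hBvol]
      calc (3:ℝ≥0∞) = 3/2 + 3/2 := by norm_num
        _ < volume (E n) + volume (E n) := ENNReal.add_lt_add hn hn
    exact absurd h3 (not_le.2 hlt)
  obtain ⟨s, hsE, hsB⟩ := hABne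
  have hs2 := hsE.1.2
  have hs0 := hsE.1.1
  have hu' : U₀ + n ≤ u - s := by linarith
  have e1 := hsE.2 (u - s) hu'
  have e2 := (hsB : s + v ∈ E n).2 (u - s) hu'
  have r1 : u - s + s = u := by ring
  have r2 : u - s + (s + v) = u + v := by ring
  rw [r1] at e1
  rw [r2] at e2
  calc |h (u + v) - h u|
      ≤ |h (u + v) - h (u - s)| + |h (u - s) - h u| := abs_sub_le _ _ _
    _ = |h (u + v) - h (u - s)| + |h u - h (u - s)| := by rw [abs_sub_comm (h (u-s))]
    _ ≤ δ + δ := add_le_add e2 e1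
    _ = ε := by rw [hδdef]; ring

/-- Lemma 4.2 -/

theorem stmt_6
    (F f : ℝ → ℝ) (hF_mono : Monotone F) (hF_lt_one : ∀ x : ℝ, F x < 1)
    (hF_bot : Tendsto F atBot (nhds 0)) (hF_top : Tendsto F atTop (nhds 1))
    (x₀ : ℝ) (hf_pos : ∀ x : ℝ, x₀ ≤ x → 0 < f x)
    (hF_strict : StrictMonoOn F (Set.Ici x₀))
    (hF_deriv : ∀ x : ℝ, x₀ ≤ x → HasDerivAt F (f x) x)
    (w : ℝ → ℝ) (hw : ∀ x, w x = (1 - F x) / f x)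
    (w' : ℝ → ℝ) (x₁ : ℝ) (hw_deriv : ∀ x : ℝ, x₁ ≤ x → HasDerivAt w (w' x) x)
    (hw'_zero : Tendsto w' atTop (nhds 0))
    (μ : ℝ) (hμ : 0 < μ)
    (hw_rv : ∀ t : ℝ, 0 < t → Tendsto (fun x => w (t * x) / w x) atTop (nhds (t ^ (1 - μ))))
    (L : ℝ → ℝ) (hL_pos : ∀ x : ℝ, 0 < x → 0 < L x)
    (hL_slow : ∀ t : ℝ, 0 < t → Tendsto (fun x => L (t * x) / L x) atTop (nhds 1))
    (hwL : ∀ x : ℝ, 0 < x → w x = x ^ (1 - μ) * L x) :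
    limsup (fun x : ℝ => -(L x * Real.log (1 - F x)) / x ^ μ) atTop ≤ 1 / μ := by
  -- Basic positivity facts
  have hF0 : ∀ x, 0 ≤ F x := by
    intro x
    refine le_of_tendsto hF_bot ?_
    filter_upwards [eventually_le_atBot x] with y hy
    exact hF_mono hy
  have hFbar : ∀ x, 0 < 1 - F x := fun x => by linarith [hF_lt_one x]
  have hwpos : ∀ x : ℝ, 0 < x → 0 < w x := by
    intro x hx
    rw [hwL x hx]
    exact mul_pos (Real.rpow_pos_of_pos hx _) (hL_pos x hx)
  set X₀ : ℝ := max (max x₀ x₁) 1 with hX₀def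
  have hX₀pos : (0:ℝ) < X₀ := lt_of_lt_of_le one_pos (le_max_right _ _)
  have hX₀0 : x₀ ≤ X₀ := le_trans (le_max_left _ _) (le_max_left _ _)
  have hX₀1 : x₁ ≤ X₀ := le_trans (le_max_right x₀ x₁) (le_max_left _ _)
  set G : ℝ → ℝ := fun y => -Real.log (1 - F y) with hGdef
  have hGnn : ∀ y, 0 ≤ G y := by
    intro y
    have : Real.log (1 - F y) ≤ 0 :=
      Real.log_nonpos (by linarith [hF0 y, hF_lt_one y]) (by linarith [hF0 y])
    simp only [hGdef]
    linarith
  have hGderiv : ∀ s, x₀ ≤ s → HasDerivAt G (1 / w s) s := by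
    intro s hs
    have h1 : HasDerivAt (fun y => 1 - F y) (-f s) s := by
      exact ((hasDerivAt_const s (1:ℝ)).sub (hF_deriv s hs)).congr_deriv (by ring)
    have h2 : HasDerivAt (fun y => Real.log (1 - F y)) (-f s / (1 - F s)) s :=
      h1.log (ne_of_gt (hFbar s))
    have h3 := h2.neg
    have he : -(-f s / (1 - F s)) = 1 / w s := by
      rw [hw s, one_div_div]
      ring
    rwa [he] at h3
  have hwcont : ∀ s, x₁ ≤ s → ContinuousAt w s := fun s hs => (hw_deriv s hs).continuousAt
  -- the additive version of w on log scale
  set ph : ℝ → ℝ := fun u => Real.log (w (Real.exp u)) + (μ - 1) * u with hphdef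
  set U₀ : ℝ := Real.log X₀ with hU₀def
  have hcont : ∀ u, U₀ ≤ u → ContinuousAt ph u := by
    intro u hu
    have hx : X₀ ≤ Real.exp u := by
      calc X₀ = Real.exp (Real.log X₀) := (Real.exp_log hX₀pos).symm
        _ ≤ Real.exp u := Real.exp_le_exp.2 hu
    have h1 : ContinuousAt (fun u : ℝ => w (Real.exp u)) u :=
      (hwcont _ (le_trans hX₀1 hx)).comp Real.continuous_exp.continuousAt
    have h2 : ContinuousAt (fun u : ℝ => Real.log (w (Real.exp u))) u := by
      exact ContinuousAt.comp (x := u) (g := Real.log)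
        (Real.continuousAt_log (ne_of_gt (hwpos _ (Real.exp_pos u)))) h1
    exact h2.add ((continuous_const.mul continuous_id).continuousAt)
  have hpt : ∀ v : ℝ, 0 ≤ v → Tendsto (fun u => ph (u + v) - ph u) atTop (nhds 0) := by
    intro v hv
    set t := Real.exp v with htdef
    have htpos : 0 < t := Real.exp_pos v
    have h1 : Tendsto (fun u => w (t * Real.exp u) / w (Real.exp u)) atTop
        (nhds (t ^ (1 - μ))) := (hw_rv t htpos).comp Real.tendsto_exp_atTop
    have hrp : (0:ℝ) < t ^ (1 - μ) := Real.rpow_pos_of_pos htpos _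
    have h2 : Tendsto (fun u => Real.log (w (t * Real.exp u) / w (Real.exp u))) atTop
        (nhds (Real.log (t ^ (1 - μ)))) :=
      (Real.continuousAt_log (ne_of_gt hrp)).tendsto.comp h1
    have hlog : Real.log (t ^ (1 - μ)) = (1 - μ) * v := by
      rw [Real.log_rpow htpos, Real.log_exp]
    have heq : ∀ u : ℝ, ph (u + v) - ph u
        = Real.log (w (t * Real.exp u) / w (Real.exp u)) + (μ - 1) * v := by
      intro u
      have e1 : Real.exp (u + v) = t * Real.exp u := by rw [Real.exp_add]; ring
      have e2 : Real.log (w (t * Real.exp u) / w (Real.exp u))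
          = Real.log (w (t * Real.exp u)) - Real.log (w (Real.exp u)) :=
        Real.log_div (ne_of_gt (hwpos _ (mul_pos htpos (Real.exp_pos u))))
          (ne_of_gt (hwpos _ (Real.exp_pos u)))
      simp only [hphdef]
      rw [e1, e2]
      ring
    have h3 : Tendsto (fun u => ph (u + v) - ph u) atTop (nhds ((1 - μ) * v + (μ - 1) * v)) := by
      have h4 := h2.add_const ((μ - 1) * v)
      rw [hlog] at h4
      exact Tendsto.congr (fun u => (heq u).symm) h4
    have : (1 - μ) * v + (μ - 1) * v = 0 := by ring
    rwa [this] at h3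
  -- the main eventual bound
  have main : ∀ ε₀ : ℝ, 0 < ε₀ → ∀ᶠ x in atTop,
      -(L x * Real.log (1 - F x)) / x ^ μ ≤ 1 / μ + ε₀ := by
    intro ε₀ hε₀
    -- choose ε
    obtain ⟨ε, hεpos, hεμ, hεq⟩ : ∃ ε : ℝ, 0 < ε ∧ ε < μ ∧
        Real.exp ε / (μ - ε) < 1 / μ + ε₀ / 2 := by
      have hq : Tendsto (fun e : ℝ => Real.exp e / (μ - e)) (nhds 0) (nhds (1 / μ)) := by
        have h1 : ContinuousAt (fun e : ℝ => Real.exp e / (μ - e)) 0 := by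
          refine ContinuousAt.div Real.continuous_exp.continuousAt
            ((continuous_const.sub continuous_id).continuousAt) ?_
          simpa using ne_of_gt hμ
        have h2 := h1.tendsto
        simpa [Real.exp_zero] using h2
      have e1 : ∀ᶠ e in nhds (0:ℝ), Real.exp e / (μ - e) < 1 / μ + ε₀ / 2 :=
        hq.eventually (eventually_lt_nhds (by linarith))
      have e2 : ∀ᶠ e in nhds (0:ℝ), e < μ := eventually_lt_nhds hμ
      have e3 := ((e1.and e2).filter_mono (nhdsWithin_le_nhds (s := Set.Ioi (0:ℝ))))
      have e4 : ∀ᶠ e in nhdsWithin (0:ℝ) (Set.Ioi 0), e ∈ Set.Ioi (0:ℝ) :=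
        eventually_mem_nhdsWithin
      obtain ⟨ε, hε1, hε2⟩ := (e3.and e4).exists
      exact ⟨ε, hε2, hε1.2, hε1.1⟩
    obtain ⟨N, hNU₀, hN⟩ := uct_aux ph U₀ hcont hpt ε hεpos
    have hchain := chain_aux ph N ε hεpos.le hN
    set N' : ℝ := max N (Real.log X₀) with hN'def
    set X : ℝ := Real.exp N' with hXdef
    have hXX₀ : X₀ ≤ X := by
      rw [hXdef, ← Real.exp_log hX₀pos]
      exact Real.exp_le_exp.2 (le_max_right _ _)
    have hXpos : 0 < X := Real.exp_pos _
    have hμε : (0:ℝ) < μ - ε := by linarith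
    -- Potter-type bound, additive form
    have potter : ∀ s x : ℝ, X ≤ s → s ≤ x →
        Real.log (w x) - Real.log (w s) ≤ (1 - μ + ε) * (Real.log x - Real.log s) + ε := by
      intro s x hXs hsx
      have hspos : 0 < s := lt_of_lt_of_le hXpos hXs
      have hxpos : 0 < x := lt_of_lt_of_le hspos hsx
      have hlogs : N ≤ Real.log s := by
        have h5 : N' ≤ Real.log s := by
          rw [← Real.log_exp N']
          exact (Real.log_le_log_iff (Real.exp_pos _) hspos).2 hXs
        exact le_trans (le_max_left _ _) h5
      have hv : 0 ≤ Real.log x - Real.log s := by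
        have := (Real.log_le_log_iff hspos hxpos).2 hsx
        linarith
      have hc := hchain (Real.log s) hlogs (Real.log x - Real.log s) hv
      have he1 : Real.log s + (Real.log x - Real.log s) = Real.log x := by ring
      rw [he1] at hc
      have he2 : ph (Real.log x) - ph (Real.log s)
          = Real.log (w x) - Real.log (w s) + (μ - 1) * (Real.log x - Real.log s) := by
        simp only [hphdef]
        rw [Real.exp_log hxpos, Real.exp_log hspos]
        ring
      rw [he2] at hc
      have habs := (abs_le.1 hc).2
      nlinarith [habs]
    -- Potter-type bound, multiplicative form
    have potterw : ∀ s x : ℝ, X ≤ s → s ≤ x →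
        w x ≤ w s * Real.exp ε * (x ^ (1 - μ + ε) * s ^ (-(1 - μ + ε))) := by
      intro s x hXs hsx
      have hspos : 0 < s := lt_of_lt_of_le hXpos hXs
      have hxpos : 0 < x := lt_of_lt_of_le hspos hsx
      have hws := hwpos s hspos
      have hwx := hwpos x hxpos
      have h1 := potter s x hXs hsx
      have h2 : w x / w s ≤ Real.exp ((1 - μ + ε) * (Real.log x - Real.log s) + ε) := by
        have h2a : w x / w s = Real.exp (Real.log (w x) - Real.log (w s)) := by
          rw [Real.exp_sub, Real.exp_log hwx, Real.exp_log hws]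
        rw [h2a]
        exact Real.exp_le_exp.2 h1
      have h4 : Real.exp ((1 - μ + ε) * (Real.log x - Real.log s) + ε)
          = Real.exp ε * (x ^ (1 - μ + ε) * s ^ (-(1 - μ + ε))) := by
        rw [Real.rpow_def_of_pos hxpos, Real.rpow_def_of_pos hspos, ← Real.exp_add, ← Real.exp_add]
        congr 1
        ring
      calc w x = (w x / w s) * w s := by field_simp
        _ ≤ Real.exp ((1 - μ + ε) * (Real.log x - Real.log s) + ε) * w s :=
            mul_le_mul_of_nonneg_right h2 hws.le
        _ = w s * Real.exp ε * (x ^ (1 - μ + ε) * s ^ (-(1 - μ + ε))) := by rw [h4]; ring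
    -- pointwise bound on 1 / w
    have bound1 : ∀ s x : ℝ, X ≤ s → s ≤ x →
        1 / w s ≤ (Real.exp ε * x ^ (1 - μ + ε) / w x) * s ^ (μ - 1 - ε) := by
      intro s x hXs hsx
      have hspos : 0 < s := lt_of_lt_of_le hXpos hXs
      have hxpos : 0 < x := lt_of_lt_of_le hspos hsx
      have hws := hwpos s hspos
      have hwx := hwpos x hxpos
      have h1 := potterw s x hXs hsx
      have hform : (Real.exp ε * x ^ (1 - μ + ε) / w x) * s ^ (μ - 1 - ε)
          = (Real.exp ε * (x ^ (1 - μ + ε) * s ^ (-(1 - μ + ε)))) / w x := by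
        rw [show μ - 1 - ε = -(1 - μ + ε) by ring]
        ring
      rw [hform, div_le_div_iff₀ hws hwx]
      calc 1 * w x = w x := one_mul _
        _ ≤ w s * Real.exp ε * (x ^ (1 - μ + ε) * s ^ (-(1 - μ + ε))) := h1
        _ = Real.exp ε * (x ^ (1 - μ + ε) * s ^ (-(1 - μ + ε))) * w s := by ring
    -- integral bound for G
    have hGbound : ∀ x : ℝ, X ≤ x →
        G x ≤ G X + (Real.exp ε * x ^ (1 - μ + ε) / w x) * (x ^ (μ - ε) / (μ - ε)) := by
      intro x hx
      have hxpos : 0 < x := lt_of_lt_of_le hXpos hx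
      have hcont1 : ContinuousOn (fun s => 1 / w s) (Set.uIcc X x) := by
        rw [Set.uIcc_of_le hx]
        intro s hs
        have hs1 : x₁ ≤ s := le_trans (le_trans hX₀1 hXX₀) hs.1
        have hspos : 0 < s := lt_of_lt_of_le hXpos hs.1
        exact (continuousAt_const.div (hwcont s hs1) (ne_of_gt (hwpos s hspos))).continuousWithinAt
      have hftc : ∫ s in X..x, (1 / w s) = G x - G X := by
        apply intervalIntegral.integral_eq_sub_of_hasDerivAt
        · intro s hs
          rw [Set.uIcc_of_le hx] at hs
          exact hGderiv s (le_trans hX₀0 (le_trans hXX₀ hs.1))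
        · exact hcont1.intervalIntegrable
      have hint2 : ContinuousOn
          (fun s : ℝ => (Real.exp ε * x ^ (1 - μ + ε) / w x) * s ^ (μ - 1 - ε))
          (Set.uIcc X x) := by
        rw [Set.uIcc_of_le hx]
        intro s hs
        have hspos : 0 < s := lt_of_lt_of_le hXpos hs.1
        exact (continuousAt_const.mul
          (Real.continuousAt_rpow_const s _ (Or.inl (ne_of_gt hspos)))).continuousWithinAt
      have hmono : ∫ s in X..x, (1 / w s)
          ≤ ∫ s in X..x, (Real.exp ε * x ^ (1 - μ + ε) / w x) * s ^ (μ - 1 - ε) := by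
        refine intervalIntegral.integral_mono_on hx hcont1.intervalIntegrable
          hint2.intervalIntegrable ?_
        intro s hs
        exact bound1 s x hs.1 hs.2
      have hderiv2 : ∀ s ∈ Set.uIcc X x,
          HasDerivAt (fun y : ℝ => (Real.exp ε * x ^ (1 - μ + ε) / w x) * (y ^ (μ - ε) / (μ - ε)))
            ((Real.exp ε * x ^ (1 - μ + ε) / w x) * s ^ (μ - 1 - ε)) s := by
        intro s hs
        rw [Set.uIcc_of_le hx] at hs
        have hspos : 0 < s := lt_of_lt_of_le hXpos hs.1
        have h1 : HasDerivAt (fun y : ℝ => y ^ (μ - ε)) ((μ - ε) * s ^ (μ - ε - 1)) s :=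
          Real.hasDerivAt_rpow_const (Or.inl (ne_of_gt hspos))
        have h2 := (h1.div_const (μ - ε)).const_mul (Real.exp ε * x ^ (1 - μ + ε) / w x)
        have he : (Real.exp ε * x ^ (1 - μ + ε) / w x) * ((μ - ε) * s ^ (μ - ε - 1) / (μ - ε))
            = (Real.exp ε * x ^ (1 - μ + ε) / w x) * s ^ (μ - 1 - ε) := by
          rw [show μ - ε - 1 = μ - 1 - ε by ring]
          congr 1
          rw [mul_comm, mul_div_assoc, div_self (ne_of_gt hμε), mul_one]
        rwa [he] at h2
      have hftc2 : ∫ s in X..x, (Real.exp ε * x ^ (1 - μ + ε) / w x) * s ^ (μ - 1 - ε)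
          = (Real.exp ε * x ^ (1 - μ + ε) / w x) * (x ^ (μ - ε) / (μ - ε))
            - (Real.exp ε * x ^ (1 - μ + ε) / w x) * (X ^ (μ - ε) / (μ - ε)) :=
        intervalIntegral.integral_eq_sub_of_hasDerivAt hderiv2 hint2.intervalIntegrable
      have hC0 : 0 ≤ Real.exp ε * x ^ (1 - μ + ε) / w x :=
        div_nonneg (mul_nonneg (Real.exp_pos ε).le (Real.rpow_pos_of_pos hxpos _).le)
          (hwpos x hxpos).le
      have hX0' : 0 ≤ X ^ (μ - ε) / (μ - ε) :=
        div_nonneg (Real.rpow_pos_of_pos hXpos _).le hμε.le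
      have hkey : G x - G X ≤ (Real.exp ε * x ^ (1 - μ + ε) / w x) * (x ^ (μ - ε) / (μ - ε))
          - (Real.exp ε * x ^ (1 - μ + ε) / w x) * (X ^ (μ - ε) / (μ - ε)) := by
        calc G x - G X = ∫ s in X..x, (1 / w s) := hftc.symm
          _ ≤ _ := hmono
          _ = _ := hftc2
      nlinarith [mul_nonneg hC0 hX0']
    -- growth bound on w itself
    set K : ℝ := w X * Real.exp ε * X ^ (-(1 - μ + ε)) with hKdef
    have hwXpos := hwpos X hXpos
    have hKpos : 0 < K := by positivity
    have hwx_bound : ∀ x : ℝ, X ≤ x → w x ≤ K * x ^ (1 - μ + ε) := by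
      intro x hx
      calc w x ≤ w X * Real.exp ε * (x ^ (1 - μ + ε) * X ^ (-(1 - μ + ε))) :=
            potterw X x le_rfl hx
        _ = K * x ^ (1 - μ + ε) := by rw [hKdef]; ring
    -- the first term tends to 0
    have hfirst0 : Tendsto (fun x : ℝ => K * x ^ (-(μ - ε)) * G X) atTop (nhds 0) := by
      have h0 : Tendsto (fun x : ℝ => x ^ (-(μ - ε))) atTop (nhds 0) :=
        tendsto_rpow_neg_atTop hμε
      have h1 := (h0.const_mul K).mul_const (G X)
      simpa using h1
    have hsm : ∀ᶠ x : ℝ in atTop, K * x ^ (-(μ - ε)) * G X < ε₀ / 2 :=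
      hfirst0.eventually (eventually_lt_nhds (by linarith))
    filter_upwards [eventually_ge_atTop (max X 1), hsm] with x hx hsmx
    have hxX : X ≤ x := le_trans (le_max_left _ _) hx
    have hx1 : (1:ℝ) ≤ x := le_trans (le_max_right _ _) hx
    have hxpos : (0:ℝ) < x := lt_of_lt_of_le one_pos hx1
    have hwx := hwpos x hxpos
    have hxμ : (0:ℝ) < x ^ μ := Real.rpow_pos_of_pos hxpos μ
    have hrw : -(L x * Real.log (1 - F x)) = L x * G x := by simp only [hGdef]; ring
    rw [hrw]
    have hGb := hGbound x hxX
    have hLx := hL_pos x hxpos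
    -- rpow identities
    have e1 : x ^ (1 - μ + ε) * x ^ (μ - ε) = x := by
      rw [← Real.rpow_add hxpos, show (1 - μ + ε) + (μ - ε) = 1 by ring, Real.rpow_one]
    have e2 : w x * x ^ (μ - 1) = L x := by
      rw [hwL x hxpos, mul_right_comm, ← Real.rpow_add hxpos,
        show (1 - μ) + (μ - 1) = 0 by ring, Real.rpow_zero, one_mul]
    have e3 : x ^ (μ - 1) * x = x ^ μ := by
      rw [show μ = (μ - 1) + 1 by ring, Real.rpow_add hxpos, Real.rpow_one,
        show μ - 1 + 1 - 1 = μ - 1 by ring]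
    -- second term is a constant
    have hsec : L x * ((Real.exp ε * x ^ (1 - μ + ε) / w x) * (x ^ (μ - ε) / (μ - ε))) / x ^ μ
        = Real.exp ε / (μ - ε) := by
      have h0 : L x * ((Real.exp ε * x ^ (1 - μ + ε) / w x) * (x ^ (μ - ε) / (μ - ε))) / x ^ μ
          = (Real.exp ε / (μ - ε)) * ((x ^ (1 - μ + ε) * x ^ (μ - ε)) * (L x / (w x * x ^ μ))) := by
        ring
      rw [h0, e1]
      have e4 : x * (L x / (w x * x ^ μ)) = 1 := by
        rw [← e2, mul_div_assoc']
        rw [show x * (w x * x ^ (μ - 1)) = w x * (x ^ (μ - 1) * x) by ring, e3]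
        exact div_self (ne_of_gt (mul_pos hwx hxμ))
      rw [e4, mul_one]
    -- first term bound
    have hq1 : L x / x ^ μ = w x / x := by
      rw [← e2, div_eq_div_iff hxμ.ne' hxpos.ne', mul_assoc, e3]
    have e5 : x ^ (1 - μ + ε) / x = x ^ (-(μ - ε)) := by
      rw [show -(μ - ε) = (1 - μ + ε) - 1 by ring, Real.rpow_sub hxpos, Real.rpow_one]
    have hwdivx : w x / x ≤ K * x ^ (-(μ - ε)) := by
      rw [← e5]
      calc w x / x ≤ K * x ^ (1 - μ + ε) / x := by
            gcongr
            exact hwx_bound x hxX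
        _ = K * (x ^ (1 - μ + ε) / x) := by ring
    have hfb : L x * G X / x ^ μ ≤ K * x ^ (-(μ - ε)) * G X := by
      have h1 : L x * G X / x ^ μ = (w x / x) * G X := by
        rw [show L x * G X / x ^ μ = (L x / x ^ μ) * G X by ring, hq1]
      rw [h1]
      exact mul_le_mul_of_nonneg_right hwdivx (hGnn X)
    -- put everything together
    have step1 : L x * G x / x ^ μ
        ≤ L x * (G X + (Real.exp ε * x ^ (1 - μ + ε) / w x) * (x ^ (μ - ε) / (μ - ε))) / x ^ μ := by
      gcongr
    calc L x * G x / x ^ μ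
        ≤ L x * (G X + (Real.exp ε * x ^ (1 - μ + ε) / w x) * (x ^ (μ - ε) / (μ - ε))) / x ^ μ :=
          step1
      _ = L x * G X / x ^ μ
          + L x * ((Real.exp ε * x ^ (1 - μ + ε) / w x) * (x ^ (μ - ε) / (μ - ε))) / x ^ μ := by
          ring
      _ ≤ K * x ^ (-(μ - ε)) * G X + Real.exp ε / (μ - ε) := by
          rw [hsec]
          exact add_le_add_left hfb _
      _ ≤ ε₀ / 2 + (1 / μ + ε₀ / 2) := add_le_add hsmx.le hεq.le
      _ = 1 / μ + ε₀ := by ring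

  -- conclusion via limsup
  have hcob : IsCoboundedUnder (· ≤ ·) atTop
      (fun x : ℝ => -(L x * Real.log (1 - F x)) / x ^ μ) := by
    refine isCoboundedUnder_le_of_eventually_le atTop (x := 0) ?_
    filter_upwards [eventually_ge_atTop (max X₀ 1)] with x hx
    have hxpos : (0:ℝ) < x := lt_of_lt_of_le one_pos (le_trans (le_max_right _ _) hx)
    have h1 : -(L x * Real.log (1 - F x)) = L x * G x := by
      simp only [hGdef]
      ring
    rw [h1]
    have := hGnn x
    have := hL_pos x hxpos
    positivity
  by_contra hcon
  push_neg at hcon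
  have hfin : ∀ ε₀ : ℝ, 0 < ε₀ →
      limsup (fun x : ℝ => -(L x * Real.log (1 - F x)) / x ^ μ) atTop ≤ 1 / μ + ε₀ :=
    fun ε₀ hε₀ => limsup_le_of_le hcob (main ε₀ hε₀)
  have h2 := hfin ((limsup (fun x : ℝ => -(L x * Real.log (1 - F x)) / x ^ μ) atTop - 1 / μ) / 2)
    (by linarith)
  linarith
end

section
/- Under the stated assumptions on F, f, w, μ and L, if additionally lim_{x→∞} L(x) = L(∞) for some L(∞) ∈ (0,∞), then lim_{x→∞} [ −L(x)·log(1−F(x)) / x^μ ] = 1/μ. -/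
open Filter MeasureTheory Topology
open scoped ENNReal

/-- Derivative comparison: if `H' ≤ G'` on `[a, ∞)`, then increments compare. -/
lemma deriv_compare_aux {G H G' H' : ℝ → ℝ} {a : ℝ}
    (hG : ∀ x, a ≤ x → HasDerivAt G (G' x) x)
    (hH : ∀ x, a ≤ x → HasDerivAt H (H' x) x)
    (hle : ∀ x, a ≤ x → H' x ≤ G' x) :
    ∀ x, a ≤ x → H x - H a ≤ G x - G a := by
  have hmono : MonotoneOn (fun x => G x - H x) (Set.Ici a) := by
    apply monotoneOn_of_hasDerivWithinAt_nonneg (convex_Ici a)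
      (f' := fun x => G' x - H' x)
    · intro x hx
      exact (((hG x hx).sub (hH x hx)).continuousAt).continuousWithinAt
    · intro x hx
      rw [interior_Ici] at hx
      exact (((hG x hx.le).sub (hH x hx.le))).hasDerivWithinAt
    · intro x hx
      rw [interior_Ici] at hx
      linarith [hle x hx.le]
  intro x hx
  have := hmono Set.self_mem_Ici hx hx
  simp only at this
  linarith

set_option maxHeartbeats 1000000 in
/-- Remark 4.3: if moreover `L x → L∞ ∈ (0, ∞)` as `x → ∞`, then
`(- L x * log (1 - F x)) / x ^ μ → 1 / μ`. -/
theorem stmt_7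
    (F f : ℝ → ℝ) (hF_mono : Monotone F) (hF_lt_one : ∀ x : ℝ, F x < 1)
    (hF_bot : Tendsto F atBot (nhds 0)) (hF_top : Tendsto F atTop (nhds 1))
    (x₀ : ℝ) (hf_pos : ∀ x : ℝ, x₀ ≤ x → 0 < f x)
    (hF_strict : StrictMonoOn F (Set.Ici x₀))
    (hF_deriv : ∀ x : ℝ, x₀ ≤ x → HasDerivAt F (f x) x)
    (w : ℝ → ℝ) (hw : ∀ x, w x = (1 - F x) / f x)
    (w' : ℝ → ℝ) (x₁ : ℝ) (hw_deriv : ∀ x : ℝ, x₁ ≤ x → HasDerivAt w (w' x) x)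
    (hw'_zero : Tendsto w' atTop (nhds 0))
    (μ : ℝ) (hμ : 0 < μ)
    (hw_rv : ∀ t : ℝ, 0 < t → Tendsto (fun x => w (t * x) / w x) atTop (nhds (t ^ (1 - μ))))
    (L : ℝ → ℝ) (hL_pos : ∀ x : ℝ, 0 < x → 0 < L x)
    (hL_slow : ∀ t : ℝ, 0 < t → Tendsto (fun x => L (t * x) / L x) atTop (nhds 1))
    (hwL : ∀ x : ℝ, 0 < x → w x = x ^ (1 - μ) * L x)
    (Linf : ℝ) (hLinf : 0 < Linf) (hL_lim : Tendsto L atTop (nhds Linf)) :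
    Tendsto (fun x : ℝ => -(L x * Real.log (1 - F x)) / x ^ μ) atTop (nhds (1 / μ)) := by
  classical
  set G : ℝ → ℝ := fun x => -Real.log (1 - F x) with hGdef
  have hFx : ∀ x, 0 < 1 - F x := fun x => by linarith [hF_lt_one x]
  set b : ℝ := max x₀ 1 with hbdef
  have hb1 : (1:ℝ) ≤ b := le_max_right _ _
  have hb0 : x₀ ≤ b := le_max_left _ _
  -- derivative of G on [b, ∞)
  have hG : ∀ x, b ≤ x → HasDerivAt G (x ^ (μ - 1) / L x) x := by
    intro x hx
    have hx0 : (0:ℝ) < x := lt_of_lt_of_le one_pos (hb1.trans hx)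
    have hxx0 : x₀ ≤ x := hb0.trans hx
    have hfx := hf_pos x hxx0
    have h1 : HasDerivAt (fun y => 1 - F y) (-f x) x := (hF_deriv x hxx0).const_sub 1
    have h2 : HasDerivAt (fun y => Real.log (1 - F y)) (-f x / (1 - F x)) x :=
      h1.log (hFx x).ne'
    have h3 : HasDerivAt G (f x / (1 - F x)) x := by
      have : HasDerivAt (fun y => -Real.log (1 - F y)) (-(-f x / (1 - F x))) x := h2.neg
      convert this using 1
      ring
    have hwx : w x = x ^ (1 - μ) * L x := hwL x hx0
    have hw2 : w x = (1 - F x) / f x := hw x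
    have hLx : 0 < L x := hL_pos x hx0
    have hxp : (0:ℝ) < x ^ (1 - μ) := Real.rpow_pos_of_pos hx0 _
    have hinv : (x ^ (1 - μ))⁻¹ = x ^ (μ - 1) := by
      rw [← Real.rpow_neg hx0.le]
      norm_num
    have key : f x / (1 - F x) = x ^ (μ - 1) / L x := by
      have h4 : f x / (1 - F x) = (w x)⁻¹ := by
        rw [hw2, inv_div]
      rw [h4, hwx, mul_inv, hinv, div_eq_mul_inv]
    rw [← key]
    exact h3
  -- the main squeeze: G x / x ^ μ → (μ * Linf)⁻¹
  have hQ : Tendsto (fun x => G x / x ^ μ) atTop (nhds ((μ * Linf)⁻¹)) := by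
    rw [Metric.tendsto_atTop]
    intro ε hε
    set η : ℝ := min (Linf / 2) (ε * μ * Linf ^ 2 / 8) with hηdef
    have hη0 : 0 < η := lt_min (by positivity) (by positivity)
    have hηL : η ≤ Linf / 2 := min_le_left _ _
    have hηε : η ≤ ε * μ * Linf ^ 2 / 8 := min_le_right _ _
    have hLmη : 0 < Linf - η := by linarith
    have hLpη : 0 < Linf + η := by linarith
    obtain ⟨a₀, ha₀⟩ := Metric.tendsto_atTop.mp hL_lim η hη0
    set a : ℝ := max a₀ b with hadef
    have hab : b ≤ a := le_max_right _ _
    have ha1 : (1:ℝ) ≤ a := hb1.trans hab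
    have hLbnd : ∀ x, a ≤ x → Linf - η ≤ L x ∧ L x ≤ Linf + η := by
      intro x hx
      have := ha₀ x ((le_max_left _ _).trans hx)
      rw [Real.dist_eq, abs_lt] at this
      constructor <;> linarith [this.1, this.2]
    set cp : ℝ := (μ * (Linf + η))⁻¹ with hcp
    set cm : ℝ := (μ * (Linf - η))⁻¹ with hcm
    -- comparison functions
    have hHp : ∀ x, a ≤ x → HasDerivAt (fun y => y ^ μ * cp) (μ * x ^ (μ - 1) * cp) x := by
      intro x hx
      have hx0 : (0:ℝ) < x := lt_of_lt_of_le one_pos (ha1.trans hx)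
      exact (Real.hasDerivAt_rpow_const (Or.inl hx0.ne')).mul_const cp
    have hHm : ∀ x, a ≤ x → HasDerivAt (fun y => y ^ μ * cm) (μ * x ^ (μ - 1) * cm) x := by
      intro x hx
      have hx0 : (0:ℝ) < x := lt_of_lt_of_le one_pos (ha1.trans hx)
      exact (Real.hasDerivAt_rpow_const (Or.inl hx0.ne')).mul_const cm
    have hGa : ∀ x, a ≤ x → HasDerivAt G (x ^ (μ - 1) / L x) x :=
      fun x hx => hG x (hab.trans hx)
    -- derivative inequalities
    have hle_low : ∀ x, a ≤ x → μ * x ^ (μ - 1) * cp ≤ x ^ (μ - 1) / L x := by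
      intro x hx
      have hx0 : (0:ℝ) < x := lt_of_lt_of_le one_pos (ha1.trans hx)
      have hp : (0:ℝ) < x ^ (μ - 1) := Real.rpow_pos_of_pos hx0 _
      have hLx : 0 < L x := hL_pos x hx0
      have hLup := (hLbnd x hx).2
      have h1 : μ * x ^ (μ - 1) * cp = x ^ (μ - 1) / (Linf + η) := by
        rw [hcp]
        field_simp
      rw [h1]
      exact div_le_div_of_nonneg_left hp.le hLx hLup
    have hle_up : ∀ x, a ≤ x → x ^ (μ - 1) / L x ≤ μ * x ^ (μ - 1) * cm := by
      intro x hx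
      have hx0 : (0:ℝ) < x := lt_of_lt_of_le one_pos (ha1.trans hx)
      have hp : (0:ℝ) < x ^ (μ - 1) := Real.rpow_pos_of_pos hx0 _
      have hLlow := (hLbnd x hx).1
      have h1 : μ * x ^ (μ - 1) * cm = x ^ (μ - 1) / (Linf - η) := by
        rw [hcm]
        field_simp
      rw [h1]
      exact div_le_div_of_nonneg_left hp.le hLmη hLlow
    have hcomp_low : ∀ x, a ≤ x → x ^ μ * cp - a ^ μ * cp ≤ G x - G a :=
      deriv_compare_aux hGa hHp hle_low
    have hcomp_up : ∀ x, a ≤ x → G x - G a ≤ x ^ μ * cm - a ^ μ * cm :=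
      deriv_compare_aux hHm hGa hle_up
    -- bounds on cp, cm in terms of ε
    have hc0 : (0:ℝ) < μ * Linf := by positivity
    have hcm_le : cm ≤ (μ * Linf)⁻¹ + ε / 4 := by
      have hd : (0:ℝ) < μ * (Linf - η) := by positivity
      have key : 1 ≤ ((μ * Linf)⁻¹ + ε / 4) * (μ * (Linf - η)) := by
        have e : ((μ * Linf)⁻¹ + ε / 4) * (μ * (Linf - η)) =
            1 - η / Linf + ε * μ * (Linf - η) / 4 := by
          field_simp
        rw [e]
        have h3 : Linf ^ 2 / 2 ≤ (Linf - η) * Linf := by nlinarith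
        have h5 : η / Linf ≤ ε * μ * (Linf - η) / 4 := by
          rw [div_le_iff₀ hLinf]
          nlinarith [mul_le_mul_of_nonneg_left h3 (by positivity : (0:ℝ) ≤ ε * μ)]
        linarith
      have : (1:ℝ) / (μ * (Linf - η)) ≤ (μ * Linf)⁻¹ + ε / 4 :=
        (div_le_iff₀ hd).mpr (by linarith [key])
      calc cm = 1 / (μ * (Linf - η)) := by rw [hcm, one_div]
        _ ≤ _ := this
    have hcp_ge : (μ * Linf)⁻¹ - ε / 4 ≤ cp := by
      have hd : (0:ℝ) < μ * (Linf + η) := by positivity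
      have key : ((μ * Linf)⁻¹ - ε / 4) * (μ * (Linf + η)) ≤ 1 := by
        have e : ((μ * Linf)⁻¹ - ε / 4) * (μ * (Linf + η)) =
            1 + η / Linf - ε * μ * (Linf + η) / 4 := by
          field_simp
        rw [e]
        have h3 : Linf ^ 2 / 2 ≤ (Linf + η) * Linf := by nlinarith
        have h5 : η / Linf ≤ ε * μ * (Linf + η) / 4 := by
          rw [div_le_iff₀ hLinf]
          nlinarith [mul_le_mul_of_nonneg_left h3 (by positivity : (0:ℝ) ≤ ε * μ)]
        linarith
      have : (μ * Linf)⁻¹ - ε / 4 ≤ 1 / (μ * (Linf + η)) :=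
        (le_div_iff₀ hd).mpr key
      calc (μ * Linf)⁻¹ - ε / 4 ≤ 1 / (μ * (Linf + η)) := this
        _ = cp := by rw [hcp, one_div]
    -- choose N so the constant term is small
    set C : ℝ := |G a - a ^ μ * cp| + |G a - a ^ μ * cm| + 1 with hCdef
    have hC1 : (1:ℝ) ≤ C := by
      have h1 := abs_nonneg (G a - a ^ μ * cp)
      have h2 := abs_nonneg (G a - a ^ μ * cm)
      rw [hCdef]; linarith
    obtain ⟨N, hN⟩ :=
      ((tendsto_rpow_atTop hμ).eventually_ge_atTop (2 * C / ε)).exists_forall_of_atTop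
    refine ⟨max a N, fun x hx => ?_⟩
    have hxa : a ≤ x := (le_max_left _ _).trans hx
    have hx0 : (0:ℝ) < x := lt_of_lt_of_le one_pos (ha1.trans hxa)
    have hP : (0:ℝ) < x ^ μ := Real.rpow_pos_of_pos hx0 _
    have hPbig : 2 * C / ε ≤ x ^ μ := hN x ((le_max_right _ _).trans hx)
    have hCP : C / x ^ μ ≤ ε / 2 := by
      rw [div_le_iff₀ hε] at hPbig
      rw [div_le_iff₀ hP]
      nlinarith
    have hD2 : G a - a ^ μ * cm ≤ C := by
      have h1 := le_abs_self (G a - a ^ μ * cm)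
      have h2 := abs_nonneg (G a - a ^ μ * cp)
      rw [hCdef]; linarith
    have hD1 : -C ≤ G a - a ^ μ * cp := by
      have h1 := neg_abs_le (G a - a ^ μ * cp)
      have h2 := abs_nonneg (G a - a ^ μ * cm)
      rw [hCdef]; linarith
    have hub : G x / x ^ μ ≤ cm + C / x ^ μ := by
      have h := hcomp_up x hxa
      have h2 : G x ≤ x ^ μ * cm + C := by linarith
      calc G x / x ^ μ ≤ (x ^ μ * cm + C) / x ^ μ := by
            exact (div_le_div_iff_of_pos_right hP).mpr h2
        _ = cm + C / x ^ μ := by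
            rw [add_div, mul_comm, mul_div_assoc, div_self hP.ne', mul_one]
    have hlb : cp - C / x ^ μ ≤ G x / x ^ μ := by
      have h := hcomp_low x hxa
      have h2 : x ^ μ * cp - C ≤ G x := by linarith
      calc cp - C / x ^ μ = (x ^ μ * cp - C) / x ^ μ := by
            rw [sub_div, mul_comm, mul_div_assoc, div_self hP.ne', mul_one]
        _ ≤ G x / x ^ μ := by
            exact (div_le_div_iff_of_pos_right hP).mpr h2
    rw [Real.dist_eq, abs_sub_lt_iff]
    constructor
    · linarith
    · linarith
  -- conclude
  have hmul : Tendsto (fun x => L x * (G x / x ^ μ)) atTop (nhds (Linf * (μ * Linf)⁻¹)) :=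
    hL_lim.mul hQ
  have heq : Linf * (μ * Linf)⁻¹ = 1 / μ := by
    field_simp
  have hfun : (fun x : ℝ => -(L x * Real.log (1 - F x)) / x ^ μ) =
      fun x => L x * (G x / x ^ μ) := by
    funext x
    simp only [hGdef]
    ring
  rw [hfun, ← heq]
  exact hmul
end

section
/- Under the stated assumptions on F, f, w, μ and L, with m_n := F^{-1}(1 − 1/n) (defined for n large enough) and h_n := m_n/w(m_n) = m_n^μ/L(m_n), one has h_n / (μ·log n) → 1 as n → ∞. -/
open Filter MeasureTheory Topology

lemma aux_cover {t X : ℝ} (ht : 1 < t) (hX : 0 < X) :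
    ∀ y ≥ X, ∃ (k : ℕ) (x : ℝ), x ∈ Set.Icc X (t * X) ∧ y = t ^ k * x := by
  intro y hy
  have ht0 : (0:ℝ) < t := lt_trans one_pos ht
  have hlt : 0 < Real.log t := Real.log_pos ht
  have hyX : 1 ≤ y / X := (one_le_div hX).2 hy
  have hy0 : 0 < y := lt_of_lt_of_le hX hy
  set k := ⌊Real.log (y / X) / Real.log t⌋₊ with hk
  have h1 : (k : ℝ) ≤ Real.log (y / X) / Real.log t :=
    Nat.floor_le (div_nonneg (Real.log_nonneg hyX) hlt.le)
  have h2 : Real.log (y / X) / Real.log t < k + 1 := Nat.lt_floor_add_one _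
  have h1' : (k : ℝ) * Real.log t ≤ Real.log (y / X) := by
    rw [← le_div_iff₀ hlt]; exact h1
  have h2' : Real.log (y / X) < ((k : ℝ) + 1) * Real.log t := by
    rw [← div_lt_iff₀ hlt]; exact h2
  have htk : (0:ℝ) < t ^ k := pow_pos ht0 k
  have hlow : t ^ k ≤ y / X := by
    have := Real.exp_le_exp.2 h1'
    rwa [Real.exp_nat_mul, Real.exp_log ht0, Real.exp_log (by positivity : 0 < y / X)] at this
  have hhigh : y / X ≤ t ^ (k + 1) := by
    have := Real.exp_le_exp.2 h2'.le
    have h3 : Real.exp (((k:ℝ) + 1) * Real.log t) = t ^ (k+1) := by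
      have h4 : ((k:ℝ) + 1) = ((k+1 : ℕ) : ℝ) := by push_cast; ring
      rw [h4, Real.exp_nat_mul, Real.exp_log ht0]
    rwa [Real.exp_log (by positivity : 0 < y / X), h3] at this
  refine ⟨k, y / t ^ k, ⟨?_, ?_⟩, ?_⟩
  · rw [le_div_iff₀ htk]
    rw [le_div_iff₀ hX] at hlow
    linarith [hlow]
  · rw [div_le_iff₀ htk]
    calc y = (y / X) * X := by field_simp
      _ ≤ t ^ (k+1) * X := by exact mul_le_mul_of_nonneg_right hhigh hX.le
      _ = t * X * t ^ k := by ring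
  · field_simp

lemma aux_bdd {A : ℝ → ℝ} {t X q c M₀ : ℝ} (ht : 1 < t) (hX : 0 < X)
    (hq0 : 0 ≤ q) (hq : q < 1)
    (hA0 : ∀ x ≥ X, 0 ≤ A x)
    (hrec : ∀ x ≥ X, A (t * x) ≤ q * A x + c)
    (hM₀ : ∀ x ∈ Set.Icc X (t * X), A x ≤ M₀) :
    ∃ M : ℝ, ∀ y ≥ X, A y ≤ M := by
  have ht0 : (0:ℝ) < t := lt_trans one_pos ht
  set M := max M₀ (c / (1 - q)) with hM
  have hM1 : M₀ ≤ M := le_max_left _ _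
  have hM2 : c / (1-q) ≤ M := le_max_right _ _
  have hqM : q * M + c ≤ M := by
    have h1q : 0 < 1 - q := by linarith
    rw [div_le_iff₀ h1q] at hM2
    nlinarith
  have key : ∀ k : ℕ, ∀ x ∈ Set.Icc X (t * X), A (t ^ k * x) ≤ M := by
    intro k
    induction k with
    | zero => intro x hx; simpa using le_trans (hM₀ x hx) hM1
    | succ k ih =>
      intro x hx
      have hxX : X ≤ x := hx.1
      have htkx : X ≤ t ^ k * x := by
        nlinarith [pow_pos ht0 k, one_le_pow₀ (le_of_lt ht) (n:=k)]
      have h1 : A (t * (t ^ k * x)) ≤ q * A (t ^ k * x) + c := hrec _ htkx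
      have h2 : t ^ (k + 1) * x = t * (t ^ k * x) := by ring
      rw [h2]
      calc A (t * (t ^ k * x)) ≤ q * A (t ^ k * x) + c := h1
        _ ≤ q * M + c := by nlinarith [ih x hx]
        _ ≤ M := hqM
  refine ⟨M, fun y hy => ?_⟩
  obtain ⟨k, x, hx, rfl⟩ := aux_cover ht hX y hy
  exact key k x hx

lemma aux_baire (C : ℕ → Set ℝ) (hC : ∀ n, IsClosed (C n))
    (hcov : Set.Icc (1:ℝ) 2 ⊆ ⋃ n, C n) :
    ∃ (N : ℕ) (a b : ℝ), a < b ∧ Set.Icc a b ⊆ Set.Icc 1 2 ∧ Set.Icc a b ⊆ C N := by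
  haveI : CompleteSpace (Set.Icc (1:ℝ) 2) := (isClosed_Icc).completeSpace_coe
  set K := Set.Icc (1:ℝ) 2 with hK
  haveI : Nonempty K := ⟨⟨1, by rw [hK]; norm_num⟩⟩
  set g : ℕ → Set K := fun n => Subtype.val ⁻¹' (C n) with hg
  have hgc : ∀ n, IsClosed (g n) := fun n => (hC n).preimage continuous_subtype_val
  have hgu : ⋃ n, g n = Set.univ := by
    ext p
    simp only [Set.mem_iUnion, Set.mem_univ, iff_true, Set.mem_preimage]
    have := hcov p.2
    obtain ⟨i, hi⟩ := Set.mem_iUnion.1 this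
    exact ⟨i, hi⟩
  obtain ⟨N, p, hp⟩ := nonempty_interior_of_iUnion_of_closed hgc hgu
  obtain ⟨δ, hδ, hball⟩ := Metric.isOpen_iff.1 isOpen_interior p hp
  set c := (p : ℝ) with hc
  have hc1 : 1 ≤ c := p.2.1
  have hc2 : c ≤ 2 := p.2.2
  refine ⟨N, max 1 (c - δ/2), min 2 (c + δ/2), ?_, ?_, ?_⟩
  · apply max_lt <;> [skip; skip] <;> apply lt_min <;> linarith
  · intro s hs
    exact ⟨le_trans (le_max_left _ _) hs.1, le_trans hs.2 (min_le_left _ _)⟩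
  · intro s hs
    have hs12 : s ∈ K := ⟨le_trans (le_max_left _ _) hs.1, le_trans hs.2 (min_le_left _ _)⟩
    have hd : dist (⟨s, hs12⟩ : K) p < δ := by
      rw [Subtype.dist_eq, Real.dist_eq]
      have h1 : s ≤ c + δ/2 := le_trans hs.2 (min_le_right _ _)
      have h2 : c - δ/2 ≤ s := le_trans (le_max_right _ _) hs.1
      rw [abs_lt]; constructor <;> linarith
    have := interior_subset (hball hd)
    exact this

lemma aux_alg (v1 v2 a b x t : ℝ) (hx : x ≠ 0) (ha : a ≠ 0) (ht : t ≠ 0) :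
    v2 * (b / (t * x)) = v1 * (a / x) * (b / a * t⁻¹) + (v2 - v1) * (a / x) * (b / a * t⁻¹) := by
  field_simp
  ring

set_option maxHeartbeats 2000000 in
/-- Lemma 4.5: with `m n = F⁻¹ (1 - 1/n)` and `h n = m n / w (m n) = (m n) ^ μ / L (m n)`,
one has `h n ∼ μ * log n` as `n → ∞`. -/
theorem stmt_9
    (F f : ℝ → ℝ) (hF_mono : Monotone F) (hF_lt_one : ∀ x : ℝ, F x < 1)
    (hF_bot : Tendsto F atBot (nhds 0)) (hF_top : Tendsto F atTop (nhds 1))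
    (x₀ : ℝ) (hf_pos : ∀ x : ℝ, x₀ ≤ x → 0 < f x)
    (hF_strict : StrictMonoOn F (Set.Ici x₀))
    (hF_deriv : ∀ x : ℝ, x₀ ≤ x → HasDerivAt F (f x) x)
    (w : ℝ → ℝ) (hw : ∀ x, w x = (1 - F x) / f x)
    (w' : ℝ → ℝ) (x₁ : ℝ) (hw_deriv : ∀ x : ℝ, x₁ ≤ x → HasDerivAt w (w' x) x)
    (hw'_zero : Tendsto w' atTop (nhds 0))
    (μ : ℝ) (hμ : 0 < μ)
    (hw_rv : ∀ t : ℝ, 0 < t → Tendsto (fun x => w (t * x) / w x) atTop (nhds (t ^ (1 - μ))))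
    (L : ℝ → ℝ) (hL_pos : ∀ x : ℝ, 0 < x → 0 < L x)
    (hL_slow : ∀ t : ℝ, 0 < t → Tendsto (fun x => L (t * x) / L x) atTop (nhds 1))
    (hwL : ∀ x : ℝ, 0 < x → w x = x ^ (1 - μ) * L x)
    (m : ℕ → ℝ) (hm : ∀ᶠ n : ℕ in atTop, F (m n) = 1 - 1 / n) :
    Tendsto (fun n : ℕ => (m n / w (m n)) / (μ * Real.log n)) atTop (nhds 1) := by
  -- ## Basic setup
  set X₂ : ℝ := max (max x₀ x₁) 1 with hX₂def
  have hX₂1 : (1:ℝ) ≤ X₂ := le_max_right _ _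
  have hX₂0 : (0:ℝ) < X₂ := lt_of_lt_of_le one_pos hX₂1
  have hx₀le : ∀ x, X₂ ≤ x → x₀ ≤ x := fun x hx =>
    le_trans (le_trans (le_max_left _ _) (le_max_left _ _)) hx
  have hx₁le : ∀ x, X₂ ≤ x → x₁ ≤ x := fun x hx =>
    le_trans (le_trans (le_max_right _ _) (le_max_left _ _)) hx
  have hxpos : ∀ x, X₂ ≤ x → (0:ℝ) < x := fun x hx => lt_of_lt_of_le hX₂0 hx
  have hfp : ∀ x, X₂ ≤ x → 0 < f x := fun x hx => hf_pos x (hx₀le x hx)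
  have hFbar : ∀ x : ℝ, 0 < 1 - F x := fun x => by linarith [hF_lt_one x]
  have hF0 : ∀ x : ℝ, 0 ≤ F x := by
    intro x
    refine le_of_tendsto hF_bot ?_
    exact (eventually_le_atBot x).mono fun y hy => hF_mono hy
  have hwpos : ∀ x, X₂ ≤ x → 0 < w x := fun x hx => by
    rw [hw]; exact div_pos (hFbar x) (hfp x hx)
  set V : ℝ → ℝ := fun x => -Real.log (1 - F x) with hVdef
  have hV0 : ∀ x : ℝ, 0 ≤ V x := by
    intro x
    have : Real.log (1 - F x) ≤ 0 :=
      Real.log_nonpos (le_of_lt (hFbar x)) (by linarith [hF0 x])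
    simp [hVdef]; linarith
  have hVd : ∀ x, X₂ ≤ x → HasDerivAt V ((w x)⁻¹) x := by
    intro x hx
    have h1 : HasDerivAt (fun y => 1 - F y) (-f x) x := by
      simpa using (hF_deriv x (hx₀le x hx)).const_sub 1
    have h2 : HasDerivAt (fun y => Real.log (1 - F y)) ((1 - F x)⁻¹ * (-f x)) x :=
      by have := (Real.hasDerivAt_log (ne_of_gt (hFbar x))).comp x h1; exact this
    have h3 : HasDerivAt V (-((1 - F x)⁻¹ * (-f x))) x := h2.neg
    convert h3 using 1
    rw [hw]
    field_simp
  have hwcont : ∀ x, X₂ ≤ x → ContinuousAt w x := fun x hx =>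
    (hw_deriv x (hx₁le x hx)).continuousAt
  have hVcont : ∀ x, X₂ ≤ x → ContinuousAt V x := fun x hx => (hVd x hx).continuousAt
  -- ## FTC
  have hFTC : ∀ a b : ℝ, X₂ ≤ a → a ≤ b → V b - V a = ∫ s in a..b, (w s)⁻¹ := by
    intro a b ha hab
    have huIcc : Set.uIcc a b = Set.Icc a b := Set.uIcc_of_le hab
    have hint : IntervalIntegrable (fun s => (w s)⁻¹) volume a b := by
      apply ContinuousOn.intervalIntegrable
      intro s hs
      rw [huIcc] at hs
      have hsX : X₂ ≤ s := le_trans ha hs.1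
      exact ((hwcont s hsX).continuousWithinAt).inv₀ (ne_of_gt (hwpos s hsX))
    rw [(intervalIntegral.integral_eq_sub_of_hasDerivAt (fun x hx => by
      rw [huIcc] at hx
      exact hVd x (le_trans ha hx.1)) hint)]
  -- ## m n → ∞ and eventual identity F(m n)
  have hm_top : Tendsto m atTop atTop := by
    rw [tendsto_atTop]
    intro M
    have h2 : ∀ᶠ n : ℕ in atTop, (1:ℝ)/n < 1 - F M :=
      tendsto_one_div_atTop_nhds_zero_nat.eventually_lt_const (hFbar M)
    filter_upwards [hm, h2] with n h1 h2
    by_contra hlt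
    push_neg at hlt
    have := hF_mono (le_of_lt hlt)
    rw [h1] at this
    linarith
  -- ## inverse-ratio tendsto helper
  have hratio : ∀ u : ℝ, 0 < u →
      Tendsto (fun y => w y / w (u * y)) atTop (𝓝 (u ^ (μ - 1))) := by
    intro u hu
    have h1 : Tendsto (fun y => (w (u * y) / w y)⁻¹) atTop (𝓝 ((u ^ (1 - μ))⁻¹)) :=
      (hw_rv u hu).inv₀ (ne_of_gt (Real.rpow_pos_of_pos hu _))
    have h2 : (u ^ (1 - μ))⁻¹ = u ^ (μ - 1) := by
      rw [← Real.rpow_neg (le_of_lt hu)]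
      norm_num
    rw [h2] at h1
    convert h1 using 2 with y
    rw [inv_div]
  -- ## Baire category step
  set B : ℝ := max 1 ((2:ℝ) ^ (μ - 1)) with hBdef
  have hBown : ∀ s : ℝ, s ∈ Set.Icc (1:ℝ) 2 → s ^ (μ - 1) ≤ B := by
    intro s hs
    rcases le_or_gt 1 μ with hμ1 | hμ1
    · refine le_trans ?_ (le_max_right _ _)
      exact Real.rpow_le_rpow (by linarith [hs.1]) hs.2 (by linarith)
    · refine le_trans ?_ (le_max_left _ _)
      exact Real.rpow_le_one_of_one_le_of_nonpos hs.1 (by linarith)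
  set C : ℕ → Set ℝ := fun N =>
    ⋂ x ∈ Set.Ici (max (N:ℝ) X₂), {s | s ∈ Set.Icc (1:ℝ) 2 ∧ w x / w (s * x) ≤ B + 1} with hCdef
  have hCclosed : ∀ N, IsClosed (C N) := by
    intro N
    apply isClosed_biInter
    intro x hx
    have hxX : X₂ ≤ x := le_trans (le_max_right _ _) hx
    have hcont : ContinuousOn (fun s => w x / w (s * x)) (Set.Icc (1:ℝ) 2) := by
      intro s hs
      have hsx : X₂ ≤ s * x := by nlinarith [hs.1, hxpos x hxX]
      have hmulc : ContinuousAt (fun s : ℝ => s * x) s := (continuous_mul_right x).continuousAt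
      have h1 : ContinuousAt (fun s : ℝ => w (s * x)) s :=
        ContinuousAt.comp (x := s) (g := w) (f := fun s : ℝ => s * x) (hwcont _ hsx) hmulc
      exact (continuousAt_const.div h1 (ne_of_gt (hwpos _ hsx))).continuousWithinAt
    have h2 := hcont.preimage_isClosed_of_isClosed isClosed_Icc (isClosed_Iic (a := B + 1))
    convert h2 using 1
    rfl
  have hCcover : Set.Icc (1:ℝ) 2 ⊆ ⋃ N, C N := by
    intro s hs
    have hs0 : (0:ℝ) < s := lt_of_lt_of_le one_pos hs.1
    have h1 : ∀ᶠ y in atTop, w y / w (s * y) < B + 1 :=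
      (hratio s hs0).eventually_lt_const (by linarith [hBown s hs])
    obtain ⟨Y, hY⟩ := h1.exists_forall_of_atTop
    obtain ⟨N, hN⟩ := exists_nat_ge Y
    refine Set.mem_iUnion.2 ⟨N, ?_⟩
    rw [hCdef]
    simp only [Set.mem_iInter]
    intro x hx
    refine ⟨hs, le_of_lt (hY x ?_)⟩
    exact le_trans hN (le_trans (le_max_left _ _) hx)
  obtain ⟨N, α, β, hαβ, hsub12, hsubC⟩ := aux_baire C hCclosed hCcover
  have hα1 : 1 ≤ α := (hsub12 (Set.left_mem_Icc.2 hαβ.le)).1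
  have hβ2 : β ≤ 2 := (hsub12 (Set.right_mem_Icc.2 hαβ.le)).2
  have hα0 : (0:ℝ) < α := lt_of_lt_of_le one_pos hα1
  have hβ0 : (0:ℝ) < β := lt_trans hα0 hαβ
  set Y₀ : ℝ := max (N:ℝ) X₂ with hY₀def
  have hY₀X₂ : X₂ ≤ Y₀ := le_max_right _ _
  have hbound : ∀ u : ℝ, u ∈ Set.Icc α β → ∀ y : ℝ, Y₀ ≤ y → w y / w (u * y) ≤ B + 1 := by
    intro u hu y hy
    have := hsubC hu
    rw [hCdef] at this
    simp only [Set.mem_iInter] at this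
    exact (this y hy).2
  -- ## Dominated convergence
  have hμ1 : (-1:ℝ) < μ - 1 := by linarith
  set Φ : ℝ → ℝ := fun y => ∫ u in α..β, w y / w (u * y) with hΦdef
  have hIoc : Set.uIoc α β = Set.Ioc α β := Set.uIoc_of_le hαβ.le
  have hΦlim : Tendsto Φ atTop (𝓝 ((β ^ μ - α ^ μ) / μ)) := by
    have key := intervalIntegral.tendsto_integral_filter_of_dominated_convergence
      (μ := volume) (a := α) (b := β) (l := atTop)
      (F := fun y u => w y / w (u * y)) (f := fun u => u ^ (μ - 1))
      (bound := fun _ => B + 1)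
      ?_ ?_ (intervalIntegrable_const) ?_
    · have hval : (∫ u in α..β, u ^ (μ - 1)) = (β ^ μ - α ^ μ) / μ := by
        rw [integral_rpow (Or.inl hμ1)]
        norm_num
      rwa [hval] at key
    · filter_upwards [eventually_ge_atTop Y₀] with y hy
      apply ContinuousOn.aestronglyMeasurable _ measurableSet_uIoc
      intro u hu
      rw [hIoc] at hu
      have hyX : X₂ ≤ y := le_trans hY₀X₂ hy
      have huy : X₂ ≤ u * y := by nlinarith [hxpos y hyX, hα1, hu.1.le]
      have hmulc : ContinuousAt (fun u : ℝ => u * y) u := (continuous_mul_right y).continuousAt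
      have h1 : ContinuousAt (fun u : ℝ => w (u * y)) u :=
        ContinuousAt.comp (x := u) (g := w) (f := fun u : ℝ => u * y) (hwcont _ huy) hmulc
      exact (continuousAt_const.div h1 (ne_of_gt (hwpos _ huy))).continuousWithinAt
    · filter_upwards [eventually_ge_atTop Y₀] with y hy
      apply Filter.Eventually.of_forall
      intro u hu
      rw [hIoc] at hu
      have hu' : u ∈ Set.Icc α β := ⟨hu.1.le, hu.2⟩
      have hyX : X₂ ≤ y := le_trans hY₀X₂ hy
      have huy : X₂ ≤ u * y := by nlinarith [hxpos y hyX, hα1, hu.1.le]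
      have hpos : 0 ≤ w y / w (u * y) := le_of_lt (div_pos (hwpos y hyX) (hwpos _ huy))
      rw [Real.norm_eq_abs, abs_of_nonneg hpos]
      exact hbound u hu' y hy
    · apply Filter.Eventually.of_forall
      intro u hu
      rw [hIoc] at hu
      have hu0 : (0:ℝ) < u := lt_of_le_of_lt (by linarith : (0:ℝ) ≤ α) hu.1
      exact hratio u hu0
  -- ## substitution: (V (β y) - V (α y)) * (w y / y) = Φ y  eventually
  have hsubst : ∀ᶠ y in atTop, (V (β * y) - V (α * y)) * (w y / y) = Φ y := by
    filter_upwards [eventually_ge_atTop Y₀] with y hy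
    have hyX : X₂ ≤ y := le_trans hY₀X₂ hy
    have hy0 : (0:ℝ) < y := hxpos y hyX
    have hαy : X₂ ≤ α * y := by nlinarith
    have hαβy : α * y ≤ β * y := by nlinarith
    have hV : V (β * y) - V (α * y) = ∫ s in α * y..β * y, (w s)⁻¹ := hFTC _ _ hαy hαβy
    have hcs : (∫ u in α..β, (w (u * y))⁻¹) = y⁻¹ • ∫ s in α * y..β * y, (w s)⁻¹ :=
      intervalIntegral.integral_comp_mul_right (fun s => (w s)⁻¹) (ne_of_gt hy0)
    have hΦy : Φ y = w y * ∫ u in α..β, (w (u * y))⁻¹ := by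
      simp only [hΦdef, div_eq_mul_inv, intervalIntegral.integral_const_mul]
    rw [hΦy, hcs, hV, smul_eq_mul]
    field_simp
  have hΨlim : Tendsto (fun y => (V (β * y) - V (α * y)) * (w y / y)) atTop
      (𝓝 ((β ^ μ - α ^ μ) / μ)) := hΦlim.congr' (hsubst.mono fun y h => h.symm)
  -- ## rescale to t = β/α
  set t : ℝ := β / α with htdef
  have ht1 : 1 < t := (one_lt_div hα0).2 hαβ
  have ht0 : (0:ℝ) < t := lt_trans one_pos ht1
  set c : ℝ := (t ^ μ - 1) / μ with hcdef
  have hαμ : (0:ℝ) < α ^ μ := Real.rpow_pos_of_pos hα0 μ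
  have hΨ2 : Tendsto (fun y => (V (β * y) - V (α * y)) * (w (α * y) / (α * y))) atTop (𝓝 c) := by
    have h1 : Tendsto (fun y => ((V (β * y) - V (α * y)) * (w y / y)) * (w (α * y) / w y) * α⁻¹)
        atTop (𝓝 (((β ^ μ - α ^ μ) / μ) * α ^ (1 - μ) * α⁻¹)) :=
      (hΨlim.mul (hw_rv α hα0)).mul_const _
    have hval : ((β ^ μ - α ^ μ) / μ) * α ^ (1 - μ) * α⁻¹ = c := by
      have e1 : α ^ (1 - μ) = α * α ^ (-μ) := by
        rw [show (1:ℝ) - μ = 1 + (-μ) by ring, Real.rpow_add hα0, Real.rpow_one]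
      have e2 : α ^ (-μ) = (α ^ μ)⁻¹ := Real.rpow_neg hα0.le μ
      have e3 : t ^ μ = β ^ μ / α ^ μ := by
        rw [htdef]; exact Real.div_rpow hβ0.le hα0.le μ
      rw [e1, e2, hcdef, e3]
      field_simp
    rw [hval] at h1
    apply h1.congr'
    filter_upwards [eventually_ge_atTop Y₀] with y hy
    have hyX : X₂ ≤ y := le_trans hY₀X₂ hy
    have hy0 : (0:ℝ) < y := hxpos y hyX
    have hwy : w y ≠ 0 := ne_of_gt (hwpos y hyX)
    field_simp
  have hG : Tendsto (fun x => (V (t * x) - V x) * (w x / x)) atTop (𝓝 c) := by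
    have hcomp : Tendsto (fun x : ℝ => x / α) atTop atTop := tendsto_id.atTop_div_const hα0
    have := hΨ2.comp hcomp
    apply this.congr
    intro x
    simp only [Function.comp]
    have e1 : α * (x / α) = x := by field_simp
    have e2 : β * (x / α) = t * x := by rw [htdef]; field_simp
    rw [e1, e2]
  -- ## fixed point setup
  set A : ℝ → ℝ := fun x => V x * (w x / x) with hAdef
  set P : ℝ → ℝ := fun x => w (t * x) / w x * t⁻¹ with hPdef
  set G : ℝ → ℝ := fun x => (V (t * x) - V x) * (w x / x) with hGdef
  set q : ℝ := t ^ (-μ) with hqdef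
  have hq0 : 0 < q := Real.rpow_pos_of_pos ht0 _
  have hq1 : q < 1 := Real.rpow_lt_one_of_one_lt_of_neg ht1 (by linarith)
  have htμ : t ^ μ * t ^ (-μ) = 1 := by
    rw [← Real.rpow_add ht0]
    norm_num
  have hcq : c * q = (1 - q) / μ := by
    rw [hcdef, hqdef]
    field_simp
    nlinarith [htμ]
  have hP : Tendsto P atTop (𝓝 q) := by
    have h1 : Tendsto (fun x => w (t * x) / w x * t⁻¹) atTop (𝓝 (t ^ (1 - μ) * t⁻¹)) :=
      (hw_rv t ht0).mul_const _
    have hval : t ^ (1 - μ) * t⁻¹ = q := by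
      rw [hqdef, show (1:ℝ) - μ = 1 + (-μ) by ring, Real.rpow_add ht0, Real.rpow_one]
      field_simp
    rwa [hval] at h1
  have hGP : Tendsto (fun x => G x * P x) atTop (𝓝 (c * q)) := hG.mul hP
  have hPpos : ∀ x, X₂ ≤ x → 0 ≤ P x := by
    intro x hx
    have htx : X₂ ≤ t * x := by
      have h := mul_le_mul_of_nonneg_right ht1.le (hxpos x hx).le
      rw [one_mul] at h
      linarith
    exact le_of_lt (mul_pos (div_pos (hwpos _ htx) (hwpos _ hx)) (inv_pos.2 ht0))
  have hA0 : ∀ x, X₂ ≤ x → 0 ≤ A x := fun x hx =>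
    mul_nonneg (hV0 x) (le_of_lt (div_pos (hwpos x hx) (hxpos x hx)))
  have hid : ∀ x, X₂ ≤ x → A (t * x) = A x * P x + G x * P x := by
    intro x hx
    have hx0 : (0:ℝ) < x := hxpos x hx
    have hwx : w x ≠ 0 := ne_of_gt (hwpos x hx)
    simp only [hAdef, hPdef, hGdef]
    exact aux_alg (V x) (V (t * x)) (w x) (w (t * x)) x t (ne_of_gt hx0) hwx (ne_of_gt ht0)
  -- ## boundedness of A
  have hbddA : ∃ X : ℝ, X₂ ≤ X ∧ ∃ M : ℝ, ∀ y ≥ X, A y ≤ M := by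
    have hq' : (1 + q) / 2 < 1 := by linarith
    have hev : ∀ᶠ x in atTop, P x ≤ (1 + q) / 2 ∧ G x * P x ≤ c * q + 1 ∧ X₂ ≤ x := by
      filter_upwards [hP.eventually_lt_const (show q < (1+q)/2 by linarith),
        hGP.eventually_lt_const (show c*q < c*q+1 by linarith),
        eventually_ge_atTop X₂] with x h1 h2 h3
      exact ⟨h1.le, h2.le, h3⟩
    obtain ⟨X, hX⟩ := hev.exists_forall_of_atTop
    refine ⟨max X X₂, le_max_right _ _, ?_⟩
    set X' := max X X₂ with hX'def
    have hX'0 : 0 < X' := lt_of_lt_of_le hX₂0 (le_max_right _ _)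
    have hrec : ∀ x ≥ X', A (t * x) ≤ (1 + q) / 2 * A x + (c * q + 1) := by
      intro x hx
      have h := hX x (le_trans (le_max_left _ _) hx)
      have hxX₂ : X₂ ≤ x := le_trans (le_max_right _ _) hx
      rw [hid x hxX₂]
      have h2 : A x * P x ≤ (1 + q) / 2 * A x := by
        calc A x * P x ≤ A x * ((1 + q) / 2) := mul_le_mul_of_nonneg_left h.1 (hA0 x hxX₂)
          _ = (1 + q) / 2 * A x := mul_comm _ _
      linarith [h2, h.2.1]
    have hAcont : ContinuousOn A (Set.Icc X' (t * X')) := by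
      intro x hx
      have hxX₂ : X₂ ≤ x := le_trans (le_max_right _ _) hx.1
      exact (((hVcont x hxX₂).mul ((hwcont x hxX₂).div continuousAt_id
        (ne_of_gt (hxpos x hxX₂))))).continuousWithinAt
    obtain ⟨M₀, hM₀⟩ := isCompact_Icc.exists_bound_of_continuousOn hAcont
    obtain ⟨M, hM⟩ := aux_bdd ht1 hX'0 (by linarith : (0:ℝ) ≤ (1+q)/2) hq'
      (fun x hx => hA0 x (le_trans (le_max_right _ _) hx)) hrec
      (fun x hx => le_trans (le_abs_self _) (by simpa using hM₀ x hx))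
    exact ⟨M, hM⟩
  obtain ⟨X, hXX₂, M, hM⟩ := hbddA
  -- ## limsup/liminf argument
  have hAev : ∀ᶠ x in atTop, 0 ≤ A x ∧ A x ≤ M := by
    filter_upwards [eventually_ge_atTop X] with x hx
    exact ⟨hA0 x (le_trans hXX₂ hx), hM x hx⟩
  have hbdd_le : IsBoundedUnder (· ≤ ·) atTop A :=
    isBoundedUnder_of_eventually_le (hAev.mono fun x h => h.2)
  have hbdd_ge : IsBoundedUnder (· ≥ ·) atTop A :=
    isBoundedUnder_of_eventually_ge (hAev.mono fun x h => h.1)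
  have hcob_le : IsCoboundedUnder (· ≤ ·) atTop A := hbdd_ge.isCoboundedUnder_le
  have hcob_ge : IsCoboundedUnder (· ≥ ·) atTop A := hbdd_le.isCoboundedUnder_ge
  set S : ℝ := limsup A atTop with hSdef
  set I : ℝ := liminf A atTop with hIdef
  have hI0 : 0 ≤ I := le_liminf_of_le hcob_ge (hAev.mono fun x h => h.1)
  have hIS : I ≤ S := liminf_le_limsup hbdd_le hbdd_ge
  have hS0 : 0 ≤ S := le_trans hI0 hIS
  have hshift_le : ∀ K : ℝ, (∀ᶠ x in atTop, A (t * x) ≤ K) → ∀ᶠ y in atTop, A y ≤ K := by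
    intro K h
    obtain ⟨X', hX'⟩ := h.exists_forall_of_atTop
    refine eventually_atTop.2 ⟨t * X', fun y hy => ?_⟩
    have h1 : X' ≤ y / t := by
      rw [le_div_iff₀ ht0, mul_comm]
      linarith
    have h2 := hX' (y / t) h1
    have e : t * (y / t) = y := by field_simp
    rwa [e] at h2
  have hshift_ge : ∀ K : ℝ, (∀ᶠ x in atTop, K ≤ A (t * x)) → ∀ᶠ y in atTop, K ≤ A y := by
    intro K h
    obtain ⟨X', hX'⟩ := h.exists_forall_of_atTop
    refine eventually_atTop.2 ⟨t * X', fun y hy => ?_⟩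
    have h1 : X' ≤ y / t := by
      rw [le_div_iff₀ ht0, mul_comm]
      linarith
    have h2 := hX' (y / t) h1
    have e : t * (y / t) = y := by field_simp
    rwa [e] at h2
  have hδ : Tendsto (fun j : ℕ => (1:ℝ) / (j + 1)) atTop (𝓝 0) :=
    tendsto_one_div_add_atTop_nhds_zero_nat
  have h1q : 0 < 1 - q := by linarith
  -- upper bound
  have hSle : S ≤ q * S + c * q := by
    have hseq : Tendsto (fun j : ℕ => (q + 1/(j+1)) * (S + 1/(j+1)) + (c * q + 1/(j+1)))
        atTop (𝓝 ((q + 0) * (S + 0) + (c * q + 0))) :=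
      ((tendsto_const_nhds.add hδ).mul (tendsto_const_nhds.add hδ)).add
        (tendsto_const_nhds.add hδ)
    have key : ∀ j : ℕ, S ≤ (q + 1/(j+1)) * (S + 1/(j+1)) + (c * q + 1/(j+1)) := by
      intro j
      set ε : ℝ := 1/(j+1) with hεdef
      have hε : 0 < ε := by positivity
      have h1 : ∀ᶠ x in atTop, A x < S + ε :=
        eventually_lt_of_limsup_lt (by linarith) hbdd_le
      have h2 : ∀ᶠ x in atTop, P x < q + ε := hP.eventually_lt_const (by linarith)
      have h3 : ∀ᶠ x in atTop, G x * P x < c * q + ε := hGP.eventually_lt_const (by linarith)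
      have h4 : ∀ᶠ x in atTop, A (t * x) ≤ (q + ε) * (S + ε) + (c * q + ε) := by
        filter_upwards [h1, h2, h3, eventually_ge_atTop X₂] with x k1 k2 k3 k4
        rw [hid x k4]
        have hb : A x * P x ≤ (S + ε) * (q + ε) :=
          mul_le_mul k1.le k2.le (hPpos x k4) (by linarith)
        have hcomm : (S + ε) * (q + ε) = (q + ε) * (S + ε) := mul_comm _ _
        linarith
      exact limsup_le_of_le hcob_le (hshift_le _ h4)
    have := ge_of_tendsto hseq (Eventually.of_forall key)
    simpa using this
  have hSμ : S ≤ 1/μ := by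
    rw [hcq] at hSle
    by_contra hcon
    push_neg at hcon
    have h2 : (1 - q) * (1/μ - S) < 0 := mul_neg_of_pos_of_neg h1q (by linarith)
    have e : q * S + (1 - q)/μ - S = (1 - q) * (1/μ - S) := by field_simp; ring
    linarith
  -- lower bound
  have hIge : q * I + c * q ≤ I := by
    have hseq : Tendsto (fun j : ℕ =>
        max (I - 1/(j+1)) 0 * max (q - 1/(j+1)) 0 + (c * q - 1/(j+1)))
        atTop (𝓝 (max (I - 0) 0 * max (q - 0) 0 + (c * q - 0))) :=
      (((tendsto_const_nhds.sub hδ).max tendsto_const_nhds).mul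
        ((tendsto_const_nhds.sub hδ).max tendsto_const_nhds)).add
        (tendsto_const_nhds.sub hδ)
    have key : ∀ j : ℕ,
        max (I - 1/(j+1)) 0 * max (q - 1/(j+1)) 0 + (c * q - 1/(j+1)) ≤ I := by
      intro j
      set ε : ℝ := 1/(j+1) with hεdef
      have hε : 0 < ε := by positivity
      have h1 : ∀ᶠ x in atTop, I - ε < A x :=
        eventually_lt_of_lt_liminf (by linarith) hbdd_ge
      have h2 : ∀ᶠ x in atTop, q - ε < P x := hP.eventually_const_lt (by linarith)
      have h3 : ∀ᶠ x in atTop, c * q - ε < G x * P x := hGP.eventually_const_lt (by linarith)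
      have h4 : ∀ᶠ x in atTop,
          max (I - ε) 0 * max (q - ε) 0 + (c * q - ε) ≤ A (t * x) := by
        filter_upwards [h1, h2, h3, eventually_ge_atTop X₂] with x k1 k2 k3 k4
        rw [hid x k4]
        have hb : max (I - ε) 0 * max (q - ε) 0 ≤ A x * P x :=
          mul_le_mul (max_le k1.le (hA0 x k4)) (max_le k2.le (hPpos x k4))
            (le_max_right _ _) (hA0 x k4)
        linarith
      exact le_liminf_of_le hcob_ge (hshift_ge _ h4)
    have hfin := le_of_tendsto hseq (Eventually.of_forall key)
    have e1 : max (I - 0) 0 = I := by rw [sub_zero]; exact max_eq_left hI0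
    have e2 : max (q - 0) 0 = q := by rw [sub_zero]; exact max_eq_left hq0.le
    rw [e1, e2, sub_zero] at hfin
    linarith [hfin]
  have hIμ : 1/μ ≤ I := by
    rw [hcq] at hIge
    by_contra hcon
    push_neg at hcon
    have h2 : 0 < (1 - q) * (1/μ - I) := mul_pos h1q (by linarith)
    have e : q * I + (1 - q)/μ - I = (1 - q) * (1/μ - I) := by field_simp; ring
    linarith
  have hSeq : S = 1/μ := le_antisymm hSμ (le_trans hIμ hIS)
  have hIeq : I = 1/μ := le_antisymm (le_trans hIS hSμ) hIμ
  have hAlim : Tendsto A atTop (𝓝 (1/μ)) :=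
    tendsto_of_liminf_eq_limsup hIeq hSeq hbdd_le hbdd_ge
  -- ## final assembly
  have hcomp : Tendsto (fun n : ℕ => A (m n)) atTop (𝓝 (1/μ)) := hAlim.comp hm_top
  have h2 : Tendsto (fun n : ℕ => μ * A (m n)) atTop (𝓝 1) := by
    have h := hcomp.const_mul μ
    rw [show μ * (1/μ) = 1 by field_simp] at h
    exact h
  have h3 : Tendsto (fun n : ℕ => (μ * A (m n))⁻¹) atTop (𝓝 1) := by
    simpa using h2.inv₀ one_ne_zero
  refine Filter.Tendsto.congr' ?_ h3
  filter_upwards [hm, hm_top.eventually_ge_atTop X₂, eventually_ge_atTop 2] with n h1n h2n h3n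
  have hn1 : (1:ℝ) < (n:ℝ) := by
    have : (2:ℝ) ≤ (n:ℝ) := by exact_mod_cast h3n
    linarith
  have hlogn : 0 < Real.log n := Real.log_pos hn1
  have hVmn : V (m n) = Real.log n := by
    show -Real.log (1 - F (m n)) = Real.log n
    rw [h1n, show (1:ℝ) - (1 - 1/(n:ℝ)) = 1/(n:ℝ) by ring, one_div, Real.log_inv, neg_neg]
  have hwmn : 0 < w (m n) := hwpos _ h2n
  have hmn0 : 0 < m n := hxpos _ h2n
  show (μ * A (m n))⁻¹ = m n / w (m n) / (μ * Real.log n)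
  rw [hAdef]
  simp only
  rw [hVmn]
  rw [div_div, show μ * (Real.log ↑n * (w (m n) / m n)) = w (m n) * (μ * Real.log ↑n) / m n from by
    rw [eq_div_iff (ne_of_gt hmn0)]; field_simp, inv_div]
end

section
/- For every sequence of positive numbers {a_n} with a_n → 0 and a_n·h_n → ∞, and for every x > 0, it holds that limsup_{n→∞} a_n · log P(a_n·h_n·(M_n/m_n − 1) ≥ x) ≤ −x. -/
open Filter MeasureTheory ProbabilityTheory Topology
open scoped ENNReal

set_option maxHeartbeats 1000000 in
lemma uct_aux_s11 (w : ℝ → ℝ) (μ : ℝ) (c : ℝ) (hc : 1 ≤ c)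
    (hw_cont : ContinuousOn w (Set.Ici c))
    (hw_pos : ∀ s : ℝ, c ≤ s → 0 < w s)
    (hμ : 0 < μ)
    (hw_rv : ∀ t : ℝ, 0 < t → Tendsto (fun s => w (t * s) / w s) atTop (nhds (t ^ (1 - μ))))
    (δ : ℝ) (hδ : 0 < δ) (hδ1 : δ ≤ 1) :
    ∃ ρ > 0, ∃ M₀, c ≤ M₀ ∧ ∀ M, M₀ ≤ M → ∀ v, 0 ≤ v → v ≤ ρ →
      w ((1 + v) * M) ≤ (1 + δ) * w M := by
  classical
  set κ : ℝ := min 1 (2 ^ (1 - μ)) with hκdef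
  have hκ : 0 < κ := lt_min one_pos (Real.rpow_pos_of_pos two_pos _)
  set ε : ℝ := κ * δ / 8 with hεdef
  have hε : 0 < ε := by positivity
  -- lower bound for lam ^ (1-μ) on [1,2]
  have hκle : ∀ lam : ℝ, 1 ≤ lam → lam ≤ 2 → κ ≤ lam ^ (1 - μ) := by
    intro lam h1 h2
    rcases le_or_gt 0 (1 - μ) with h | h
    · exact le_trans (min_le_left _ _) (Real.one_le_rpow h1 h)
    · exact le_trans (min_le_right _ _) (Real.rpow_le_rpow_of_nonpos (by linarith) h2 h.le)
  -- the closed sets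
  set A : ℕ → Set ℝ := fun n =>
    ⋂ (s : ℝ) (_ : max (n : ℝ) c ≤ s),
      (Set.Icc (1:ℝ) 2 ∩ {lam : ℝ | |w (lam * s) - lam ^ (1 - μ) * w s| ≤ ε * w s}) with hAdef
  have hAclosed : ∀ n, IsClosed (A n) := by
    intro n
    refine isClosed_iInter fun s => isClosed_iInter fun hs => ?_
    have hsc : c ≤ s := le_trans (le_max_right _ _) hs
    have hs0 : 0 < s := lt_of_lt_of_le (lt_of_lt_of_le one_pos hc) hsc
    have hcont : ContinuousOn (fun lam : ℝ => |w (lam * s) - lam ^ (1 - μ) * w s|)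
        (Set.Icc (1:ℝ) 2) := by
      have h1 : ContinuousOn (fun lam : ℝ => w (lam * s)) (Set.Icc (1:ℝ) 2) := by
        apply hw_cont.comp (Continuous.continuousOn (by continuity))
        intro lam hlam
        have : s ≤ lam * s := le_mul_of_one_le_left hs0.le hlam.1
        exact le_trans hsc this
      have h2 : ContinuousOn (fun lam : ℝ => lam ^ (1 - μ) * w s) (Set.Icc (1:ℝ) 2) := by
        apply ContinuousOn.mul _ continuousOn_const
        refine ContinuousOn.rpow_const continuousOn_id (fun lam hlam => Or.inl ?_)
        have : (1:ℝ) ≤ lam := hlam.1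
        intro h0; rw [h0] at this; linarith
      exact (h1.sub h2).abs
    have := hcont.preimage_isClosed_of_isClosed isClosed_Icc (isClosed_Iic (a := ε * w s))
    exact this
  -- closed sets with complement pieces, covering ℝ
  set B : ℕ → Set ℝ := fun n => A n ∪ (Set.Iic (1:ℝ) ∪ Set.Ici (2:ℝ)) with hBdef
  have hBclosed : ∀ n, IsClosed (B n) :=
    fun n => (hAclosed n).union ((isClosed_Iic).union isClosed_Ici)
  have hBcover : ⋃ n, B n = Set.univ := by
    ext lam
    simp only [Set.mem_iUnion, Set.mem_univ, iff_true]
    rcases le_or_gt lam 1 with h1 | h1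
    · exact ⟨0, Or.inr (Or.inl h1)⟩
    rcases le_or_gt 2 lam with h2 | h2
    · exact ⟨0, Or.inr (Or.inr h2)⟩
    have hlam0 : 0 < lam := by linarith
    have := hw_rv lam hlam0
    rw [Metric.tendsto_atTop] at this
    obtain ⟨N, hN⟩ := this ε hε
    refine ⟨⌈N⌉₊, Or.inl ?_⟩
    rw [hAdef]
    refine Set.mem_iInter.2 fun s => Set.mem_iInter.2 fun hs => ⟨⟨h1.le, h2.le⟩, ?_⟩
    have hsn : (⌈N⌉₊ : ℝ) ≤ s := le_trans (le_max_left _ _) hs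
    have hsc : c ≤ s := le_trans (le_max_right _ _) hs
    have hws : 0 < w s := hw_pos s hsc
    have hd := hN s (le_trans (Nat.le_ceil N) hsn)
    rw [Real.dist_eq] at hd
    have : |w (lam * s) / w s - lam ^ (1 - μ)| * w s ≤ ε * w s :=
      mul_le_mul_of_nonneg_right hd.le hws.le
    calc |w (lam * s) - lam ^ (1 - μ) * w s|
        = |(w (lam * s) / w s - lam ^ (1 - μ)) * w s| := by
          congr 1; field_simp
      _ = |w (lam * s) / w s - lam ^ (1 - μ)| * w s := by
          rw [abs_mul, abs_of_pos hws]
      _ ≤ ε * w s := this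
  -- Baire category
  have hdense := dense_iUnion_interior_of_closed hBclosed hBcover
  obtain ⟨p, hpmem, hpI⟩ := hdense.exists_mem_open isOpen_Ioo
    (⟨(3:ℝ)/2, by norm_num, by norm_num⟩ : Set.Nonempty (Set.Ioo (1:ℝ) 2))
  obtain ⟨n, hpn⟩ := Set.mem_iUnion.1 hpmem
  obtain ⟨r, hr, hball⟩ := Metric.mem_nhds_iff.1 (mem_interior_iff_mem_nhds.1 hpn)
  set r' : ℝ := min r (min (p - 1) (2 - p)) with hr'def
  have hp1 : 1 < p := hpI.1
  have hp2 : p < 2 := hpI.2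
  have hr' : 0 < r' := lt_min hr (lt_min (by linarith) (by linarith))
  have hrr : r' ≤ r := min_le_left _ _
  have hrp1 : r' ≤ p - 1 := le_trans (min_le_right _ _) (min_le_left _ _)
  have hrp2 : r' ≤ 2 - p := le_trans (min_le_right _ _) (min_le_right _ _)
  set α : ℝ := p - r' / 4 with hαdef
  set β : ℝ := p + r' / 4 with hβdef
  have hα1 : 1 < α := by simp only [hαdef]; linarith
  have hβ2 : β < 2 := by simp only [hβdef]; linarith
  have hα2 : α < 2 := by simp only [hαdef]; linarith
  have hα0 : 0 < α := by linarith
  have hsub : Set.Icc α β ⊆ A n := by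
    intro q hq
    have hq1 := hq.1
    have hq2 := hq.2
    have hqball : q ∈ Metric.ball p r := by
      rw [Metric.mem_ball, Real.dist_eq, abs_sub_lt_iff]
      constructor
      · simp only [hβdef] at hq2; linarith
      · simp only [hαdef] at hq1; linarith
    rcases hball hqball with h | h
    · exact h
    · exfalso
      rcases h with h | h
      · rw [Set.mem_Iic] at h
        simp only [hαdef] at hq1; linarith
      · rw [Set.mem_Ici] at h
        simp only [hβdef] at hq2; linarith
  have hmem : ∀ q, q ∈ Set.Icc α β → ∀ s : ℝ, max (n:ℝ) c ≤ s →
      |w (q * s) - q ^ (1 - μ) * w s| ≤ ε * w s := by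
    intro q hq s hs
    have h1 := hsub hq
    rw [hAdef] at h1
    exact (Set.mem_iInter.1 (Set.mem_iInter.1 h1 s) hs).2
  refine ⟨min (δ/8) (r'/16), by positivity, 2 * max (n:ℝ) c, ?_, ?_⟩
  · have h1 : c ≤ max (n:ℝ) c := le_max_right _ _
    have h2 : (1:ℝ) ≤ max (n:ℝ) c := le_trans hc h1
    linarith
  intro M hM v hv0 hvρ
  have hmax1 : (1:ℝ) ≤ max (n:ℝ) c := le_trans hc (le_max_right _ _)
  have hM0 : 0 < M := by linarith
  set s : ℝ := M / α with hsdef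
  have hs0 : 0 < s := div_pos hM0 hα0
  have hsge : max (n:ℝ) c ≤ s := by
    rw [hsdef, le_div_iff₀ hα0]
    nlinarith
  have hws : 0 < w s := hw_pos s (le_trans (le_max_right _ _) hsge)
  have hvρ1 : v ≤ δ/8 := le_trans hvρ (min_le_left _ _)
  have hvρ2 : v ≤ r'/16 := le_trans hvρ (min_le_right _ _)
  have hβmem : α * (1 + v) ∈ Set.Icc α β := by
    constructor
    · nlinarith
    · simp only [hβdef, hαdef]; nlinarith
  have hmem1 := hmem α ⟨le_refl α, by simp only [hβdef, hαdef]; linarith⟩ s hsge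
  have hmem2 := hmem (α * (1+v)) hβmem s hsge
  have hαs : α * s = M := by rw [hsdef]; field_simp
  have hβs : (α * (1+v)) * s = (1 + v) * M := by rw [hsdef]; field_simp
  rw [hαs] at hmem1
  rw [hβs] at hmem2
  have habs1 := abs_le.1 hmem1
  have habs2 := abs_le.1 hmem2
  have hκα : κ ≤ α ^ (1 - μ) := hκle α hα1.le hα2.le
  have hmul : (α * (1+v)) ^ (1-μ) = α ^ (1-μ) * (1+v) ^ (1-μ) :=
    Real.mul_rpow hα0.le (by linarith)
  have h1v : (1+v) ^ (1-μ) ≤ 1 + δ/8 := by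
    rcases le_or_gt (1-μ) 0 with h | h
    · exact le_trans (Real.rpow_le_one_of_one_le_of_nonpos (by linarith) h) (by linarith)
    · have h2 := Real.rpow_le_rpow_of_exponent_le (by linarith : (1:ℝ) ≤ 1+v)
        (by linarith : 1-μ ≤ 1)
      rw [Real.rpow_one] at h2
      linarith
  have hwM : α ^ (1-μ) * w s - ε * w s ≤ w M := by linarith [habs1.1]
  have hup : w ((1+v)*M) ≤ α ^ (1-μ) * (1+v) ^ (1-μ) * w s + ε * w s := by
    have h2 := habs2.2
    rw [hmul] at h2
    linarith
  set aa : ℝ := α ^ (1-μ) with haadef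
  have haa : κ ≤ aa := hκα
  have key : aa * (1+δ/8) + ε ≤ (1+δ) * (aa - ε) := by
    have h1 : 0 ≤ (aa - κ) * δ := mul_nonneg (by linarith) hδ.le
    have h2 : δ * ε ≤ ε := by nlinarith
    simp only [hεdef] at *
    nlinarith
  have hvpow : 0 < (1+v) ^ (1-μ) := Real.rpow_pos_of_pos (by linarith) _
  calc w ((1+v)*M) ≤ aa * (1+v) ^ (1-μ) * w s + ε * w s := hup
    _ ≤ aa * (1+δ/8) * w s + ε * w s := by
        have haa0 : (0:ℝ) ≤ aa := le_trans hκ.le haa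
        have := mul_le_mul_of_nonneg_right (mul_le_mul_of_nonneg_left h1v haa0) hws.le
        linarith
    _ = (aa*(1+δ/8) + ε) * w s := by ring
    _ ≤ ((1+δ)*(aa-ε)) * w s := mul_le_mul_of_nonneg_right key hws.le
    _ = (1+δ) * ((aa - ε) * w s) := by ring
    _ ≤ (1+δ) * w M := by
        apply mul_le_mul_of_nonneg_left _ (by linarith : (0:ℝ) ≤ 1+δ)
        nlinarith [hwM]


set_option maxHeartbeats 1000000 in
/-- Upper bound on the half-line `[x, ∞)` for moderate deviations of maxima: for every
`x > 0`, `limsup a_n * log P(a_n * h_n * (M_n / m_n - 1) ≥ x) ≤ -x`. -/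
theorem stmt_11
    {Ω : Type*} [MeasureSpace Ω] [IsProbabilityMeasure (ℙ : Measure Ω)]
    (X : ℕ → Ω → ℝ) (hX : ∀ n, Measurable (X n))
    (h_indep : iIndepFun X ℙ)
    (F f : ℝ → ℝ) (hF_cdf : ∀ n x, (ℙ {ω | X n ω ≤ x}).toReal = F x)
    (hF_mono : Monotone F) (hF_lt_one : ∀ x : ℝ, F x < 1)
    (hF_bot : Tendsto F atBot (nhds 0)) (hF_top : Tendsto F atTop (nhds 1))
    (x₀ : ℝ) (hf_pos : ∀ x : ℝ, x₀ ≤ x → 0 < f x)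
    (hF_strict : StrictMonoOn F (Set.Ici x₀))
    (hF_deriv : ∀ x : ℝ, x₀ ≤ x → HasDerivAt F (f x) x)
    (w : ℝ → ℝ) (hw : ∀ x, w x = (1 - F x) / f x)
    (w' : ℝ → ℝ) (x₁ : ℝ) (hw_deriv : ∀ x : ℝ, x₁ ≤ x → HasDerivAt w (w' x) x)
    (hw'_zero : Tendsto w' atTop (nhds 0))
    (μ : ℝ) (hμ : 0 < μ)
    (hw_rv : ∀ t : ℝ, 0 < t → Tendsto (fun x => w (t * x) / w x) atTop (nhds (t ^ (1 - μ))))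
    (L : ℝ → ℝ) (hL_pos : ∀ x : ℝ, 0 < x → 0 < L x)
    (hL_slow : ∀ t : ℝ, 0 < t → Tendsto (fun x => L (t * x) / L x) atTop (nhds 1))
    (hwL : ∀ x : ℝ, 0 < x → w x = x ^ (1 - μ) * L x)
    (m : ℕ → ℝ) (hm : ∀ᶠ n : ℕ in atTop, F (m n) = 1 - 1 / n)
    (a : ℕ → ℝ) (ha_pos : ∀ n, 0 < a n) (ha_zero : Tendsto a atTop (nhds 0))
    (ha_top : Tendsto (fun n : ℕ => a n * (m n / w (m n))) atTop atTop) :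
    ∀ x : ℝ, 0 < x →
      limsup (fun n : ℕ => ((a n : ℝ) : EReal) *
          ENNReal.log (ℙ {ω | x ≤ a n * (m n / w (m n)) *
            (sSup ((fun i => X i ω) '' Set.Icc 1 n) / m n - 1)})) atTop
        ≤ ((-x : ℝ) : EReal) := by
  intro x hx
  set c : ℝ := max 1 (max x₀ x₁) with hcdef
  have hc1 : (1:ℝ) ≤ c := le_max_left _ _
  have hcx₀ : x₀ ≤ c := le_trans (le_max_left _ _) (le_max_right _ _)
  have hcx₁ : x₁ ≤ c := le_trans (le_max_right _ _) (le_max_right _ _)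
  have hw_pos : ∀ s : ℝ, c ≤ s → 0 < w s := by
    intro s hs
    have hs0 : (0:ℝ) < s := lt_of_lt_of_le (lt_of_lt_of_le one_pos hc1) hs
    rw [hwL s hs0]
    exact mul_pos (Real.rpow_pos_of_pos hs0 _) (hL_pos s hs0)
  have hw_cont : ContinuousOn w (Set.Ici c) := fun s hs =>
    ((hw_deriv s (le_trans hcx₁ hs)).continuousAt).continuousWithinAt
  have hF_nonneg : ∀ s : ℝ, 0 ≤ F s := by
    intro s
    refine le_of_tendsto hF_bot ?_
    filter_upwards [eventually_le_atBot s] with y hy using hF_mono hy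
  have hm_top : Tendsto m atTop atTop := by
    rw [tendsto_atTop]
    intro B
    have h1 : ∀ᶠ n : ℕ in atTop, F B < 1 - 1/(n:ℝ) := by
      have h2 : Tendsto (fun n : ℕ => 1 - 1/(n:ℝ)) atTop (nhds 1) := by
        simpa using (tendsto_const_nhds (x := (1:ℝ))).sub (tendsto_one_div_atTop_nhds_zero_nat)
      exact h2.eventually (eventually_gt_nhds (hF_lt_one B))
    filter_upwards [hm, h1] with n h2 h3
    by_contra h4
    push_neg at h4
    have h5 := hF_mono h4.le
    rw [h2] at h5
    linarith
  have tail_bound : ∀ (i : ℕ) (t : ℝ), x₀ ≤ t →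
      ℙ {ω | t ≤ X i ω} ≤ ENNReal.ofReal (1 - F t) := by
    intro i t ht
    have hcont : ContinuousAt F t := (hF_deriv t ht).continuousAt
    have hseq : Tendsto (fun k : ℕ => ENNReal.ofReal (1 - F (t - 1/((k:ℝ)+1)))) atTop
        (nhds (ENNReal.ofReal (1 - F t))) := by
      apply (ENNReal.continuous_ofReal.continuousAt).tendsto.comp
      have h0 : Tendsto (fun k : ℕ => t - 1/((k:ℝ)+1)) atTop (nhds t) := by
        simpa using (tendsto_const_nhds (x := t)).sub tendsto_one_div_add_atTop_nhds_zero_nat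
      exact (tendsto_const_nhds.sub (hcont.tendsto.comp h0))
    refine ge_of_tendsto hseq (Eventually.of_forall fun k => ?_)
    have hk : (0:ℝ) < 1/((k:ℝ)+1) := by positivity
    calc ℙ {ω | t ≤ X i ω} ≤ ℙ ({ω | X i ω ≤ t - 1/((k:ℝ)+1)}ᶜ) := by
          apply measure_mono
          intro ω hω
          simp only [Set.mem_compl_iff, Set.mem_setOf_eq] at *
          intro hcontra
          linarith
      _ = 1 - ℙ {ω | X i ω ≤ t - 1/((k:ℝ)+1)} :=
          prob_compl_eq_one_sub (hX i measurableSet_Iic)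
      _ = 1 - ENNReal.ofReal (F (t - 1/((k:ℝ)+1))) := by
          rw [← hF_cdf i (t - 1/((k:ℝ)+1)), ENNReal.ofReal_toReal (measure_ne_top _ _)]
      _ = ENNReal.ofReal (1 - F (t - 1/((k:ℝ)+1))) := by
          rw [ENNReal.ofReal_sub 1 (hF_nonneg _), ENNReal.ofReal_one]
  -- main estimate for each δ
  have main : ∀ δ : ℝ, 0 < δ → δ ≤ 1 →
      limsup (fun n : ℕ => ((a n : ℝ) : EReal) *
          ENNReal.log (ℙ {ω | x ≤ a n * (m n / w (m n)) *
            (sSup ((fun i => X i ω) '' Set.Icc 1 n) / m n - 1)})) atTop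
        ≤ ((-(x/(1+δ)) : ℝ) : EReal) := by
    intro δ hδ0 hδ1
    obtain ⟨ρ, hρ, M₀, hM₀c, hU⟩ := uct_aux_s11 w μ c hc1 hw_cont hw_pos hμ hw_rv δ hδ0 hδ1
    apply limsup_le_of_le (by isBoundedDefault)
    have hev1 : ∀ᶠ n : ℕ in atTop, max 1 (x/ρ) ≤ a n * (m n / w (m n)) :=
      ha_top.eventually_ge_atTop _
    have hev2 : ∀ᶠ n : ℕ in atTop, max M₀ c ≤ m n := hm_top.eventually_ge_atTop _
    filter_upwards [hm, hev1, hev2, eventually_ge_atTop 1] with n hFm hah hmn hn1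
    have hmnc : c ≤ m n := le_trans (le_max_right _ _) hmn
    have hmnM₀ : M₀ ≤ m n := le_trans (le_max_left _ _) hmn
    have hmn0 : (0:ℝ) < m n := lt_of_lt_of_le (lt_of_lt_of_le one_pos hc1) hmnc
    have hwmn : 0 < w (m n) := hw_pos (m n) hmnc
    have han : 0 < a n := ha_pos n
    have hH0 : 0 < m n / w (m n) := div_pos hmn0 hwmn
    have haH : 0 < a n * (m n / w (m n)) := mul_pos han hH0
    have haH1 : 1 ≤ a n * (m n / w (m n)) := le_trans (le_max_left _ _) hah
    have haHxρ : x / ρ ≤ a n * (m n / w (m n)) := le_trans (le_max_right _ _) hah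
    have hxρ : x / (a n * (m n / w (m n))) ≤ ρ := by
      rw [div_le_iff₀ haH]
      calc x = (x/ρ) * ρ := by field_simp
        _ ≤ (a n * (m n / w (m n))) * ρ := mul_le_mul_of_nonneg_right haHxρ hρ.le
        _ = ρ * (a n * (m n / w (m n))) := mul_comm _ _
    set tn : ℝ := m n * (1 + x / (a n * (m n / w (m n)))) with htndef
    have hxdiv : 0 ≤ x / (a n * (m n / w (m n))) := div_nonneg hx.le haH.le
    have htn_gt : m n ≤ tn := by nlinarith
    have htn_x₀ : x₀ ≤ tn := le_trans (le_trans hcx₀ hmnc) htn_gt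
    have hFtn : F tn < 1 := hF_lt_one tn
    -- Step 1: union bound
    have hstep1 : ℙ {ω | x ≤ a n * (m n / w (m n)) *
          (sSup ((fun i => X i ω) '' Set.Icc 1 n) / m n - 1)}
        ≤ (n : ℝ≥0∞) * ENNReal.ofReal (1 - F tn) := by
      have hsub : {ω | x ≤ a n * (m n / w (m n)) *
            (sSup ((fun i => X i ω) '' Set.Icc 1 n) / m n - 1)}
          ⊆ ⋃ i ∈ Finset.Icc 1 n, {ω | tn ≤ X i ω} := by
        intro ω hω
        simp only [Set.mem_setOf_eq] at hω
        have hS : tn ≤ sSup ((fun i => X i ω) '' Set.Icc 1 n) := by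
          set S := sSup ((fun i => X i ω) '' Set.Icc 1 n) with hSdef
          have h1 : x / (a n * (m n / w (m n))) ≤ S / m n - 1 := by
            rw [div_le_iff₀ haH]
            nlinarith
          calc tn = m n * (1 + x / (a n * (m n / w (m n)))) := rfl
            _ ≤ m n * (1 + (S / m n - 1)) := by nlinarith
            _ = S := by field_simp; ring
        have hne : ((fun i => X i ω) '' Set.Icc 1 n).Nonempty :=
          ⟨X 1 ω, ⟨1, ⟨le_refl 1, hn1⟩, rfl⟩⟩
        have hfin : ((fun i => X i ω) '' Set.Icc 1 n).Finite := (Set.finite_Icc 1 n).image _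
        obtain ⟨i, hi, hiS⟩ := hne.csSup_mem hfin
        refine Set.mem_biUnion (Finset.mem_Icc.2 ⟨hi.1, hi.2⟩) ?_
        simp only [Set.mem_setOf_eq]
        exact hS.trans hiS.ge
      calc ℙ _ ≤ ℙ (⋃ i ∈ Finset.Icc 1 n, {ω | tn ≤ X i ω}) := measure_mono hsub
        _ ≤ ∑ i ∈ Finset.Icc 1 n, ℙ {ω | tn ≤ X i ω} := measure_biUnion_finset_le _ _
        _ ≤ ∑ i ∈ Finset.Icc 1 n, ENNReal.ofReal (1 - F tn) :=
            Finset.sum_le_sum fun i _ => tail_bound i tn htn_x₀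
        _ = (n : ℝ≥0∞) * ENNReal.ofReal (1 - F tn) := by
            rw [Finset.sum_const, Nat.card_Icc]
            simp [nsmul_eq_mul]
    -- Step 2: real estimate
    have hginteg : IntervalIntegrable (fun s => 1 / w s) MeasureTheory.volume (m n) tn := by
      apply ContinuousOn.intervalIntegrable
      rw [Set.uIcc_of_le htn_gt]
      refine ContinuousOn.div continuousOn_const (hw_cont.mono ?_) ?_
      · intro s hs; exact le_trans hmnc hs.1
      · intro s hs; exact (hw_pos s (le_trans hmnc hs.1)).ne'
    have hftc : ∫ s in (m n)..tn, (1 / w s) =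
        (-Real.log (1 - F tn)) - (-Real.log (1 - F (m n))) := by
      refine intervalIntegral.integral_eq_sub_of_hasDerivAt
        (f := fun y => -Real.log (1 - F y)) ?_ hginteg
      intro s hs
      rw [Set.uIcc_of_le htn_gt] at hs
      have hsx₀ : x₀ ≤ s := le_trans (le_trans hcx₀ hmnc) hs.1
      have hFs : F s < 1 := hF_lt_one s
      have hfs : 0 < f s := hf_pos s hsx₀
      have hd1 : HasDerivAt (fun y => 1 - F y) (-f s) s := by
        have h := (hasDerivAt_const s (1:ℝ)).sub (hF_deriv s hsx₀)
        rw [zero_sub] at h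
        exact h
      have hd2 := (hd1.log (by linarith : (1:ℝ) - F s ≠ 0)).neg
      convert hd2 using 1
      · rfl
      rw [hw s]
      field_simp
    have hlow : x / ((1+δ) * a n) ≤ ∫ s in (m n)..tn, (1 / w s) := by
      have hconst : ∫ s in (m n)..tn, (1/((1+δ) * w (m n))) =
          (tn - m n) * (1/((1+δ)*w (m n))) := by
        rw [intervalIntegral.integral_const]
        simp [smul_eq_mul]
      have hmono : ∫ s in (m n)..tn, (1/((1+δ)*w (m n))) ≤ ∫ s in (m n)..tn, (1/w s) := by
        apply intervalIntegral.integral_mono_on htn_gt intervalIntegrable_const hginteg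
        intro s hs
        have hsc : c ≤ s := le_trans hmnc hs.1
        have hws : 0 < w s := hw_pos s hsc
        have hwb : w s ≤ (1+δ) * w (m n) := by
          have hv0 : 0 ≤ s / m n - 1 := by
            rw [sub_nonneg, le_div_iff₀ hmn0]
            linarith [hs.1]
          have hveq : (1 + (s / m n - 1)) * m n = s := by field_simp; ring
          have hvρ' : s / m n - 1 ≤ ρ := by
            have h1 : s ≤ tn := hs.2
            have h2 : s / m n ≤ tn / m n := by gcongr
            have h3 : tn / m n = 1 + x / (a n * (m n / w (m n))) := by
              rw [htndef]; field_simp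
            rw [h3] at h2
            linarith [hxρ]
          calc w s = w ((1 + (s / m n - 1)) * m n) := by rw [hveq]
            _ ≤ (1+δ) * w (m n) := hU (m n) hmnM₀ _ hv0 hvρ'
        exact one_div_le_one_div_of_le hws hwb
      have htnmn : tn - m n = x * w (m n) / a n := by
        rw [htndef]; field_simp; ring
      calc x / ((1+δ) * a n) = (x * w (m n) / a n) * (1/((1+δ) * w (m n))) := by
            field_simp
        _ = (tn - m n) * (1/((1+δ) * w (m n))) := by rw [htnmn]
        _ = ∫ s in (m n)..tn, (1/((1+δ) * w (m n))) := hconst.symm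
        _ ≤ _ := hmono
    have hn0 : (0:ℝ) < n := by exact_mod_cast hn1
    have hFmn1 : 1 - F (m n) = 1/(n:ℝ) := by rw [hFm]; ring
    have hstep2 : (n:ℝ) * (1 - F tn) ≤ Real.exp (-(x / ((1+δ) * a n))) := by
      have h1 : x/((1+δ)*a n) ≤ -Real.log (1 - F tn) + Real.log (1 - F (m n)) := by
        rw [hftc] at hlow
        linarith
      rw [hFmn1, Real.log_div one_ne_zero hn0.ne', Real.log_one] at h1
      have hpos : (0:ℝ) < (n:ℝ) * (1 - F tn) := mul_pos hn0 (by linarith)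
      calc (n:ℝ) * (1 - F tn) = Real.exp (Real.log ((n:ℝ) * (1 - F tn))) :=
            (Real.exp_log hpos).symm
        _ ≤ Real.exp (-(x/((1+δ) * a n))) := by
            apply Real.exp_le_exp.2
            rw [Real.log_mul hn0.ne' (by linarith : 1 - F tn ≠ 0)]
            linarith
    -- Step 3: conclude
    have hP : ℙ {ω | x ≤ a n * (m n / w (m n)) *
          (sSup ((fun i => X i ω) '' Set.Icc 1 n) / m n - 1)}
        ≤ ENNReal.ofReal (Real.exp (-(x/((1+δ) * a n)))) := by
      refine le_trans hstep1 ?_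
      rw [← ENNReal.ofReal_natCast n, ← ENNReal.ofReal_mul (Nat.cast_nonneg n)]
      exact ENNReal.ofReal_le_ofReal hstep2
    have hlogP : ENNReal.log (ℙ {ω | x ≤ a n * (m n / w (m n)) *
          (sSup ((fun i => X i ω) '' Set.Icc 1 n) / m n - 1)})
        ≤ ((-(x/((1+δ) * a n)) : ℝ) : EReal) := by
      refine le_trans (ENNReal.log_monotone hP) ?_
      rw [ENNReal.log_ofReal_of_pos (Real.exp_pos _), Real.log_exp]
    calc ((a n : ℝ) : EReal) * ENNReal.log (ℙ {ω | x ≤ a n * (m n / w (m n)) *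
            (sSup ((fun i => X i ω) '' Set.Icc 1 n) / m n - 1)})
        ≤ ((a n : ℝ) : EReal) * ((-(x/((1+δ) * a n)) : ℝ) : EReal) :=
          mul_le_mul_of_nonneg_left hlogP (by exact_mod_cast han.le)
      _ = ((a n * (-(x/((1+δ) * a n))) : ℝ) : EReal) := (EReal.coe_mul _ _).symm
      _ = ((-(x/(1+δ)) : ℝ) : EReal) := by
          congr 1
          field_simp
  -- wrap up: let δ → 0
  apply le_of_forall_gt_imp_ge_of_dense
  intro e he
  by_cases htop : e = ⊤
  · simp [htop]
  · have hbot : e ≠ ⊥ := ne_bot_of_gt he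
    lift e to ℝ using ⟨htop, hbot⟩ with y
    have hxy : -x < y := by exact_mod_cast he
    set δ : ℝ := min 1 ((x + y)/x) with hδdef
    have hδ0 : 0 < δ := lt_min one_pos (div_pos (by linarith) hx)
    have hδ1 : δ ≤ 1 := min_le_left _ _
    refine le_trans (main δ hδ0 hδ1) ?_
    have hle : -(x/(1+δ)) ≤ y := by
      have hδle : δ ≤ (x+y)/x := min_le_right _ _
      have h1 : δ * x ≤ x + y := by
        rw [← le_div_iff₀ hx]
        exact hδle
      have h3 : (0:ℝ) < 1 + δ := by linarith
      have h2 : -(x/(1+δ)) ≤ -x + x*δ := by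
        rw [← neg_div, div_le_iff₀ h3]
        nlinarith [mul_nonneg (mul_nonneg hx.le hδ0.le) hδ0.le]
      linarith
    exact_mod_cast hle
end

section
/- For every sequence of positive numbers {a_n} with a_n → 0 and a_n·h_n → ∞, and for every x < 0, it holds that a_n · log P(a_n·h_n·(M_n/m_n − 1) ≤ x) → −∞ as n → ∞. -/
open Filter MeasureTheory ProbabilityTheory Topology
open scoped ENNReal

/-- A von Mises type hazard-rate bound: if `|w'| ≤ 1/2` beyond `x₂`, then
`1 - F B ≥ (1 - F M) * (1 + (M - B)/(2 w M))²` for `x₂ ≤ B ≤ M`. -/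
lemma hazard_aux (F f w w' : ℝ → ℝ) (x₀ x₁ x₂ : ℝ)
    (hF_lt_one : ∀ x : ℝ, F x < 1)
    (hf_pos : ∀ x : ℝ, x₀ ≤ x → 0 < f x)
    (hF_deriv : ∀ x : ℝ, x₀ ≤ x → HasDerivAt F (f x) x)
    (hw : ∀ x, w x = (1 - F x) / f x)
    (hw_deriv : ∀ x : ℝ, x₁ ≤ x → HasDerivAt w (w' x) x)
    (hx₀ : x₀ ≤ x₂) (hx₁ : x₁ ≤ x₂)
    (hw' : ∀ t : ℝ, x₂ ≤ t → |w' t| ≤ 1 / 2)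
    {B M : ℝ} (hB : x₂ ≤ B) (hBM : B ≤ M) :
    (1 - F M) * (1 + (M - B) / (2 * w M)) ^ 2 ≤ 1 - F B := by
  have h1F : ∀ t : ℝ, 0 < 1 - F t := fun t => by linarith [hF_lt_one t]
  have w_pos : ∀ t : ℝ, x₂ ≤ t → 0 < w t := fun t ht => by
    rw [hw]; exact div_pos (h1F t) (hf_pos t (hx₀.trans ht))
  -- growth bound : w s ≤ w t + (t - s)/2 for x₂ ≤ s ≤ t
  have growth : ∀ s t : ℝ, x₂ ≤ s → s ≤ t → w s ≤ w t + (t - s) / 2 := by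
    intro s t hs hst
    have hmono : MonotoneOn (fun u => w u + u / 2) (Set.Ici x₂) := by
      apply monotoneOn_of_hasDerivWithinAt_nonneg (convex_Ici x₂)
        (f' := fun u => w' u + 1 / 2)
      · intro u hu
        exact ((hw_deriv u (hx₁.trans hu)).add ((hasDerivAt_id u).div_const 2)
          ).continuousAt.continuousWithinAt
      · intro u hu
        rw [interior_Ici] at hu
        exact ((hw_deriv u (hx₁.trans hu.le)).add
          ((hasDerivAt_id u).div_const 2)).hasDerivWithinAt
      · intro u hu
        rw [interior_Ici] at hu
        have := abs_le.1 (hw' u hu.le)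
        linarith [this.1]
    have := hmono (Set.mem_Ici.2 hs) (Set.mem_Ici.2 (hs.trans hst)) hst
    simp only at this
    linarith
  have hMx₂ : x₂ ≤ M := hB.trans hBM
  have hwM : 0 < w M := w_pos M hMx₂
  set q : ℝ → ℝ := fun t => w M + (M - t) / 2 with hq_def
  have hq_pos : ∀ t : ℝ, t ≤ M → 0 < q t := fun t ht => by
    simp only [hq_def]; nlinarith
  set ψ : ℝ → ℝ := fun t => Real.log (1 - F t) - 2 * Real.log (q t) with hψ_def
  have hψ_deriv : ∀ t : ℝ, x₂ ≤ t → t ≤ M →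
      HasDerivAt ψ (-(f t / (1 - F t)) + 1 / q t) t := by
    intro t ht htM
    have h1 : HasDerivAt (fun y => 1 - F y) (-f t) t :=
      (hF_deriv t (hx₀.trans ht)).const_sub 1
    have h2 : HasDerivAt (fun y => Real.log (1 - F y)) (-f t / (1 - F t)) t :=
      h1.log (ne_of_gt (h1F t))
    have h3 : HasDerivAt q (-1 / 2) t := by
      have : HasDerivAt (fun y : ℝ => M - y) (-1) t := by
        simpa using (hasDerivAt_id t).const_sub M
      exact (this.div_const 2).const_add (w M)
    have h4 : HasDerivAt (fun y => Real.log (q y)) (-1 / 2 / q t) t :=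
      h3.log (ne_of_gt (hq_pos t htM))
    have := h2.sub (h4.const_mul 2)
    have hqt := hq_pos t htM
    exact this.congr_deriv (by ring)
  have hψ_anti : AntitoneOn ψ (Set.Icc x₂ M) := by
    apply antitoneOn_of_hasDerivWithinAt_nonpos (convex_Icc x₂ M)
      (f' := fun t => -(f t / (1 - F t)) + 1 / q t)
    · intro t ht
      exact (hψ_deriv t ht.1 ht.2).continuousAt.continuousWithinAt
    · intro t ht
      rw [interior_Icc] at ht
      exact (hψ_deriv t ht.1.le ht.2.le).hasDerivWithinAt
    · intro t ht
      rw [interior_Icc] at ht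
      have hwt : 0 < w t := w_pos t ht.1.le
      have hle : w t ≤ q t := by
        have := growth t M ht.1.le ht.2.le
        simp only [hq_def]; linarith
      have h1 : 1 / q t ≤ 1 / w t := one_div_le_one_div_of_le hwt hle
      have h2 : 1 / w t = f t / (1 - F t) := by
        rw [hw, one_div_div]
      linarith [h1, h2.le, h2.ge]
  have hψB : ψ M ≤ ψ B := hψ_anti ⟨hB, hBM⟩ ⟨hMx₂, le_refl M⟩ hBM
  have hqB : 0 < q B := hq_pos B hBM
  have hqM : q M = w M := by simp [hq_def]
  have hlog : Real.log ((1 - F M) * (q B / w M) ^ 2) ≤ Real.log (1 - F B) := by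
    rw [Real.log_mul (ne_of_gt (h1F M)) (by positivity), Real.log_pow,
      Real.log_div (ne_of_gt hqB) (ne_of_gt hwM)]
    simp only [hψ_def, hqM] at hψB
    push_cast
    linarith
  have hpos : 0 < (1 - F M) * (q B / w M) ^ 2 :=
    mul_pos (h1F M) (pow_pos (div_pos hqB hwM) 2)
  have := (Real.log_le_log_iff hpos (h1F B)).1 hlog
  have hqBe : 1 + (M - B) / (2 * w M) = q B / w M := by
    simp only [hq_def]
    field_simp
  rw [hqBe]
  exact this

/-- The probability that the maximum of the first `n` variables is at most `B`
equals `F B ^ n`, by independence and identical distribution. -/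
lemma meas_max {Ω : Type*} [MeasureSpace Ω] [IsProbabilityMeasure (ℙ : Measure Ω)]
    (X : ℕ → Ω → ℝ)
    (h_indep : iIndepFun X ℙ)
    (F : ℝ → ℝ) (hF_cdf : ∀ n x, (ℙ {ω | X n ω ≤ x}).toReal = F x)
    {n : ℕ} (hn : 1 ≤ n) (B : ℝ) :
    ℙ {ω | sSup ((fun i => X i ω) '' Set.Icc 1 n) ≤ B} = ENNReal.ofReal (F B) ^ n := by
  have hset : {ω | sSup ((fun i => X i ω) '' Set.Icc 1 n) ≤ B}
      = ⋂ i ∈ Finset.Icc 1 n, X i ⁻¹' Set.Iic B := by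
    ext ω
    simp only [Set.mem_setOf_eq, Set.mem_iInter, Set.mem_preimage, Set.mem_Iic,
      Finset.mem_Icc]
    rw [csSup_le_iff (((Set.finite_Icc 1 n).image _).bddAbove)
      ⟨X 1 ω, Set.mem_image_of_mem _ (Set.mem_Icc.2 ⟨le_refl 1, hn⟩)⟩]
    constructor
    · intro h i hi; exact h _ (Set.mem_image_of_mem _ (Set.mem_Icc.2 hi))
    · rintro h b ⟨i, hi, rfl⟩; exact h i (Set.mem_Icc.1 hi)
  have hP : ∀ i : ℕ, ℙ (X i ⁻¹' Set.Iic B) = ENNReal.ofReal (F B) := by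
    intro i
    have : (ℙ (X i ⁻¹' Set.Iic B)).toReal = F B := hF_cdf i B
    rw [← this, ENNReal.ofReal_toReal (measure_ne_top _ _)]
  rw [hset, h_indep.meas_biInter (fun i _ => ⟨Set.Iic B, measurableSet_Iic, rfl⟩)]
  rw [Finset.prod_congr rfl (fun i _ => hP i), Finset.prod_const, Nat.card_Icc]
  norm_num

set_option maxHeartbeats 1600000

/-- For every `x < 0`, `a_n * log P(a_n * h_n * (M_n / m_n - 1) ≤ x) → -∞`. -/
theorem stmt_12
    {Ω : Type*} [MeasureSpace Ω] [IsProbabilityMeasure (ℙ : Measure Ω)]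
    (X : ℕ → Ω → ℝ) (hX : ∀ n, Measurable (X n))
    (h_indep : iIndepFun X ℙ)
    (F f : ℝ → ℝ) (hF_cdf : ∀ n x, (ℙ {ω | X n ω ≤ x}).toReal = F x)
    (hF_mono : Monotone F) (hF_lt_one : ∀ x : ℝ, F x < 1)
    (hF_bot : Tendsto F atBot (nhds 0)) (hF_top : Tendsto F atTop (nhds 1))
    (x₀ : ℝ) (hf_pos : ∀ x : ℝ, x₀ ≤ x → 0 < f x)
    (hF_strict : StrictMonoOn F (Set.Ici x₀))
    (hF_deriv : ∀ x : ℝ, x₀ ≤ x → HasDerivAt F (f x) x)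
    (w : ℝ → ℝ) (hw : ∀ x, w x = (1 - F x) / f x)
    (w' : ℝ → ℝ) (x₁ : ℝ) (hw_deriv : ∀ x : ℝ, x₁ ≤ x → HasDerivAt w (w' x) x)
    (hw'_zero : Tendsto w' atTop (nhds 0))
    (μ : ℝ) (hμ : 0 < μ)
    (hw_rv : ∀ t : ℝ, 0 < t → Tendsto (fun x => w (t * x) / w x) atTop (nhds (t ^ (1 - μ))))
    (L : ℝ → ℝ) (hL_pos : ∀ x : ℝ, 0 < x → 0 < L x)
    (hL_slow : ∀ t : ℝ, 0 < t → Tendsto (fun x => L (t * x) / L x) atTop (nhds 1))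
    (hwL : ∀ x : ℝ, 0 < x → w x = x ^ (1 - μ) * L x)
    (m : ℕ → ℝ) (hm : ∀ᶠ n : ℕ in atTop, F (m n) = 1 - 1 / n)
    (a : ℕ → ℝ) (ha_pos : ∀ n, 0 < a n) (ha_zero : Tendsto a atTop (nhds 0))
    (ha_top : Tendsto (fun n : ℕ => a n * (m n / w (m n))) atTop atTop) :
    ∀ x : ℝ, x < 0 →
      Tendsto (fun n : ℕ => ((a n : ℝ) : EReal) *
          ENNReal.log (ℙ {ω | a n * (m n / w (m n)) *
            (sSup ((fun i => X i ω) '' Set.Icc 1 n) / m n - 1) ≤ x})) atTop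
        (nhds (⊥ : EReal)) := by
  intro x hxneg
  have hF_nonneg : ∀ y : ℝ, 0 ≤ F y := fun y => (hF_cdf 0 y) ▸ ENNReal.toReal_nonneg
  have h1F : ∀ t : ℝ, 0 < 1 - F t := fun t => by linarith [hF_lt_one t]
  -- choose x₂ beyond which |w'| ≤ 1/2
  obtain ⟨x₂', hw'bd⟩ := eventually_atTop.1 <|
    (Metric.tendsto_nhds.1 hw'_zero (1 / 2) (by norm_num)).mono
      (fun t ht => by simpa [Real.dist_eq] using ht.le)
  set x₂ : ℝ := max (max x₂' x₁) (max x₀ 1) with hx₂_def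
  have hx₂0 : x₀ ≤ x₂ := le_trans (le_max_left _ _) (le_max_right _ _)
  have hx₂1 : x₁ ≤ x₂ := le_trans (le_max_right _ _) (le_max_left _ _)
  have hx₂' : x₂' ≤ x₂ := le_trans (le_max_left _ _) (le_max_left _ _)
  have hx₂one : (1 : ℝ) ≤ x₂ := le_trans (le_max_right _ _) (le_max_right _ _)
  have hw'half : ∀ t : ℝ, x₂ ≤ t → |w' t| ≤ 1 / 2 := fun t ht => by
    have := hw'bd t (le_trans hx₂' ht)
    norm_num at this ⊢
    exact this
  have w_pos : ∀ t : ℝ, x₂ ≤ t → 0 < w t := fun t ht => by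
    rw [hw]; exact div_pos (h1F t) (hf_pos t (hx₂0.trans ht))
  -- m n → ∞
  have hm_top : Tendsto m atTop atTop := by
    rw [tendsto_atTop]
    intro M
    have hlim : Tendsto (fun n : ℕ => 1 - 1 / (n : ℝ)) atTop (nhds 1) := by
      simpa using (tendsto_const_nhds (x := (1:ℝ))).sub tendsto_one_div_atTop_nhds_zero_nat
    filter_upwards [hm, hlim.eventually (eventually_gt_nhds (hF_lt_one M))]
      with n h2 h3
    by_contra hMn
    push_neg at hMn
    have := hF_mono hMn.le
    rw [h2] at this
    linarith
  -- x²/(4 aₙ) → ∞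
  have hquot : Tendsto (fun n => x ^ 2 / 4 * (a n)⁻¹) atTop atTop := by
    have ha' : Tendsto a atTop (nhdsWithin 0 (Set.Ioi 0)) :=
      tendsto_nhdsWithin_of_tendsto_nhds_of_eventually_within _ ha_zero
        (Eventually.of_forall fun n => ha_pos n)
    exact ha'.inv_tendsto_nhdsGT_zero.const_mul_atTop (by nlinarith)
  rw [EReal.tendsto_nhds_bot_iff_real]
  intro K
  filter_upwards [hm, hm_top.eventually_ge_atTop (2 * x₂),
    ha_top.eventually_ge_atTop (max 1 (2 * (-x))),
    hquot.eventually_gt_atTop (-K), eventually_ge_atTop 1]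
    with n hFm hm2 hcn hK hn1
  have hnpos : (0 : ℝ) < (n : ℝ) := by exact_mod_cast hn1
  have hapos := ha_pos n
  have hx₂pos : (0 : ℝ) < x₂ := lt_of_lt_of_le one_pos hx₂one
  have hmn : x₂ ≤ m n := by linarith
  have hm_pos : 0 < m n := lt_of_lt_of_le hx₂pos hmn
  have hwm : 0 < w (m n) := w_pos _ hmn
  have hc1 : (1 : ℝ) ≤ a n * (m n / w (m n)) := le_trans (le_max_left _ _) hcn
  have hc2x : 2 * (-x) ≤ a n * (m n / w (m n)) := le_trans (le_max_right _ _) hcn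
  have hcpos : 0 < a n * (m n / w (m n)) := lt_of_lt_of_le one_pos hc1
  set c : ℝ := a n * (m n / w (m n)) with hc_def
  set B : ℝ := m n + x * (w (m n) / a n) with hB_def
  have hwa : w (m n) / a n = m n / c := by
    rw [hc_def]; field_simp
  have hBle : B ≤ m n := by
    have h1 : x * (w (m n) / a n) ≤ 0 :=
      mul_nonpos_of_nonpos_of_nonneg hxneg.le (by positivity)
    rw [hB_def]; linarith
  have hBge : x₂ ≤ B := by
    have h2 : (-x) * (m n / c) ≤ m n / 2 := by
      rw [mul_div_assoc', div_le_div_iff₀ hcpos (by norm_num : (0:ℝ) < 2)]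
      nlinarith
    rw [hB_def, hwa]
    nlinarith
  -- rewrite the event
  have hev : {ω : Ω | a n * (m n / w (m n)) *
      (sSup ((fun i => X i ω) '' Set.Icc 1 n) / m n - 1) ≤ x}
      = {ω : Ω | sSup ((fun i => X i ω) '' Set.Icc 1 n) ≤ B} := by
    ext ω
    simp only [Set.mem_setOf_eq, ← hc_def]
    rw [mul_comm, ← le_div_iff₀ hcpos, sub_le_iff_le_add, div_le_iff₀ hm_pos]
    have heq : (x / c + 1) * m n = B := by
      rw [hB_def, hwa]; field_simp; ring
    rw [heq]
  rw [hev, meas_max X h_indep F hF_cdf hn1 B]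
  rcases lt_or_ge 0 (F B) with hFB | hFB
  · -- positive case
    rw [← ENNReal.ofReal_pow (hF_nonneg B) n,
      ENNReal.log_ofReal_of_pos (pow_pos hFB n), Real.log_pow, ← EReal.coe_mul]
    rw [EReal.coe_lt_coe_iff]
    -- hazard bound
    have hkey := hazard_aux F f w w' x₀ x₁ x₂ hF_lt_one hf_pos hF_deriv hw
      hw_deriv hx₂0 hx₂1 hw'half hBge hBle
    have hFmn : 1 - F (m n) = 1 / (n : ℝ) := by rw [hFm]; ring
    have hratio : (m n - B) / (2 * w (m n)) = (-x) / (2 * a n) := by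
      rw [hB_def]; field_simp; ring
    rw [hFmn, hratio] at hkey
    have hsq_nonneg : (0 : ℝ) ≤ (-x) / (2 * a n) :=
      div_nonneg (neg_nonneg.2 hxneg.le) (by positivity)
    have h1 : 1 / (n : ℝ) * ((-x) / (2 * a n)) ^ 2 ≤ 1 - F B := by
      have hsq : ((-x) / (2 * a n)) ^ 2 ≤ (1 + (-x) / (2 * a n)) ^ 2 := by
        nlinarith [hsq_nonneg]
      have := mul_le_mul_of_nonneg_left hsq
        (by positivity : (0:ℝ) ≤ 1 / (n : ℝ))
      linarith
    have hlogFB : Real.log (F B) ≤ F B - 1 := Real.log_le_sub_one_of_pos hFB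
    have s1 : (n : ℝ) * Real.log (F B) ≤ (n : ℝ) * (F B - 1) :=
      mul_le_mul_of_nonneg_left hlogFB hnpos.le
    have s2 : (n : ℝ) * (F B - 1) ≤ -((n : ℝ) * (1 / (n : ℝ) * ((-x) / (2 * a n)) ^ 2)) := by
      have := mul_le_mul_of_nonneg_left h1 hnpos.le
      linarith
    have hcalc : a n * ((n : ℝ) * (1 / (n : ℝ) * ((-x) / (2 * a n)) ^ 2))
        = x ^ 2 / 4 * (a n)⁻¹ := by
      field_simp
      ring
    have s3 : a n * ((n : ℝ) * Real.log (F B)) ≤ -(x ^ 2 / 4 * (a n)⁻¹) := by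
      have h4 : a n * ((n : ℝ) * Real.log (F B))
          ≤ a n * (-((n : ℝ) * (1 / (n : ℝ) * ((-x) / (2 * a n)) ^ 2))) :=
        mul_le_mul_of_nonneg_left (s1.trans s2) hapos.le
      calc a n * ((n : ℝ) * Real.log (F B))
          ≤ a n * (-((n : ℝ) * (1 / (n : ℝ) * ((-x) / (2 * a n)) ^ 2))) := h4
        _ = -(a n * ((n : ℝ) * (1 / (n : ℝ) * ((-x) / (2 * a n)) ^ 2))) := by ring
        _ = -(x ^ 2 / 4 * (a n)⁻¹) := by rw [hcalc]
    linarith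
  · -- F B = 0 case : probability is zero, log is ⊥
    have h0 : ENNReal.ofReal (F B) = 0 := ENNReal.ofReal_eq_zero.2 hFB
    rw [h0, zero_pow (by omega : n ≠ 0), ENNReal.log_zero,
      EReal.coe_mul_bot_of_pos hapos]
    exact EReal.bot_lt_coe K
end
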